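/- arXiv:2402.14761 — 7 statements merged into one kernel-verified Lean document; each statement's English description precedes it below -/
import Mathlib

section
/- Let b ≥ 2 and let α, β be digits in base b. For l ≥ 0 let N(l) be the number of strings of length l over {0,…,b-1} containing exactly one occurrence of the contiguous pattern αβ, and let Wβ(l) be the number of strings of length l avoiding αβ and having leading digit β (with Wβ(0)=0). Then for every l ≥ 0, N(l) = Σ_{j=0}^{l} Wβ(j)·Wβ(l−j). -/
/-- Number of strings of length `l` over `Fin b` with exactly one contiguous occurrence
of the pattern `αβ` (strings written leading digit first). -/
noncomputable def exactlyOneCount (b : ℕ) (α β : Fin b) (l : ℕ) : ℕ :=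
  Nat.card {s : List (Fin b) // s.length = l ∧ (s.zip s.tail).count (α, β) = 1}

/-- Number of strings of length `l` over `Fin b` avoiding `αβ` and with leading digit `β`. -/
noncomputable def Wbeta (b : ℕ) (α β : Fin b) (l : ℕ) : ℕ :=
  Nat.card {s : List (Fin b) // s.length = l ∧ ¬ [α, β] <:+: s ∧ s.head? = some β}


namespace StmtAux

variable {b : ℕ} (α β : Fin b)

def occ : List (Fin b) → ℕ
  | [] => 0
  | [_] => 0
  | x :: y :: t => (if x = α ∧ y = β then 1 else 0) + occ (y :: t)

lemma occ_nil : occ α β [] = 0 := rfl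
lemma occ_single (x : Fin b) : occ α β [x] = 0 := rfl
lemma occ_cons_cons (x y : Fin b) (t : List (Fin b)) :
    occ α β (x :: y :: t) = (if x = α ∧ y = β then 1 else 0) + occ α β (y :: t) := rfl

lemma occ_eq_count : ∀ s : List (Fin b), occ α β s = (s.zip s.tail).count (α, β)
  | [] => rfl
  | [_] => rfl
  | x :: y :: t => by
    rw [occ_cons_cons]
    have h0 : ((x :: y :: t).zip (x :: y :: t).tail) = (x, y) :: ((y :: t).zip (y :: t).tail) := rfl
    rw [h0, List.count_cons, occ_eq_count (y :: t)]
    by_cases hxy : x = α ∧ y = β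
    · rw [if_pos hxy, if_pos (by simp [hxy.1, hxy.2])]
      omega
    · rw [if_neg hxy, if_neg (by simpa [Prod.ext_iff] using hxy)]
      omega

lemma occ_append : ∀ (p q : List (Fin b)),
    occ α β (p ++ q) = occ α β p + occ α β q +
      (if p.getLast? = some α ∧ q.head? = some β then 1 else 0)
  | [], q => by rw [List.nil_append, occ_nil]; simp
  | [x], q => by
    cases q with
    | nil => simp [occ_single, occ_nil]
    | cons y t =>
      rw [List.singleton_append, occ_cons_cons]
      simp only [occ_single, List.getLast?_singleton, List.head?_cons, Option.some.injEq]
      omega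
  | x :: y :: t, q => by
    have h := occ_append (y :: t) q
    rw [List.cons_append, List.cons_append, occ_cons_cons, ← List.cons_append,
      h, occ_cons_cons]
    have h1 : (x :: y :: t).getLast? = (y :: t).getLast? := by
      rw [List.getLast?_cons_cons]
    rw [h1]
    omega

lemma infix_iff : ∀ s : List (Fin b), [α, β] <:+: s ↔ occ α β s ≠ 0
  | [] => by
    rw [occ_nil]
    simp only [ne_eq, not_true_eq_false, iff_false]
    intro h; simpa using h.length_le
  | [x] => by
    rw [occ_single]
    simp only [ne_eq, not_true_eq_false, iff_false]
    intro h; simpa using h.length_le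
  | x :: y :: t => by
    rw [List.infix_cons_iff, occ_cons_cons]
    constructor
    · rintro (h | h)
      · obtain ⟨r, hr⟩ := h
        simp only [List.cons_append, List.cons.injEq] at hr
        rw [if_pos ⟨hr.1.symm, hr.2.1.symm⟩]
        omega
      · rw [infix_iff (y :: t)] at h
        by_cases hxy : x = α ∧ y = β
        · rw [if_pos hxy]; omega
        · rw [if_neg hxy]; omega
    · intro h
      by_cases hxy : x = α ∧ y = β
      · exact Or.inl ⟨t, by simp [hxy.1, hxy.2]⟩
      · right
        rw [infix_iff (y :: t)]
        rw [if_neg hxy] at h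
        omega

lemma exists_split : ∀ s : List (Fin b), occ α β s = 1 →
    ∃ p q : List (Fin b), s = p ++ q ∧ occ α β p = 0 ∧ occ α β q = 0 ∧
      p.getLast? = some α ∧ q.head? = some β
  | [] => by simp [occ_nil]
  | [x] => by simp [occ_single]
  | x :: y :: t => by
    intro h
    rw [occ_cons_cons] at h
    by_cases hxy : x = α ∧ y = β
    · rw [if_pos hxy] at h
      refine ⟨[x], y :: t, by simp, occ_single α β x, by omega, by simp [hxy.1], by simp [hxy.2]⟩
    · rw [if_neg hxy] at h
      obtain ⟨p, q, hpq, hp, hq, hl, hh⟩ := exists_split (y :: t) (by omega)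
      have hpne : p ≠ [] := by rintro rfl; simp at hl
      obtain ⟨z, p', rfl⟩ : ∃ z p', p = z :: p' := by
        cases p with | nil => exact absurd rfl hpne | cons z p' => exact ⟨z, p', rfl⟩
      have hz : z = y := by
        simp only [List.cons_append, List.cons.injEq] at hpq
        exact hpq.1.symm
      refine ⟨x :: z :: p', q, by simpa using congrArg (List.cons x) hpq, ?_, hq,
        by rw [List.getLast?_cons_cons]; exact hl, hh⟩
      rw [occ_cons_cons, if_neg (fun hc => hxy ⟨hc.1, hz ▸ hc.2⟩), hp]

noncomputable instance instF (l : ℕ) (P : List (Fin b) → Prop) :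
    Finite {s : List (Fin b) // s.length = l ∧ P s} := by
  have : {s : List (Fin b) | s.length = l ∧ P s}.Finite :=
    Set.Finite.subset (List.finite_length_eq (Fin b) l) (fun s hs => hs.1)
  exact this.to_subtype

lemma card_end_eq (m : ℕ) :
    Nat.card {s : List (Fin b) // s.length = m ∧ ¬ [α, β] <:+: s ∧ s.getLast? = some α} =
    Nat.card {s : List (Fin b) // s.length = m ∧ ¬ [α, β] <:+: s ∧ s.head? = some β} := by
  set σ := Equiv.swap α β with hσ
  have hcomp : (⇑σ ∘ ⇑σ) = id := by funext x; simp [hσ]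
  have hinv : ∀ s : List (Fin b), ((s.map σ).reverse.map σ).reverse = s := by
    intro s
    simp [List.map_reverse, List.map_map, hcomp]
  have hinf : ∀ s : List (Fin b), [α, β] <:+: (s.map σ).reverse ↔ [α, β] <:+: s := by
    intro s
    rw [show ([α, β] : List (Fin b)) = ([β, α] : List (Fin b)).reverse from rfl,
      List.reverse_infix]
    constructor
    · intro h
      have h2 := h.map σ
      rw [List.map_map, hcomp, List.map_id] at h2
      simpa [hσ, Equiv.swap_apply_left, Equiv.swap_apply_right] using h2
    · intro h
      have h2 := h.map σ
      simpa [hσ, Equiv.swap_apply_left, Equiv.swap_apply_right] using h2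
  have key : ∀ s : List (Fin b),
      (s.length = m ∧ ¬ [α, β] <:+: s ∧ s.getLast? = some α) ↔
      (((s.map σ).reverse).length = m ∧ ¬ [α, β] <:+: (s.map σ).reverse ∧
        ((s.map σ).reverse).head? = some β) := by
    intro s
    have hhead : ((s.map σ).reverse).head? = s.getLast?.map σ := by
      rw [List.head?_reverse, List.getLast?_map]
    constructor
    · rintro ⟨h1, h2, h3⟩
      refine ⟨by simp [h1], (hinf s).not.mpr h2, ?_⟩
      rw [hhead, h3, Option.map_some]
      simp [hσ, Equiv.swap_apply_left]
    · rintro ⟨h1, h2, h3⟩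
      refine ⟨by simpa using h1, fun hc => h2 ((hinf s).mpr hc), ?_⟩
      rw [hhead] at h3
      cases hgl : s.getLast? with
      | none => rw [hgl] at h3; simp at h3
      | some c =>
        rw [hgl, Option.map_some, Option.some.injEq] at h3
        have hc : c = α := by
          have := congrArg σ h3
          simpa [hσ, Equiv.swap_apply_self, Equiv.swap_apply_right] using this
        rw [hc]
  refine Nat.card_congr ⟨fun s => ⟨(s.1.map σ).reverse, (key s.1).mp s.2⟩,
    fun s => ⟨(s.1.map σ).reverse, ?_⟩, fun s => ?_, fun s => ?_⟩
  · rw [key ((s.1.map σ).reverse), hinv]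
    exact s.2
  · ext1; exact hinv s.1
  · ext1; exact hinv s.1

end StmtAux

namespace StmtAux

lemma split_unique {b : ℕ} {α β : Fin b} {p q p' q' : List (Fin b)}
    (heq : p ++ q = p' ++ q')
    (hp : occ α β p = 0) (hh : q.head? = some β) (hl : p.getLast? = some α)
    (hp' : occ α β p' = 0) (hh' : q'.head? = some β) (hl' : p'.getLast? = some α) :
    p = p' ∧ q = q' := by
  have key : ∀ (p q p' q' : List (Fin b)), p ++ q = p' ++ q' →
      occ α β p = 0 → q.head? = some β → p.getLast? = some α →
      occ α β p' = 0 → p'.getLast? = some α →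
      p.length ≤ p'.length → p = p' ∧ q = q' := by
    intro p q p' q' heq hp hh hl hp' hl' hle
    rcases List.append_eq_append_iff.mp heq with ⟨m, hm1, hm2⟩ | ⟨m, hm1, hm2⟩
    · -- p' = p ++ m, q = m ++ q'
      cases m with
      | nil => simp at hm1 hm2; exact ⟨hm1.symm, hm2⟩
      | cons c m' =>
        exfalso
        have hc : c = β := by
          rw [hm2] at hh
          simpa using hh
        have := occ_append α β p (c :: m')
        rw [← hm1, hp', hp, if_pos ⟨hl, by simp [hc]⟩] at this
        omega
    · -- p = p' ++ m, q' = m ++ q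
      have hm : m = [] := by
        have h1 : p.length = p'.length + m.length := by rw [hm1]; simp
        cases m with
        | nil => rfl
        | cons c m' => exfalso; rw [h1] at hle; simp at hle
      subst hm
      simp only [List.append_nil] at hm1
      subst hm1
      exact ⟨rfl, List.append_cancel_left heq⟩
  rcases le_total p.length p'.length with hle | hle
  · exact key p q p' q' heq hp hh hl hp' hl' hle
  · obtain ⟨h1, h2⟩ := key p' q' p q heq.symm hp' hh' hl' hp hl hle
    exact ⟨h1.symm, h2.symm⟩

lemma main (b : ℕ) (α β : Fin b) (l : ℕ) :
    Nat.card {s : List (Fin b) // s.length = l ∧ occ α β s = 1} =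
    ∑ j ∈ Finset.range (l + 1),
      Nat.card {p : List (Fin b) // p.length = l - j ∧ ¬ [α, β] <:+: p ∧ p.getLast? = some α} *
      Nat.card {q : List (Fin b) // q.length = j ∧ ¬ [α, β] <:+: q ∧ q.head? = some β} := by
  classical
  set A : ℕ → Type := fun n =>
    {p : List (Fin b) // p.length = n ∧ ¬ [α, β] <:+: p ∧ p.getLast? = some α} with hA
  set B : ℕ → Type := fun n =>
    {q : List (Fin b) // q.length = n ∧ ¬ [α, β] <:+: q ∧ q.head? = some β} with hB
  have hocc0 : ∀ s : List (Fin b), ¬ [α, β] <:+: s ↔ occ α β s = 0 := by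
    intro s; rw [infix_iff]; omega
  set F : (Σ j : Fin (l + 1), A (l - j.1) × B j.1) →
      {s : List (Fin b) // s.length = l ∧ occ α β s = 1} := fun x =>
    ⟨x.2.1.1 ++ x.2.2.1, by
      obtain ⟨j, p, q⟩ := x
      obtain ⟨hp1, hp2, hp3⟩ := p.2
      obtain ⟨hq1, hq2, hq3⟩ := q.2
      constructor
      · rw [List.length_append, hp1, hq1]
        omega
      · rw [occ_append, (hocc0 _).mp hp2, (hocc0 _).mp hq2, if_pos ⟨hp3, hq3⟩]⟩ with hF
  have hbij : Function.Bijective F := by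
    constructor
    · rintro ⟨j, p, q⟩ ⟨j', p', q'⟩ h
      have heq : p.1 ++ q.1 = p'.1 ++ q'.1 := congrArg Subtype.val h
      obtain ⟨h1, h2⟩ := split_unique heq ((hocc0 _).mp p.2.2.1) q.2.2.2 p.2.2.2
        ((hocc0 _).mp p'.2.2.1) q'.2.2.2 p'.2.2.2
      have hj : j = j' := Fin.ext (by rw [← q.2.1, ← q'.2.1, h2])
      subst hj
      exact Sigma.ext rfl (heq_of_eq (Prod.ext (Subtype.ext h1) (Subtype.ext h2)))
    · rintro ⟨s, hsl, hs1⟩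
      obtain ⟨p, q, rfl, hp, hq, hl', hh'⟩ := exists_split α β s hs1
      have hql : q.length ≤ l := by rw [← hsl]; simp
      have hpl : p.length = l - q.length := by
        rw [List.length_append] at hsl; omega
      exact ⟨⟨⟨q.length, by omega⟩, ⟨p, hpl, (hocc0 _).mpr hp, hl'⟩,
        ⟨q, rfl, (hocc0 _).mpr hq, hh'⟩⟩, rfl⟩
  rw [← Nat.card_eq_of_bijective F hbij]
  letI : ∀ n, Fintype (A n) := fun n => Fintype.ofFinite _
  letI : ∀ n, Fintype (B n) := fun n => Fintype.ofFinite _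
  rw [Nat.card_eq_fintype_card, Fintype.card_sigma]
  rw [← Fin.sum_univ_eq_sum_range (fun j => Nat.card (A (l - j)) * Nat.card (B j)) (l + 1)]
  refine Finset.sum_congr rfl fun j _ => ?_
  rw [Fintype.card_prod, Nat.card_eq_fintype_card, Nat.card_eq_fintype_card]

end StmtAux


theorem stmt_2 (b : ℕ) (hb : 2 ≤ b) (α β : Fin b) :
    ∀ l : ℕ, exactlyOneCount b α β l =
      ∑ j ∈ Finset.range (l + 1), Wbeta b α β j * Wbeta b α β (l - j) := by
  intro l
  have h1 : exactlyOneCount b α β l =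
      Nat.card {s : List (Fin b) // s.length = l ∧ StmtAux.occ α β s = 1} :=
    Nat.card_congr (Equiv.subtypeEquivRight fun s => by rw [StmtAux.occ_eq_count α β s])
  rw [h1, StmtAux.main]
  refine Finset.sum_congr rfl fun j hj => ?_
  rw [StmtAux.card_end_eq]
  show Wbeta b α β (l - j) * Wbeta b α β j = _
  exact Nat.mul_comm _ _
end

section
/- Let b ≥ 2 and α ≠ β digits in base b. Define the measure μ on [0,1) assigning weight b^{-l} to each b-imal number n(X)/b^l coming from a string X of length l avoiding αβ (with multiplicity over strings). Then the total mass of μ is b², i.e. Σ_{l ≥ 0} A(l)·b^{-l} = b² where A(l) is the number of length-l strings avoiding αβ. -/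
open Finset

/-- Number of strings of length `l` over `Fin b` avoiding the contiguous pattern `αβ`. -/
noncomputable def avoidCount (b : ℕ) (α β : Fin b) (l : ℕ) : ℕ :=
  Nat.card {s : List (Fin b) // s.length = l ∧ ¬ [α, β] <:+: s}

/-- All lists of given length over `Fin b`. -/
def allLists (b : ℕ) : ℕ → Finset (List (Fin b))
  | 0 => {[]}
  | n + 1 => Finset.univ.biUnion fun c : Fin b => (allLists b n).image (c :: ·)

lemma mem_allLists {b : ℕ} (s : List (Fin b)) : ∀ n, s ∈ allLists b n ↔ s.length = n := by
  induction s with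
  | nil => intro n; cases n <;> simp [allLists]
  | cons c t ih =>
    intro n
    cases n with
    | zero => simp [allLists]
    | succ n => simp [allLists, ih]

def AC (b : ℕ) (α β : Fin b) (n : ℕ) : Finset (List (Fin b)) :=
  (allLists b n).filter (fun s => ¬ [α, β] <:+: s)

lemma mem_AC {b : ℕ} {α β : Fin b} {s : List (Fin b)} {n : ℕ} :
    s ∈ AC b α β n ↔ s.length = n ∧ ¬ [α, β] <:+: s := by
  simp [AC, mem_allLists]

lemma avoidCount_eq (b : ℕ) (α β : Fin b) (n : ℕ) :
    avoidCount b α β n = (AC b α β n).card := by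
  rw [avoidCount, Nat.card_congr (Equiv.subtypeEquivRight (fun s => (mem_AC (n := n)).symm)),
    Nat.card_eq_finsetCard]

section
variable {b : ℕ} {α β : Fin b}

lemma avoid_cons {c : Fin b} {t : List (Fin b)} :
    ¬ [α, β] <:+: (c :: t) ↔ (¬ [α, β] <:+: t) ∧ ¬(c = α ∧ [β] <+: t) := by
  rw [List.infix_cons_iff, List.cons_prefix_cons]
  constructor
  · intro h; exact ⟨fun h' => h (Or.inr h'), fun ⟨h1, h2⟩ => h (Or.inl ⟨h1.symm, h2⟩)⟩
  · rintro ⟨h1, h2⟩ (⟨ha, hp⟩ | h) 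
    · exact h2 ⟨ha.symm, hp⟩
    · exact h1 h

lemma AC_zero : (AC b α β 0).card = 1 := by
  have : AC b α β 0 = {[]} := by
    ext s
    rw [mem_AC, Finset.mem_singleton]
    constructor
    · rintro ⟨h1, _⟩; exact List.length_eq_zero_iff.mp h1
    · rintro rfl; exact ⟨rfl, fun h => by simpa using h.length_le⟩
  simp [this]

lemma card_allLists (n : ℕ) : (allLists b n).card = b ^ n := by
  induction n with
  | zero => simp [allLists]
  | succ n ih =>
    rw [allLists, Finset.card_biUnion, pow_succ]
    · simp only [Finset.card_image_of_injective _ (List.cons_injective), ih, Finset.sum_const,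
        Finset.card_univ, Fintype.card_fin, smul_eq_mul]
      ring
    · intro x _ y _ hxy
      simp only [Finset.disjoint_left, Finset.mem_image]
      rintro s ⟨u, _, rfl⟩ ⟨v, _, hv⟩
      exact hxy ((List.cons_eq_cons.mp hv).1.symm)

lemma AC_one : (AC b α β 1).card = b := by
  have : AC b α β 1 = allLists b 1 := by
    ext s
    simp only [mem_AC, mem_allLists]
    refine ⟨fun h => h.1, fun h => ⟨h, fun hinf => ?_⟩⟩
    simpa [h] using hinf.length_le
  rw [this, card_allLists, pow_one]

lemma AC_rec (hαβ : α ≠ β) (n : ℕ) :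
    (AC b α β (n+2)).card + (AC b α β n).card = b * (AC b α β (n+1)).card := by
  have hb1 : 1 ≤ b := β.pos
  -- fiberwise count over tails
  have htail : ∀ s ∈ AC b α β (n+2), s.tail ∈ AC b α β (n+1) := by
    intro s hs
    rw [mem_AC] at hs ⊢
    refine ⟨by simp [hs.1], fun h => hs.2 (h.trans (List.tail_suffix s).isInfix)⟩
  have hcard : (AC b α β (n+2)).card
      = ∑ t ∈ AC b α β (n+1), ((AC b α β (n+2)).filter (fun s => s.tail = t)).card :=
    Finset.card_eq_sum_card_fiberwise htail
  have hfiber : ∀ t ∈ AC b α β (n+1),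
      ((AC b α β (n+2)).filter (fun s => s.tail = t)).card
        = if [β] <+: t then b - 1 else b := by
    intro t ht
    rw [mem_AC] at ht
    have himg : (AC b α β (n+2)).filter (fun s => s.tail = t)
        = (Finset.univ.filter (fun c : Fin b => ¬ [α, β] <:+: (c :: t))).image (· :: t) := by
      ext s
      simp only [Finset.mem_filter, Finset.mem_image, Finset.mem_univ, true_and, mem_AC]
      constructor
      · rintro ⟨⟨hlen, hav⟩, htl⟩
        cases s with
        | nil => simp at hlen
        | cons c u =>
          simp only [List.tail_cons] at htl
          subst htl
          exact ⟨c, hav, rfl⟩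
      · rintro ⟨c, hc, rfl⟩
        exact ⟨⟨by simp [ht.1], hc⟩, rfl⟩
    rw [himg, Finset.card_image_of_injective _ (fun x y h => by simpa using h)]
    by_cases hp : [β] <+: t
    · rw [if_pos hp]
      have : (Finset.univ.filter (fun c : Fin b => ¬ [α, β] <:+: (c :: t)))
          = Finset.univ.erase α := by
        ext c
        simp [avoid_cons, ht.2, hp, Finset.mem_erase]
      rw [this, Finset.card_erase_of_mem (Finset.mem_univ _), Finset.card_univ, Fintype.card_fin]
    · rw [if_neg hp]
      have : (Finset.univ.filter (fun c : Fin b => ¬ [α, β] <:+: (c :: t)))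
          = Finset.univ := by
        ext c; simp [avoid_cons, ht.2, hp]
      rw [this, Finset.card_univ, Fintype.card_fin]
  -- count of strings starting with β
  have hstart : ((AC b α β (n+1)).filter (fun t => [β] <+: t)).card = (AC b α β n).card := by
    rw [show (AC b α β (n+1)).filter (fun t => [β] <+: t) = (AC b α β n).image (β :: ·) from ?_,
      Finset.card_image_of_injective _ (fun x y h => by simpa using h)]
    ext t
    simp only [Finset.mem_filter, Finset.mem_image, mem_AC]
    constructor
    · rintro ⟨⟨hlen, hav⟩, hp⟩
      obtain ⟨u, rfl⟩ := hp
      exact ⟨u, ⟨by simpa using hlen, fun h => hav (h.trans (List.suffix_cons β u).isInfix)⟩, rfl⟩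
    · rintro ⟨u, ⟨hlen, hav⟩, rfl⟩
      refine ⟨⟨by simp [hlen], ?_⟩, ⟨u, rfl⟩⟩
      rw [avoid_cons]
      exact ⟨hav, fun h => hαβ h.1.symm⟩
  rw [hcard, Finset.sum_congr rfl hfiber, Finset.sum_ite, Finset.sum_const, Finset.sum_const,
    smul_eq_mul, smul_eq_mul]
  rw [← hstart]
  have hsplit := Finset.card_filter_add_card_filter_not
    (s := AC b α β (n+1)) (p := fun t => [β] <+: t)
  set k := ((AC b α β (n+1)).filter (fun t => [β] <+: t)).card
  set m := ((AC b α β (n+1)).filter (fun t => ¬ [β] <+: t)).card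
  rw [← hsplit]
  cases b with
  | zero => exact absurd hb1 (by omega)
  | succ b' =>
    simp only [Nat.succ_sub_one, smul_eq_mul]
    ring

end

theorem stmt_4 (b : ℕ) (hb : 2 ≤ b) (α β : Fin b) (hαβ : α ≠ β) :
    HasSum (fun l : ℕ => (avoidCount b α β l : ℝ) / (b : ℝ) ^ l) ((b : ℝ) ^ 2) := by
  have hbR : (2 : ℝ) ≤ (b : ℝ) := by exact_mod_cast hb
  have hb0 : (0 : ℝ) < b := by linarith
  have hbne : (b : ℝ) ≠ 0 := ne_of_gt hb0
  set a : ℕ → ℝ := fun n => (avoidCount b α β n : ℝ) with ha_def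
  have hanonneg : ∀ n, 0 ≤ a n := fun n => Nat.cast_nonneg _
  have ha0 : a 0 = 1 := by
    simp [ha_def, avoidCount_eq, AC_zero]
  have ha1 : a 1 = b := by
    simp [ha_def, avoidCount_eq, AC_one]
  have harec : ∀ n, a (n + 2) = b * a (n + 1) - a n := by
    intro n
    have := AC_rec hαβ (α := α) (β := β) n
    have hcast : a (n+2) + a n = b * a (n+1) := by
      simp only [ha_def, avoidCount_eq]
      exact_mod_cast congrArg (Nat.cast : ℕ → ℝ) this
    linarith
  have hstep : ∀ n, a (n + 1) ≤ b * a n := by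
    intro n
    induction n with
    | zero => rw [ha0, ha1]; ring_nf; exact le_refl _
    | succ n ih =>
      rw [harec]
      have := hanonneg n
      linarith
  set r : ℝ := (b : ℝ) - 1 / b with hr_def
  have hr0 : 0 ≤ r := by
    rw [hr_def]
    have : 1 / (b:ℝ) ≤ 1 := by
      rw [div_le_one hb0]; linarith
    linarith
  have hdecay : ∀ n, a (n + 1) ≤ b * r ^ n := by
    intro n
    induction n with
    | zero => simp [ha1]
    | succ n ih =>
      have h1 : a n ≥ a (n+1) / b := by
        rw [ge_iff_le, div_le_iff₀ hb0, mul_comm]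
        exact hstep n
      have h2 : a (n + 2) ≤ r * a (n + 1) := by
        rw [harec, hr_def]
        have heq : ((b:ℝ) - 1/b) * a (n+1) = b * a (n+1) - a (n+1)/b := by
          field_simp
        rw [heq]
        have h3 : a (n+1) / b ≤ a n := h1
        linarith
      calc a (n + 2) ≤ r * a (n + 1) := h2
        _ ≤ r * (b * r ^ n) := by
            exact mul_le_mul_of_nonneg_left ih hr0
        _ = b * r ^ (n + 1) := by ring
  set g : ℕ → ℝ := fun n => a n / b ^ n with hg_def
  have hgnonneg : ∀ n, 0 ≤ g n := fun n => div_nonneg (hanonneg n) (by positivity)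
  have hgtend : Filter.Tendsto g Filter.atTop (nhds 0) := by
    rw [← Filter.tendsto_add_atTop_iff_nat 1]
    apply squeeze_zero (fun n => hgnonneg (n+1)) (g := fun n => (r / b) ^ n)
    · intro n
      have : g (n + 1) ≤ b * r ^ n / b ^ (n + 1) :=
        div_le_div_of_nonneg_right (hdecay n) (by positivity) |>.trans_eq rfl
      refine this.trans (le_of_eq ?_)
      rw [pow_succ]
      field_simp
      ring_nf
      rw [mul_assoc, ← mul_pow, mul_inv_cancel₀ hbne, one_pow, mul_one]
    · apply tendsto_pow_atTop_nhds_zero_of_lt_one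
      · positivity
      · rw [div_lt_one hb0, hr_def]
        have : 0 < 1 / (b:ℝ) := by positivity
        linarith
  have hS : ∀ n, ∑ l ∈ Finset.range (n + 2), g l
      = (b:ℝ)^2 * (1 - g (n + 2)) + g (n + 1) := by
    intro n
    induction n with
    | zero =>
      have ha2 : a 2 = b * b - 1 := by rw [harec 0, ha1, ha0]
      simp only [Finset.sum_range_succ, Finset.sum_range_zero, hg_def]
      rw [ha0, ha1, ha2]
      field_simp
      ring
    | succ n ih =>
      rw [Finset.sum_range_succ, ih]
      have hkey : (b:ℝ)^2 * g (n + 3) = (b:ℝ)^2 * g (n + 2) - g (n + 1) := by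
        simp only [hg_def]
        rw [show n + 3 = (n + 1) + 2 by ring, harec (n + 1)]
        field_simp
        ring
      have : g (n + 1 + 2) = g (n + 3) := by norm_num
      rw [this]
      linarith [hkey]
  rw [hasSum_iff_tendsto_nat_of_nonneg hgnonneg]
  rw [← Filter.tendsto_add_atTop_iff_nat 2]
  apply Filter.Tendsto.congr (fun n => (hS n).symm)
  have h1 : Filter.Tendsto (fun n => g (n + 2)) Filter.atTop (nhds 0) :=
    hgtend.comp (Filter.tendsto_add_atTop_nat 2)
  have h2 : Filter.Tendsto (fun n => g (n + 1)) Filter.atTop (nhds 0) :=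
    hgtend.comp (Filter.tendsto_add_atTop_nat 1)
  have := ((tendsto_const_nhds (x := (1:ℝ))).sub h1).const_mul ((b:ℝ)^2) |>.add h2
  simpa using this
end

section
/- Let b ≥ 2 and let α, β be digits in base b (equal or not). Let N(l) be the number of strings of length l over {0,…,b-1} containing exactly one contiguous occurrence of αβ. Then Σ_{l ≥ 0} N(l)·b^{-l} converges and equals b². -/
namespace Stmt6

variable {b : ℕ}

def occ (α β : Fin b) (s : List (Fin b)) : ℕ := (s.zip s.tail).count (α, β)

lemma finite_mono {γ : Type*} (p : γ → Prop) {q : γ → Prop} (hf : Finite {x // p x})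
    (h : ∀ x, q x → p x) : Finite {x // q x} :=
  Finite.of_injective (fun s => (⟨s.1, h s.1 s.2⟩ : {x // p x}))
    (fun _ _ hxy => Subtype.ext (Subtype.mk_eq_mk.mp hxy))

lemma finite_len (l : ℕ) : Finite {s : List (Fin b) // s.length = l} := by
  exact (List.finite_length_eq (Fin b) l).to_subtype

lemma finite_pred (P : List (Fin b) → Prop) (l : ℕ) (h : ∀ s, P s → s.length = l) :
    Finite {s : List (Fin b) // P s} :=
  finite_mono (fun s => s.length = l) (finite_len l) h

lemma card_congr_iff {γ : Type*} {p q : γ → Prop} (h : ∀ x, p x ↔ q x) :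
    Nat.card {x // p x} = Nat.card {x // q x} :=
  Nat.card_congr (Equiv.subtypeEquivRight h)

lemma card_false {γ : Type*} {p : γ → Prop} (h : ∀ x, ¬ p x) : Nat.card {x // p x} = 0 := by
  haveI : IsEmpty {x // p x} := ⟨fun x => h x.1 x.2⟩
  exact Nat.card_of_isEmpty

lemma card_split {γ : Type*} (p q : γ → Prop) [hf : Finite {x // p x}] :
    Nat.card {x // p x} = Nat.card {x // p x ∧ q x} + Nat.card {x // p x ∧ ¬ q x} := by
  classical
  haveI := finite_mono p hf (fun x (h : p x ∧ q x) => h.1)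
  haveI := finite_mono p hf (fun x (h : p x ∧ ¬ q x) => h.1)
  have e : {x // p x} ≃ {x // p x ∧ q x} ⊕ {x // p x ∧ ¬ q x} := by
    refine (Equiv.sumCompl (fun x : {x // p x} => q x.1)).symm.trans (Equiv.sumCongr ?_ ?_)
    · exact Equiv.subtypeSubtypeEquivSubtypeInter p q
    · exact Equiv.subtypeSubtypeEquivSubtypeInter p (fun x => ¬ q x)
  rw [Nat.card_congr e, Nat.card_sum]

lemma card_or {γ : Type*} (p q r : γ → Prop) [Finite {x // p x ∨ q x}]
    (hp : ∀ x, p x → r x) (hq : ∀ x, q x → ¬ r x) :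
    Nat.card {x // p x ∨ q x} = Nat.card {x // p x} + Nat.card {x // q x} := by
  rw [card_split (fun x => p x ∨ q x) r]
  congr 1
  · refine card_congr_iff fun x => ⟨fun h => ?_, fun h => ⟨Or.inl h, hp x h⟩⟩
    rcases h.1 with hx | hx
    · exact hx
    · exact absurd h.2 (hq x hx)
  · refine card_congr_iff fun x => ⟨fun h => ?_, fun h => ⟨Or.inr h, hq x h⟩⟩
    rcases h.1 with hx | hx
    · exact absurd (hp x hx) h.2
    · exact hx

def consEquiv (l : ℕ) (P : List (Fin b) → Prop) :
    {s : List (Fin b) // s.length = l + 1 ∧ P s}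
      ≃ Σ c : Fin b, {t : List (Fin b) // t.length = l ∧ P (c :: t)} where
  toFun s :=
    match s with
    | ⟨[], h⟩ => absurd h.1 (by simp)
    | ⟨c :: t, h⟩ => ⟨c, t, by simpa using h⟩
  invFun x := ⟨x.1 :: x.2.1, by simp [x.2.2.1], x.2.2.2⟩
  left_inv s := by
    match s with
    | ⟨[], h⟩ => exact absurd h.1 (by simp)
    | ⟨c :: t, h⟩ => rfl
  right_inv x := by rcases x with ⟨c, t, h⟩; rfl

lemma nat_card_sigma {ι : Type*} [Fintype ι] (f : ι → Type*) [∀ i, Finite (f i)] :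
    Nat.card (Σ i, f i) = ∑ i, Nat.card (f i) := by
  haveI := fun i => Fintype.ofFinite (f i)
  simp [Nat.card_eq_fintype_card, Fintype.card_sigma]

lemma card_cons (l : ℕ) (P : List (Fin b) → Prop) :
    Nat.card {s : List (Fin b) // s.length = l + 1 ∧ P s}
      = ∑ c : Fin b, Nat.card {t : List (Fin b) // t.length = l ∧ P (c :: t)} := by
  haveI : ∀ c : Fin b, Finite {t : List (Fin b) // t.length = l ∧ P (c :: t)} :=
    fun _ => finite_pred _ l (fun _ hs => hs.1)
  rw [Nat.card_congr (consEquiv l P), nat_card_sigma]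

lemma card_len (l : ℕ) : Nat.card {s : List (Fin b) // s.length = l} = b ^ l := by
  have : Nat.card (List.Vector (Fin b) l) = b ^ l := by
    rw [Nat.card_eq_fintype_card, card_vector, Fintype.card_fin]
  exact this

lemma occ_cons (α β c : Fin b) (t : List (Fin b)) :
    occ α β (c :: t) = occ α β t + if c = α ∧ t.head? = some β then 1 else 0 := by
  show (((c :: t).zip t).count (α, β)) = _
  cases t with
  | nil => simp [occ]
  | cons d t' =>
    rw [List.zip_cons_cons, List.count_cons]
    show _ = ((d :: t').zip t').count (α, β) + _
    simp only [List.head?_cons, Option.some.injEq]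
    congr 1
    by_cases h1 : c = α <;> by_cases h2 : d = β <;> simp [h1, h2, beq_iff_eq, Prod.ext_iff]

/-- count: occ = k and first digit is β -/
noncomputable def nA (α β : Fin b) (k l : ℕ) : ℕ :=
  Nat.card {s : List (Fin b) // s.length = l ∧ occ α β s = k ∧ s.head? = some β}

/-- count: occ = k and first digit is not β -/
noncomputable def nB (α β : Fin b) (k l : ℕ) : ℕ :=
  Nat.card {s : List (Fin b) // s.length = l ∧ occ α β s = k ∧ ¬ s.head? = some β}

variable (α β : Fin b)

lemma nAB_total (k l : ℕ) :
    Nat.card {s : List (Fin b) // s.length = l ∧ occ α β s = k} = nA α β k l + nB α β k l := by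
  haveI := finite_pred (fun s : List (Fin b) => s.length = l ∧ occ α β s = k) l (fun _ h => h.1)
  rw [card_split (fun s : List (Fin b) => s.length = l ∧ occ α β s = k)
    (fun s => s.head? = some β)]
  congr 1
  · exact card_congr_iff fun s => by tauto
  · exact card_congr_iff fun s => by tauto

lemma nAB_le (k l : ℕ) : nA α β k l + nB α β k l ≤ b ^ l := by
  rw [← nAB_total, ← card_len (b := b) l]
  haveI := finite_len (b := b) l
  exact Nat.card_le_card_of_injective
    (fun s => (⟨s.1, s.2.1⟩ : {s : List (Fin b) // s.length = l}))
    (fun _ _ hxy => Subtype.ext (Subtype.mk_eq_mk.mp hxy))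


section Rec
variable (α β : Fin b)

lemma f_other (c : Fin b) (hcα : c ≠ α) (hcβ : c ≠ β) (k l : ℕ) :
    Nat.card {t : List (Fin b) //
        t.length = l ∧ occ α β (c :: t) = k ∧ ¬ (c :: t).head? = some β}
      = nA α β k l + nB α β k l := by
  rw [← nAB_total]
  refine card_congr_iff fun t => ?_
  rw [occ_cons]
  simp [hcα, hcβ]

lemma recA0 (l : ℕ) :
    nA α β 0 (l + 1) = (if α = β then 0 else nA α β 0 l) + nB α β 0 l := by
  classical
  rw [nA, card_cons, Finset.sum_eq_single β
    (fun c _ hc => card_false fun t h => hc (by simpa using h.2.2))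
    (fun h => absurd (Finset.mem_univ β) h)]
  by_cases hab : α = β
  · subst hab
    rw [if_pos rfl, zero_add, nB]
    refine card_congr_iff fun t => ?_
    rw [occ_cons]
    by_cases hh : t.head? = some α <;> simp [hh]
  · rw [if_neg hab, ← nAB_total]
    refine card_congr_iff fun t => ?_
    rw [occ_cons]
    simp [Ne.symm hab, fun h : β = α => hab h.symm]

lemma recA1 (l : ℕ) :
    nA α β 1 (l + 1) = (if α = β then nA α β 0 l else nA α β 1 l) + nB α β 1 l := by
  classical
  rw [nA, card_cons, Finset.sum_eq_single β
    (fun c _ hc => card_false fun t h => hc (by simpa using h.2.2))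
    (fun h => absurd (Finset.mem_univ β) h)]
  by_cases hab : α = β
  · subst hab
    rw [if_pos rfl]
    haveI : Finite {t : List (Fin b) //
        (t.length = l ∧ occ α α t = 0 ∧ t.head? = some α) ∨
        (t.length = l ∧ occ α α t = 1 ∧ ¬ t.head? = some α)} :=
      finite_pred _ l (fun s hs => hs.elim (fun h => h.1) (fun h => h.1))
    have step : Nat.card {t : List (Fin b) //
        t.length = l ∧ occ α α (α :: t) = 1 ∧ (α :: t).head? = some α}
        = Nat.card {t : List (Fin b) //
        (t.length = l ∧ occ α α t = 0 ∧ t.head? = some α) ∨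
        (t.length = l ∧ occ α α t = 1 ∧ ¬ t.head? = some α)} := by
      refine card_congr_iff fun t => ?_
      rw [occ_cons]
      by_cases hh : t.head? = some α <;> simp [hh] <;> omega
    rw [step, card_or _ _ (fun t => t.head? = some α)
      (fun t h => h.2.2) (fun t h => h.2.2)]
    rfl
  · rw [if_neg hab, ← nAB_total]
    refine card_congr_iff fun t => ?_
    rw [occ_cons]
    simp [Ne.symm hab, fun h : β = α => hab h.symm]

lemma recB0 (l : ℕ) :
    nB α β 0 (l + 1) = (if α = β then (b - 1) * (nA α β 0 l + nB α β 0 l)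
      else nB α β 0 l + (b - 2) * (nA α β 0 l + nB α β 0 l)) := by
  classical
  rw [nB, card_cons, ← Finset.add_sum_erase _ _ (Finset.mem_univ β)]
  have hfβ : Nat.card {t : List (Fin b) //
      t.length = l ∧ occ α β (β :: t) = 0 ∧ ¬ (β :: t).head? = some β} = 0 :=
    card_false fun t h => h.2.2 (by simp)
  rw [hfβ, zero_add]
  by_cases hab : α = β
  · subst hab
    rw [if_pos rfl]
    rw [Finset.sum_congr rfl (fun c hc => f_other α α c
      (Finset.ne_of_mem_erase hc) (Finset.ne_of_mem_erase hc) 0 l)]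
    rw [Finset.sum_const, Finset.card_erase_of_mem (Finset.mem_univ α)]
    simp [Finset.card_univ, mul_comm]
  · rw [if_neg hab]
    have hmem : α ∈ Finset.univ.erase β := Finset.mem_erase.2 ⟨hab, Finset.mem_univ α⟩
    rw [← Finset.add_sum_erase _ _ hmem]
    have hfα : Nat.card {t : List (Fin b) //
        t.length = l ∧ occ α β (α :: t) = 0 ∧ ¬ (α :: t).head? = some β}
        = nB α β 0 l := by
      rw [nB]
      refine card_congr_iff fun t => ?_
      rw [occ_cons]
      by_cases hh : t.head? = some β <;> simp [hh, hab]
    rw [hfα]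
    rw [Finset.sum_congr rfl (fun c hc => f_other α β c
      (Finset.ne_of_mem_erase hc) (Finset.ne_of_mem_erase (Finset.mem_of_mem_erase hc)) 0 l)]
    rw [Finset.sum_const, Finset.card_erase_of_mem hmem,
      Finset.card_erase_of_mem (Finset.mem_univ β)]
    simp only [Finset.card_univ, Fintype.card_fin, smul_eq_mul]
    rw [Nat.sub_sub]

lemma recB1 (l : ℕ) :
    nB α β 1 (l + 1) = (if α = β then (b - 1) * (nA α β 1 l + nB α β 1 l)
      else (nA α β 0 l + nB α β 1 l) + (b - 2) * (nA α β 1 l + nB α β 1 l)) := by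
  classical
  rw [nB, card_cons, ← Finset.add_sum_erase _ _ (Finset.mem_univ β)]
  have hfβ : Nat.card {t : List (Fin b) //
      t.length = l ∧ occ α β (β :: t) = 1 ∧ ¬ (β :: t).head? = some β} = 0 :=
    card_false fun t h => h.2.2 (by simp)
  rw [hfβ, zero_add]
  by_cases hab : α = β
  · subst hab
    rw [if_pos rfl]
    rw [Finset.sum_congr rfl (fun c hc => f_other α α c
      (Finset.ne_of_mem_erase hc) (Finset.ne_of_mem_erase hc) 1 l)]
    rw [Finset.sum_const, Finset.card_erase_of_mem (Finset.mem_univ α)]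
    simp [Finset.card_univ, mul_comm]
  · rw [if_neg hab]
    have hmem : α ∈ Finset.univ.erase β := Finset.mem_erase.2 ⟨hab, Finset.mem_univ α⟩
    rw [← Finset.add_sum_erase _ _ hmem]
    haveI : Finite {t : List (Fin b) //
        (t.length = l ∧ occ α β t = 0 ∧ t.head? = some β) ∨
        (t.length = l ∧ occ α β t = 1 ∧ ¬ t.head? = some β)} :=
      finite_pred _ l (fun s hs => hs.elim (fun h => h.1) (fun h => h.1))
    have hfα : Nat.card {t : List (Fin b) //
        t.length = l ∧ occ α β (α :: t) = 1 ∧ ¬ (α :: t).head? = some β}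
        = nA α β 0 l + nB α β 1 l := by
      have step : Nat.card {t : List (Fin b) //
          t.length = l ∧ occ α β (α :: t) = 1 ∧ ¬ (α :: t).head? = some β}
          = Nat.card {t : List (Fin b) //
          (t.length = l ∧ occ α β t = 0 ∧ t.head? = some β) ∨
          (t.length = l ∧ occ α β t = 1 ∧ ¬ t.head? = some β)} := by
        refine card_congr_iff fun t => ?_
        rw [occ_cons]
        by_cases hh : t.head? = some β <;> simp [hh, hab] <;> omega
      rw [step, card_or _ _ (fun t => t.head? = some β)
        (fun t h => h.2.2) (fun t h => h.2.2)]
      rfl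
    rw [hfα]
    rw [Finset.sum_congr rfl (fun c hc => f_other α β c
      (Finset.ne_of_mem_erase hc) (Finset.ne_of_mem_erase (Finset.mem_of_mem_erase hc)) 1 l)]
    rw [Finset.sum_const, Finset.card_erase_of_mem hmem,
      Finset.card_erase_of_mem (Finset.mem_univ β)]
    simp only [Finset.card_univ, Fintype.card_fin, smul_eq_mul]
    rw [Nat.sub_sub]

lemma nA_zero (k : ℕ) : nA α β k 0 = 0 :=
  card_false fun s h => by
    have : s = [] := List.length_eq_zero_iff.mp h.1
    subst this
    simp at h

lemma nB_zero0 : nB α β 0 0 = 1 := by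
  rw [nB]
  have e : {s : List (Fin b) // s.length = 0 ∧ occ α β s = 0 ∧ ¬ s.head? = some β}
      ≃ Unit := by
    refine ⟨fun _ => Unit.unit, fun _ => ⟨[], by simp [occ]⟩, fun s => ?_, fun _ => rfl⟩
    rcases s with ⟨s, hs⟩
    have : s = [] := List.length_eq_zero_iff.mp hs.1
    subst this
    rfl
  rw [Nat.card_congr e]
  simp

lemma nB_zero1 : nB α β 1 0 = 0 :=
  card_false fun s h => by
    have : s = [] := List.length_eq_zero_iff.mp h.1
    subst this
    simp [occ] at h

end Rec

lemma div_le_div_of_nonneg_right' {x y c : ℝ} (h : x ≤ y) (hc : 0 < c) :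
    x / c ≤ y / c := by gcongr


section Analysis

noncomputable def ra (α β : Fin b) (k l : ℕ) : ℝ := (nA α β k l : ℝ) / (b : ℝ) ^ l
noncomputable def rb (α β : Fin b) (k l : ℕ) : ℝ := (nB α β k l : ℝ) / (b : ℝ) ^ l

variable (α β : Fin b)

lemma ra_nonneg (k l : ℕ) : 0 ≤ ra α β k l := by
  unfold ra; positivity

lemma rb_nonneg (k l : ℕ) : 0 ≤ rb α β k l := by
  unfold rb; positivity

section WithHb
variable (hb : 2 ≤ b)
include hb

lemma hbR : (2:ℝ) ≤ (b:ℝ) := by exact_mod_cast hb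

lemma hb0 : (0:ℝ) < (b:ℝ) := lt_of_lt_of_le (by norm_num) (hbR hb)

lemma K1 (l : ℕ) : (nA α β 0 (l+1) + nB α β 0 (l+1)) + nA α β 0 l
    = b * (nA α β 0 l + nB α β 0 l) := by
  obtain ⟨b', rfl⟩ : ∃ b', b = b' + 2 := ⟨b - 2, by omega⟩
  have e1 : b' + 2 - 1 = b' + 1 := by omega
  have e2 : b' + 2 - 2 = b' := by omega
  rw [recA0, recB0]
  by_cases hab : α = β <;> simp only [hab, if_pos, if_neg, if_true, if_false, e1, e2] <;> ring

lemma K2 (l : ℕ) : (nA α β 1 (l+1) + nB α β 1 (l+1)) + nA α β 1 l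
    = b * (nA α β 1 l + nB α β 1 l) + nA α β 0 l := by
  obtain ⟨b', rfl⟩ : ∃ b', b = b' + 2 := ⟨b - 2, by omega⟩
  have e1 : b' + 2 - 1 = b' + 1 := by omega
  have e2 : b' + 2 - 2 = b' := by omega
  rw [recA1, recB1]
  by_cases hab : α = β <;> simp only [hab, if_pos, if_neg, if_true, if_false, e1, e2] <;> ring

lemma F1 (l : ℕ) : ra α β 0 (l+1) + rb α β 0 (l+1)
    = (ra α β 0 l + rb α β 0 l) - ra α β 0 l / b := by
  have h := congrArg (Nat.cast : ℕ → ℝ) (K1 α β hb l)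
  push_cast at h
  have hbne : (b:ℝ) ≠ 0 := ne_of_gt (hb0 hb)
  have hp : (b:ℝ) ^ l ≠ 0 := pow_ne_zero _ hbne
  simp only [ra, rb, pow_succ]
  field_simp
  linear_combination h

lemma F2 (l : ℕ) : ra α β 1 (l+1) + rb α β 1 (l+1)
    = (ra α β 1 l + rb α β 1 l) + (ra α β 0 l - ra α β 1 l) / b := by
  have h := congrArg (Nat.cast : ℕ → ℝ) (K2 α β hb l)
  push_cast at h
  have hbne : (b:ℝ) ≠ 0 := ne_of_gt (hb0 hb)
  have hp : (b:ℝ) ^ l ≠ 0 := pow_ne_zero _ hbne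
  simp only [ra, rb, pow_succ]
  field_simp
  linear_combination h

lemma F3 (l : ℕ) : ra α β 1 (l+1)
    = ((if α = β then ra α β 0 l else ra α β 1 l) + rb α β 1 l) / b := by
  have hbne : (b:ℝ) ≠ 0 := ne_of_gt (hb0 hb)
  have hp : (b:ℝ) ^ l ≠ 0 := pow_ne_zero _ hbne
  by_cases hab : α = β
  · have h := recA1 α β l
    rw [if_pos hab] at h
    rw [if_pos hab]
    simp only [ra, rb, h, pow_succ]
    push_cast
    field_simp
  · have h := recA1 α β l
    rw [if_neg hab] at h
    rw [if_neg hab]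
    simp only [ra, rb, h, pow_succ]
    push_cast
    field_simp

lemma F4 (l : ℕ) : rb α β 0 l / b ≤ ra α β 0 (l+1) := by
  have h : nB α β 0 l ≤ nA α β 0 (l+1) := by
    rw [recA0]; split <;> omega
  have hc : (nB α β 0 l : ℝ) ≤ (nA α β 0 (l+1) : ℝ) := by exact_mod_cast h
  have hpos : (0:ℝ) < (b:ℝ) ^ l * b := by
    have := hb0 hb; positivity
  simp only [ra, rb, pow_succ, div_div]
  exact div_le_div_of_nonneg_right' hc hpos

lemma F5 (l : ℕ) : rb α β 1 l / b ≤ ra α β 1 (l+1) := by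
  have h : nB α β 1 l ≤ nA α β 1 (l+1) := by
    rw [recA1]; split <;> omega
  have hc : (nB α β 1 l : ℝ) ≤ (nA α β 1 (l+1) : ℝ) := by exact_mod_cast h
  have hpos : (0:ℝ) < (b:ℝ) ^ l * b := by
    have := hb0 hb; positivity
  simp only [ra, rb, pow_succ, div_div]
  exact div_le_div_of_nonneg_right' hc hpos

lemma tle (k l : ℕ) : ra α β k l + rb α β k l ≤ 1 := by
  have h := nAB_le α β k l
  have hc : ((nA α β k l : ℝ) + nB α β k l) ≤ (b:ℝ) ^ l := by exact_mod_cast h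
  have hp : (0:ℝ) < (b:ℝ) ^ l := pow_pos (hb0 hb) l
  rw [ra, rb, ← add_div, div_le_one hp]
  exact hc

omit hb in
lemma t_zero : ra α β 0 0 + rb α β 0 0 = 1 := by
  simp [ra, rb, nA_zero, nB_zero0]

omit hb in
lemma s_zero : ra α β 1 0 + rb α β 1 0 = 0 := by
  simp [ra, rb, nA_zero, nB_zero1]

omit hb in
lemma ra1_zero : ra α β 1 0 = 0 := by simp [ra, nA_zero]

end WithHb

noncomputable def Qv (b : ℕ) : ℝ := 1 - 1/(b:ℝ)^2

section WithHb2
variable (hb : 2 ≤ b)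
include hb

lemma Qv_pos : 0 < Qv b := by
  have h := hbR (b := b) hb
  have : 1/(b:ℝ)^2 ≤ 1/4 := by
    apply div_le_div_of_nonneg_left (by norm_num) (by norm_num)
    nlinarith
  simp only [Qv]
  linarith

lemma Qv_lt_one : Qv b < 1 := by
  have h := hb0 (b := b) hb
  have : 0 < 1/(b:ℝ)^2 := by positivity
  simp only [Qv]
  linarith

lemma D1 (l : ℕ) : ra α β 0 (l+2) + rb α β 0 (l+2)
    ≤ Qv b * (ra α β 0 l + rb α β 0 l) := by
  have hbp := hb0 (b := b) hb
  have e1 := F1 α β hb l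
  have e2 := F1 α β hb (l+1)
  have f4 := F4 α β hb l
  have h1 : ra α β 0 l / (b:ℝ)^2 ≤ ra α β 0 l / b := by
    apply div_le_div_of_nonneg_left (ra_nonneg α β 0 l) hbp
    nlinarith [hbR (b := b) hb]
  have h2 : rb α β 0 l / (b:ℝ)^2 ≤ ra α β 0 (l+1) / b := by
    have := div_le_div_of_nonneg_right' f4 hbp
    rw [div_div] at this
    calc rb α β 0 l / (b:ℝ)^2 = rb α β 0 l / ((b:ℝ)*b) := by ring_nf
    _ ≤ ra α β 0 (l+1) / b := this
  have key : (ra α β 0 l + rb α β 0 l) / (b:ℝ)^2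
      ≤ ra α β 0 l / b + ra α β 0 (l+1) / b := by
    rw [add_div]
    linarith
  have expand : Qv b * (ra α β 0 l + rb α β 0 l)
      = (ra α β 0 l + rb α β 0 l) - (ra α β 0 l + rb α β 0 l) / (b:ℝ)^2 := by
    simp only [Qv]; ring
  rw [e2, e1, expand]
  linarith

lemma D2 (l : ℕ) : ra α β 0 l + rb α β 0 l ≤ Qv b ^ (l / 2) := by
  induction l using Nat.strong_induction_on with
  | _ l ih =>
    match l with
    | 0 => simpa using tle α β hb 0 0
    | 1 => simpa using tle α β hb 0 1
    | (l+2) =>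
      have h := D1 α β hb l
      have h2 := ih l (by omega)
      have e : (l+2)/2 = l/2 + 1 := by omega
      rw [e, pow_succ]
      calc ra α β 0 (l+2) + rb α β 0 (l+2) ≤ Qv b * (ra α β 0 l + rb α β 0 l) := h
      _ ≤ Qv b ^ (l/2) * Qv b := by
          rw [mul_comm]
          exact mul_le_mul_of_nonneg_right h2 (le_of_lt (Qv_pos hb))

lemma D3 (l : ℕ) : ra α β 1 (l+2) + rb α β 1 (l+2)
    ≤ Qv b * (ra α β 1 l + rb α β 1 l) + (2/b) * Qv b ^ (l / 2) := by
  have hbp := hb0 (b := b) hb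
  have e1 := F2 α β hb l
  have e2 := F2 α β hb (l+1)
  have f5 := F5 α β hb l
  have ha0l : ra α β 0 l ≤ Qv b ^ (l/2) :=
    le_trans (le_add_of_nonneg_right (rb_nonneg α β 0 l)) (D2 α β hb l)
  have ha0l1 : ra α β 0 (l+1) ≤ Qv b ^ (l/2) := by
    refine le_trans (le_trans (le_add_of_nonneg_right (rb_nonneg α β 0 (l+1))) (D2 α β hb (l+1))) ?_
    exact pow_le_pow_of_le_one (le_of_lt (Qv_pos hb)) (le_of_lt (Qv_lt_one hb))
      (Nat.div_le_div_right (Nat.le_succ l))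
  -- lower bound for a1 l + a1 (l+1)
  have h1 : ra α β 1 l / b ≤ ra α β 1 l :=
    div_le_self (ra_nonneg α β 1 l) (by linarith [hbR (b := b) hb])
  have h2 : (ra α β 1 l + rb α β 1 l) / b ≤ ra α β 1 l + ra α β 1 (l+1) := by
    rw [add_div]
    linarith
  have h3 : (ra α β 1 l + rb α β 1 l) / (b:ℝ)^2 ≤ (ra α β 1 l + ra α β 1 (l+1)) / b := by
    have := div_le_div_of_nonneg_right' h2 hbp
    rw [div_div] at this
    calc (ra α β 1 l + rb α β 1 l) / (b:ℝ)^2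
        = (ra α β 1 l + rb α β 1 l) / ((b:ℝ)*b) := by ring_nf
    _ ≤ _ := this
  have h4 : (ra α β 0 l + ra α β 0 (l+1)) / b ≤ 2 * Qv b ^ (l/2) / b := by
    apply div_le_div_of_nonneg_right' _ hbp
    linarith
  have expand : Qv b * (ra α β 1 l + rb α β 1 l) + (2/b) * Qv b ^ (l / 2)
      = (ra α β 1 l + rb α β 1 l) - (ra α β 1 l + rb α β 1 l) / (b:ℝ)^2
        + 2 * Qv b ^ (l/2) / b := by
    simp only [Qv]; ring
  rw [e2, e1, expand]
  have goalsplit : (ra α β 0 l - ra α β 1 l)/b + (ra α β 0 (l+1) - ra α β 1 (l+1))/b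
      = (ra α β 0 l + ra α β 0 (l+1))/b - (ra α β 1 l + ra α β 1 (l+1))/b := by ring
  linarith [goalsplit]

lemma D4 (m r : ℕ) (hr : r < 2) : ra α β 1 (2*m+r) + rb α β 1 (2*m+r)
    ≤ (1 + 2*(m:ℝ)/((b:ℝ) * Qv b)) * Qv b ^ m := by
  induction m with
  | zero => simpa using tle α β hb 1 r
  | succ m ih =>
    have hQ := Qv_pos (b := b) hb
    have hQ1 := Qv_lt_one (b := b) hb
    have hbp := hb0 (b := b) hb
    have idx : 2*(m+1)+r = (2*m+r)+2 := by ring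
    rw [idx]
    have key := D3 α β hb (2*m+r)
    have ediv : (2*m+r)/2 = m := by omega
    rw [ediv] at key
    have step2 : Qv b * (ra α β 1 (2*m+r) + rb α β 1 (2*m+r)) + (2/b) * Qv b ^ m
        ≤ Qv b * ((1 + 2*(m:ℝ)/((b:ℝ) * Qv b)) * Qv b ^ m) + (2/b) * Qv b ^ m := by
      have := mul_le_mul_of_nonneg_left ih (le_of_lt hQ)
      linarith
    have eqn : Qv b * ((1 + 2*(m:ℝ)/((b:ℝ) * Qv b)) * Qv b ^ m) + (2/b) * Qv b ^ m
        = (1 + 2*((m:ℕ)+1:ℝ)/((b:ℝ) * Qv b)) * Qv b ^ (m+1) := by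
      have hQne : Qv b ≠ 0 := ne_of_gt hQ
      have hbne : (b:ℝ) ≠ 0 := ne_of_gt hbp
      field_simp
      ring
    calc ra α β 1 ((2*m+r)+2) + rb α β 1 ((2*m+r)+2)
        ≤ Qv b * (ra α β 1 (2*m+r) + rb α β 1 (2*m+r)) + (2/b) * Qv b ^ m := key
      _ ≤ Qv b * ((1 + 2*(m:ℝ)/((b:ℝ) * Qv b)) * Qv b ^ m) + (2/b) * Qv b ^ m := step2
      _ = _ := by rw [eqn]; push_cast; ring_nf

omit hb in
lemma div2_tendsto : Filter.Tendsto (fun l : ℕ => l / 2) Filter.atTop Filter.atTop :=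
  Filter.tendsto_atTop_atTop.mpr (fun n => ⟨2*n, fun a ha => by omega⟩)

lemma pow_div2_tendsto : Filter.Tendsto (fun l : ℕ => Qv b ^ (l / 2)) Filter.atTop (nhds 0) := by
  have h1 : Filter.Tendsto (fun m : ℕ => Qv b ^ m) Filter.atTop (nhds 0) :=
    tendsto_pow_atTop_nhds_zero_of_lt_one (le_of_lt (Qv_pos (b := b) hb)) (Qv_lt_one (b := b) hb)
  exact h1.comp div2_tendsto

lemma tendsto_t : Filter.Tendsto (fun l => ra α β 0 l + rb α β 0 l) Filter.atTop (nhds 0) := by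
  apply squeeze_zero (fun l => add_nonneg (ra_nonneg α β 0 l) (rb_nonneg α β 0 l))
    (fun l => D2 α β hb l) (pow_div2_tendsto hb)

lemma tendsto_s : Filter.Tendsto (fun l => ra α β 1 l + rb α β 1 l) Filter.atTop (nhds 0) := by
  have hQ := Qv_pos (b := b) hb
  have hQ1 := Qv_lt_one (b := b) hb
  have habs : ‖Qv b‖ < 1 := by
    rw [Real.norm_eq_abs, abs_of_pos hQ]; exact hQ1
  have h1 : Filter.Tendsto (fun m : ℕ => Qv b ^ m) Filter.atTop (nhds 0) :=
    tendsto_pow_atTop_nhds_zero_of_lt_one (le_of_lt hQ) hQ1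
  have h2 : Filter.Tendsto (fun m : ℕ => (m:ℝ) * Qv b ^ m) Filter.atTop (nhds 0) := by
    have hs := summable_pow_mul_geometric_of_norm_lt_one 1 habs
    have := hs.tendsto_atTop_zero
    simpa [pow_one] using this
  have hinner : Filter.Tendsto (fun m : ℕ => (1 + 2*(m:ℝ)/((b:ℝ) * Qv b)) * Qv b ^ m)
      Filter.atTop (nhds 0) := by
    have hrw : (fun m : ℕ => (1 + 2*(m:ℝ)/((b:ℝ) * Qv b)) * Qv b ^ m)
        = fun m : ℕ => Qv b ^ m + (2/((b:ℝ) * Qv b)) * ((m:ℝ) * Qv b ^ m) := by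
      funext m; ring
    rw [hrw]
    simpa using h1.add (h2.const_mul (2/((b:ℝ) * Qv b)))
  refine squeeze_zero (fun l => add_nonneg (ra_nonneg α β 1 l) (rb_nonneg α β 1 l))
    (fun l => ?_) (hinner.comp div2_tendsto)
  have hd4 := D4 α β hb (l / 2) (l % 2) (Nat.mod_lt l (by norm_num))
  rw [Nat.div_add_mod l 2] at hd4
  exact hd4

lemma PSa0 (L : ℕ) : ∑ l ∈ Finset.range L, ra α β 0 l
    = b * (1 - (ra α β 0 L + rb α β 0 L)) := by
  have hbne : (b:ℝ) ≠ 0 := ne_of_gt (hb0 (b := b) hb)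
  induction L with
  | zero => rw [Finset.sum_range_zero, t_zero]; ring
  | succ L ih =>
    rw [Finset.sum_range_succ, ih, F1 α β hb L]
    field_simp
    ring

lemma PSa1 (L : ℕ) : ∑ l ∈ Finset.range L, ra α β 1 l
    = (∑ l ∈ Finset.range L, ra α β 0 l) - b * (ra α β 1 L + rb α β 1 L) := by
  have hbne : (b:ℝ) ≠ 0 := ne_of_gt (hb0 (b := b) hb)
  induction L with
  | zero => rw [Finset.sum_range_zero, Finset.sum_range_zero, s_zero]; ring
  | succ L ih =>
    rw [Finset.sum_range_succ, Finset.sum_range_succ, ih, F2 α β hb L]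
    field_simp
    ring

lemma HSa0 : HasSum (fun l => ra α β 0 l) (b : ℝ) := by
  rw [hasSum_iff_tendsto_nat_of_nonneg (fun i => ra_nonneg α β 0 i)]
  have hrw : (fun n => ∑ l ∈ Finset.range n, ra α β 0 l)
      = fun n => (b:ℝ) * (1 - (ra α β 0 n + rb α β 0 n)) := funext (PSa0 α β hb)
  rw [hrw]
  have := (tendsto_const_nhds (x := (1:ℝ)).sub (tendsto_t α β hb)).const_mul (b:ℝ)
  simpa using this

lemma HSa1 : HasSum (fun l => ra α β 1 l) (b : ℝ) := by
  rw [hasSum_iff_tendsto_nat_of_nonneg (fun i => ra_nonneg α β 1 i)]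
  have hrw : (fun n => ∑ l ∈ Finset.range n, ra α β 1 l)
      = fun n => (∑ l ∈ Finset.range n, ra α β 0 l) - (b:ℝ) * (ra α β 1 n + rb α β 1 n) :=
    funext (PSa1 α β hb)
  rw [hrw]
  have h1 := (hasSum_iff_tendsto_nat_of_nonneg (fun i => ra_nonneg α β 0 i) _).mp (HSa0 α β hb)
  have h2 := (tendsto_s α β hb).const_mul (b:ℝ)
  simpa using h1.sub h2

lemma HSb1 : HasSum (fun l => rb α β 1 l) ((b:ℝ) * b - b) := by
  have hbne : (b:ℝ) ≠ 0 := ne_of_gt (hb0 (b := b) hb)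
  rw [hasSum_iff_tendsto_nat_of_nonneg (fun i => rb_nonneg α β 1 i)]
  have hrepr : ∀ L, ∑ l ∈ Finset.range L, rb α β 1 l
      = (b:ℝ) * (∑ l ∈ Finset.range (L+1), ra α β 1 l)
        - ∑ l ∈ Finset.range L, (if α = β then ra α β 0 l else ra α β 1 l) := by
    intro L
    induction L with
    | zero => simp [Finset.sum_range_one, ra1_zero]
    | succ L ih =>
      rw [Finset.sum_range_succ, ih, Finset.sum_range_succ (f := fun l =>
          (if α = β then ra α β 0 l else ra α β 1 l)),
        Finset.sum_range_succ (f := fun l => ra α β 1 l) (n := L+1)]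
      have h := F3 α β hb L
      have h' : (b:ℝ) * ra α β 1 (L+1)
          = (if α = β then ra α β 0 L else ra α β 1 L) + rb α β 1 L := by
        rw [h]; field_simp
      ring_nf
      ring_nf at h' ih ⊢
      linarith [h']
  have hrw := funext hrepr
  rw [hrw]
  have h1 := (hasSum_iff_tendsto_nat_of_nonneg (fun i => ra_nonneg α β 1 i) _).mp (HSa1 α β hb)
  have h1' : Filter.Tendsto (fun L => ∑ l ∈ Finset.range (L+1), ra α β 1 l)
      Filter.atTop (nhds (b:ℝ)) := h1.comp (Filter.tendsto_add_atTop_nat 1)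
  have h2 : Filter.Tendsto
      (fun L => ∑ l ∈ Finset.range L, (if α = β then ra α β 0 l else ra α β 1 l))
      Filter.atTop (nhds (b:ℝ)) := by
    by_cases hab : α = β
    · simp only [hab, if_true]
      exact (hasSum_iff_tendsto_nat_of_nonneg (fun i => ra_nonneg β β 0 i) _).mp (HSa0 β β hb)
    · simp only [hab, if_false]
      exact h1
  have := (h1'.const_mul (b:ℝ)).sub h2
  simpa using this

end WithHb2
end Analysis
end Stmt6


theorem stmt_6 (b : ℕ) (hb : 2 ≤ b) (α β : Fin b) :
    HasSum (fun l : ℕ => (exactlyOneCount b α β l : ℝ) / (b : ℝ) ^ l) ((b : ℝ) ^ 2) := by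
  have h1 := Stmt6.HSa1 α β hb
  have h2 := Stmt6.HSb1 α β hb
  have h3 := h1.add h2
  have heq : (fun l : ℕ => (exactlyOneCount b α β l : ℝ) / (b : ℝ) ^ l)
      = fun l => Stmt6.ra α β 1 l + Stmt6.rb α β 1 l := by
    funext l
    have hcnt : exactlyOneCount b α β l = Stmt6.nA α β 1 l + Stmt6.nB α β 1 l :=
      Stmt6.nAB_total α β 1 l
    rw [hcnt]
    push_cast
    rw [Stmt6.ra, Stmt6.rb, add_div]
  rw [heq]
  have hval : ((b:ℝ)) + ((b:ℝ) * b - b) = (b:ℝ) ^ 2 := by ring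
  rw [← hval]
  exact h3
end

section
/- Let b ≥ 2 and let α, β be digits. The subsum K₁ = Σ' 1/n of the harmonic series over positive integers n whose base-b representation contains exactly one occurrence of the string αβ converges, and satisfies b(b−1) ≤ K₁ ≤ b·b(b−1) (for b = 10 this gives 90 < K₁ < 900). -/
/-- The base-`b` digits of `n`, leading digit first. -/
def digitsBE (b n : ℕ) : List ℕ := (Nat.digits b n).reverse

/-- The number of contiguous occurrences of the two-digit string `αβ`
(α followed by β, reading from the leading digit) in the base-`b` representation of `n`. -/
def occCount (b α β n : ℕ) : ℕ :=
  ((digitsBE b n).zip (digitsBE b n).tail).count (α, β)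

lemma zip_tail_concat (L : List ℕ) (a d : ℕ) :
    ((L ++ [a, d]).zip (L ++ [a, d]).tail) =
      ((L ++ [a]).zip (L ++ [a]).tail) ++ [(a, d)] := by
  induction L with
  | nil => simp
  | cons x L ih =>
    cases L with
    | nil => simp
    | cons y L' =>
      simpa using ih

example : True := trivial

lemma digits_mul_add (b m d : ℕ) (hb : 2 ≤ b) (hm : 1 ≤ m) (hd : d < b) :
    Nat.digits b (b * m + d) = d :: Nat.digits b m := by
  have h1 : 1 < b := hb
  have hpos : 0 < b * m + d := by positivity
  rw [Nat.digits_def' h1 hpos]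
  have h2 : (b * m + d) % b = d := by
    rw [Nat.mul_add_mod]; exact Nat.mod_eq_of_lt hd
  have h3 : (b * m + d) / b = m := by
    rw [Nat.mul_add_div (by omega), Nat.div_eq_of_lt hd]; omega
  rw [h2, h3]

lemma occ_step (b α β m d : ℕ) (hb : 2 ≤ b) (hm : 1 ≤ m) (hd : d < b) :
    occCount b α β (b * m + d) =
      occCount b α β m + (if m % b = α ∧ d = β then 1 else 0) := by
  have hdig : Nat.digits b m = m % b :: Nat.digits b (m / b) :=
    Nat.digits_def' hb (by omega)
  have hBE : digitsBE b m = (Nat.digits b (m / b)).reverse ++ [m % b] := by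
    rw [digitsBE, hdig, List.reverse_cons]
  have hBE2 : digitsBE b (b * m + d) =
      (Nat.digits b (m / b)).reverse ++ [m % b, d] := by
    rw [digitsBE, digits_mul_add b m d hb hm hd, List.reverse_cons, ← digitsBE, hBE]
    simp
  rw [occCount, occCount, hBE2, hBE, zip_tail_concat, List.count_append]
  congr 1
  by_cases h : m % b = α ∧ d = β
  · simp [h.1, h.2, List.count_singleton]
  · rw [if_neg h]
    rw [List.count_eq_zero]
    simp only [List.mem_singleton]
    intro hc
    obtain ⟨h1, h2⟩ := Prod.mk.injEq .. ▸ hc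
    exact h ⟨h1.symm, h2.symm⟩

lemma occ_single (b α β n : ℕ) (hb : 2 ≤ b) (hn : n < b) :
    occCount b α β n = 0 := by
  rcases Nat.eq_zero_or_pos n with rfl | hp
  · simp [occCount, digitsBE]
  · have : Nat.digits b n = [n] := by
      rw [Nat.digits_def' (by omega : 1 < b) hp, Nat.mod_eq_of_lt hn,
        Nat.div_eq_of_lt hn]
      simp
    simp [occCount, digitsBE, this]

lemma sum_ite_mem (s : Finset ℕ) (a : ℕ) (ha : a ∈ s) (X Y : ℕ) :
    ∑ d ∈ s, (if d = a then X else Y) = X + (s.card - 1) * Y := by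
  rw [← Finset.add_sum_erase _ _ ha, if_pos rfl]
  congr 1
  rw [Finset.sum_congr rfl (fun x hx => if_neg (Finset.ne_of_mem_erase hx)),
    Finset.sum_const, Finset.card_erase_of_mem ha, smul_eq_mul]

lemma sum_ite_two (s : Finset ℕ) (a c : ℕ) (ha : a ∈ s) (hc : c ∈ s) (hac : a ≠ c)
    (X Y Z : ℕ) :
    ∑ d ∈ s, (if d = c then X else if d = a then Y else Z) =
      X + Y + (s.card - 2) * Z := by
  rw [← Finset.add_sum_erase _ _ hc, if_pos rfl]
  have ha' : a ∈ s.erase c := Finset.mem_erase.mpr ⟨hac, ha⟩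
  have : ∑ d ∈ s.erase c, (if d = c then X else if d = a then Y else Z)
      = ∑ d ∈ s.erase c, (if d = a then Y else Z) :=
    Finset.sum_congr rfl (fun x hx => if_neg (Finset.ne_of_mem_erase hx))
  rw [this, sum_ite_mem _ _ ha', Finset.card_erase_of_mem hc]
  have h2 : s.card - 1 - 1 = s.card - 2 := by omega
  rw [h2, add_assoc]

def gcoef (b α β : ℕ) (n : ℕ) : ℕ :=
  if occCount b α β n = 0 then b * b
  else if occCount b α β n = 1 then
    (if n % b = α then (if α = β then b * b else b * b - b)
     else (if α = β then b * b + b else b * b))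
  else 0

lemma gcoef_step (b α β m d : ℕ) (hb : 2 ≤ b) (hm : 1 ≤ m) (hd : d < b) :
    gcoef b α β (b * m + d) =
      (if occCount b α β m + (if m % b = α ∧ d = β then 1 else 0) = 0 then b * b
       else if occCount b α β m + (if m % b = α ∧ d = β then 1 else 0) = 1 then
         (if d = α then (if α = β then b * b else b * b - b)
          else (if α = β then b * b + b else b * b))
       else 0) := by
  have hmod : (b * m + d) % b = d := by
    rw [Nat.mul_add_mod]; exact Nat.mod_eq_of_lt hd
  rw [gcoef, occ_step b α β m d hb hm hd, hmod]

lemma inner_g (b α β m : ℕ) (hb : 2 ≤ b) (hα : α < b) (hβ : β < b) (hm : 1 ≤ m) :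
    ∑ d ∈ Finset.range b, gcoef b α β (b * m + d)
      + b * (if occCount b α β m = 1 then 1 else 0) = b * gcoef b α β m := by
  have hb2 : b ≤ b * b := Nat.le_mul_of_pos_left b (by omega)
  have hαm : α ∈ Finset.range b := Finset.mem_range.mpr hα
  have hβm : β ∈ Finset.range b := Finset.mem_range.mpr hβ
  have hcard : (Finset.range b).card = b := Finset.card_range b
  have hstep : ∀ d ∈ Finset.range b, gcoef b α β (b * m + d) =
      (if occCount b α β m + (if m % b = α ∧ d = β then 1 else 0) = 0 then b * b
       else if occCount b α β m + (if m % b = α ∧ d = β then 1 else 0) = 1 then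
         (if d = α then (if α = β then b * b else b * b - b)
          else (if α = β then b * b + b else b * b))
       else 0) := fun d hd => gcoef_step b α β m d hb hm (Finset.mem_range.mp hd)
  rcases ho : occCount b α β m with _ | o'
  · -- occ m = 0 : every child has gcoef = b*b
    have key : ∀ d ∈ Finset.range b, gcoef b α β (b * m + d) = b * b := by
      intro d hd
      rw [hstep d hd, ho]
      by_cases hmd : m % b = α ∧ d = β
      · rcases eq_or_ne α β with hab | hab
        · subst hab
          simp [hmd, hmd.2]
        · have hne : ¬(β = α) := fun h => hab h.symm
          simp [hmd, hmd.2, hne, hab]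
      · simp [hmd]
    rw [Finset.sum_congr rfl key, Finset.sum_const, hcard, smul_eq_mul]
    simp [gcoef, ho]
  · rcases o' with _ | o''
    · -- occ m = 1
      by_cases hma : m % b = α
      · rcases eq_or_ne α β with hab | hab
        · -- α = β : summand = if d = α then 0 else b*b + b
          subst hab
          have key : ∀ d ∈ Finset.range b, gcoef b α α (b * m + d) =
              (if d = α then 0 else b * b + b) := by
            intro d hd
            rw [hstep d hd, ho]
            by_cases hda : d = α <;> simp [hma, hda]
          rw [Finset.sum_congr rfl key, sum_ite_mem _ _ hαm, hcard]
          rw [gcoef, ho]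
          norm_num [hma]
          zify [show 1 ≤ b by omega]
          ring
        · -- α ≠ β : summand = if d = β then 0 else if d = α then b*b - b else b*b
          have key : ∀ d ∈ Finset.range b, gcoef b α β (b * m + d) =
              (if d = β then 0 else if d = α then b * b - b else b * b) := by
            intro d hd
            rw [hstep d hd, ho]
            by_cases hdb : d = β
            · simp [hma, hdb]
            · by_cases hda : d = α <;> simp [hma, hdb, hda, hab]
          rw [Finset.sum_congr rfl key, sum_ite_two _ _ _ hαm hβm (fun h => hab h) , hcard]
          rw [gcoef, ho]
          norm_num [hma, hab]
          zify [hb, hb2]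
          ring
      · -- m % b ≠ α : no exits
        have hind : ∀ d, (if m % b = α ∧ d = β then 1 else 0) = 0 := by
          intro d; simp [hma]
        rcases eq_or_ne α β with hab | hab
        · subst hab
          have key : ∀ d ∈ Finset.range b, gcoef b α α (b * m + d) =
              (if d = α then b * b else b * b + b) := by
            intro d hd
            rw [hstep d hd, ho, hind d]
            by_cases hda : d = α <;> simp [hda]
          rw [Finset.sum_congr rfl key, sum_ite_mem _ _ hαm, hcard]
          rw [gcoef, ho]
          norm_num [hma]
          zify [show 1 ≤ b by omega]
          ring
        · have key : ∀ d ∈ Finset.range b, gcoef b α β (b * m + d) =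
              (if d = α then b * b - b else b * b) := by
            intro d hd
            rw [hstep d hd, ho, hind d]
            by_cases hda : d = α <;> simp [hda, hab]
          rw [Finset.sum_congr rfl key, sum_ite_mem _ _ hαm, hcard]
          rw [gcoef, ho]
          norm_num [hma, hab]
          zify [show 1 ≤ b by omega, hb2]
          ring
    · -- occ m ≥ 2
      have key : ∀ d ∈ Finset.range b, gcoef b α β (b * m + d) = 0 := by
        intro d hd
        rw [hstep d hd, ho]
        by_cases hmd : m % b = α ∧ d = β <;> simp [hmd]
      rw [Finset.sum_congr rfl key, Finset.sum_const, smul_eq_mul, mul_zero]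
      rw [gcoef, ho]
      simp

def Iset (b k : ℕ) : Finset ℕ := Finset.Ico (b ^ k) (b ^ (k + 1))

lemma sum_Isucc {M : Type*} [AddCommMonoid M] (b : ℕ) (hb : 2 ≤ b) (k : ℕ) (f : ℕ → M) :
    ∑ n ∈ Iset b (k + 1), f n = ∑ m ∈ Iset b k, ∑ d ∈ Finset.range b, f (b * m + d) := by
  rw [← Finset.sum_product']
  apply Finset.sum_nbij' (i := fun n => (n / b, n % b)) (j := fun p => b * p.1 + p.2)
  · intro n hn
    simp only [Iset, Finset.mem_Ico] at hn
    simp only [Finset.mem_product, Finset.mem_Ico, Finset.mem_range, Iset]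
    refine ⟨⟨?_, ?_⟩, Nat.mod_lt _ (by omega)⟩
    · rw [Nat.le_div_iff_mul_le (by omega)]
      calc b ^ k * b = b ^ (k+1) := by ring
        _ ≤ n := hn.1
    · rw [Nat.div_lt_iff_lt_mul (by omega : 0 < b)]
      calc n < b ^ (k + 1 + 1) := hn.2
        _ = b ^ (k+1) * b := by ring
  · intro p hp
    simp only [Finset.mem_product, Finset.mem_Ico, Finset.mem_range, Iset] at hp
    simp only [Iset, Finset.mem_Ico]
    constructor
    · calc b ^ (k + 1) = b * b ^ k := by ring
        _ ≤ b * p.1 := by exact Nat.mul_le_mul_left b hp.1.1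
        _ ≤ b * p.1 + p.2 := Nat.le_add_right _ _
    · calc b * p.1 + p.2 < b * p.1 + b := by omega
        _ = b * (p.1 + 1) := by ring
        _ ≤ b * b ^ (k + 1) := Nat.mul_le_mul_left b hp.1.2
        _ = b ^ (k + 1 + 1) := by ring
  · intro n hn
    exact Nat.div_add_mod n b
  · intro p hp
    simp only [Finset.mem_product, Finset.mem_Ico, Finset.mem_range, Iset] at hp
    have h1 : (b * p.1 + p.2) / b = p.1 := by
      rw [Nat.mul_add_div (by omega), Nat.div_eq_of_lt hp.2]; omega
    have h2 : (b * p.1 + p.2) % b = p.2 := by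
      rw [Nat.mul_add_mod]; exact Nat.mod_eq_of_lt hp.2
    exact Prod.ext h1 h2
  · intro n hn
    rw [Nat.div_add_mod n b]

def Lseq (b α β k : ℕ) : ℕ := ∑ n ∈ Iset b k, gcoef b α β n
def Tseq (b α β k : ℕ) : ℕ := ∑ n ∈ Iset b k, if occCount b α β n = 1 then 1 else 0
def Mseq (b α β k : ℕ) : ℕ := ∑ n ∈ Iset b k, if occCount b α β n ≤ 1 then 1 else 0
def Aseq (b α β k : ℕ) : ℕ :=
  ∑ n ∈ Iset b k, if occCount b α β n = 1 ∧ n % b = α then 1 else 0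
def Bseq (b α β k : ℕ) : ℕ :=
  ∑ n ∈ Iset b k, if occCount b α β n = 1 ∧ ¬(n % b = α) then 1 else 0
def Xseq (b α β k : ℕ) : ℕ :=
  ∑ n ∈ Iset b k, if occCount b α β n = 0 ∧ n % b = α then 1 else 0
def Yseq (b α β k : ℕ) : ℕ :=
  ∑ n ∈ Iset b k, if occCount b α β n = 0 ∧ ¬(n % b = α) then 1 else 0

lemma mem_Iset_pos {b k n : ℕ} (hb : 2 ≤ b) (hn : n ∈ Iset b k) : 1 ≤ n := by
  simp only [Iset, Finset.mem_Ico] at hn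
  have := Nat.one_le_two_pow (n := k)
  calc 1 ≤ b ^ k := Nat.one_le_pow _ _ (by omega)
    _ ≤ n := hn.1

lemma L_rec (b α β : ℕ) (hb : 2 ≤ b) (hα : α < b) (hβ : β < b) (k : ℕ) :
    Lseq b α β (k + 1) + b * Tseq b α β k = b * Lseq b α β k := by
  rw [Lseq, sum_Isucc b hb, Tseq, Finset.mul_sum, ← Finset.sum_add_distrib,
    Lseq, Finset.mul_sum]
  exact Finset.sum_congr rfl fun m hm =>
    inner_g b α β m hb hα hβ (mem_Iset_pos hb hm)

lemma inner_M (b α β m : ℕ) (hb : 2 ≤ b) (hα : α < b) (hβ : β < b) (hm : 1 ≤ m) :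
    ∑ d ∈ Finset.range b, (if occCount b α β (b * m + d) ≤ 1 then 1 else 0)
      + (if occCount b α β m = 1 ∧ m % b = α then 1 else 0)
      = b * (if occCount b α β m ≤ 1 then 1 else 0) := by
  have hβm : β ∈ Finset.range b := Finset.mem_range.mpr hβ
  have hcard : (Finset.range b).card = b := Finset.card_range b
  have hstep : ∀ d ∈ Finset.range b, (if occCount b α β (b * m + d) ≤ 1 then 1 else 0)
      = (if occCount b α β m + (if m % b = α ∧ d = β then 1 else 0) ≤ 1 then 1 else 0) := by
    intro d hd
    rw [occ_step b α β m d hb hm (Finset.mem_range.mp hd)]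
  rw [Finset.sum_congr rfl hstep]
  by_cases h1 : occCount b α β m = 1 ∧ m % b = α
  · have key : ∀ d ∈ Finset.range b,
        (if occCount b α β m + (if m % b = α ∧ d = β then 1 else 0) ≤ 1 then 1 else 0)
        = (if d = β then 0 else 1) := by
      intro d hd
      by_cases hdb : d = β <;> simp [h1.1, h1.2, hdb]
    rw [Finset.sum_congr rfl key, sum_ite_mem _ _ hβm, hcard]
    rw [if_pos h1, if_pos (le_of_eq h1.1)]
    omega
  · have key : ∀ d ∈ Finset.range b,
        (if occCount b α β m + (if m % b = α ∧ d = β then 1 else 0) ≤ 1 then 1 else 0)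
        = (if occCount b α β m ≤ 1 then 1 else 0) := by
      intro d hd
      by_cases hmd : m % b = α ∧ d = β
      · have ho : ¬(occCount b α β m = 1) := fun h => h1 ⟨h, hmd.1⟩
        rcases Nat.eq_zero_or_pos (occCount b α β m) with h0 | hp
        · simp [h0, hmd]
        · have : ¬(occCount b α β m ≤ 1) := by omega
          simp [hmd, this]
          omega
      · simp [hmd]
    rw [Finset.sum_congr rfl key, Finset.sum_const, hcard, smul_eq_mul, if_neg h1,
      add_zero]

lemma M_rec (b α β : ℕ) (hb : 2 ≤ b) (hα : α < b) (hβ : β < b) (k : ℕ) :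
    Mseq b α β (k + 1) + Aseq b α β k = b * Mseq b α β k := by
  rw [Mseq, sum_Isucc b hb, Aseq, ← Finset.sum_add_distrib, Mseq, Finset.mul_sum]
  exact Finset.sum_congr rfl fun m hm =>
    inner_M b α β m hb hα hβ (mem_Iset_pos hb hm)

lemma inner_A_ge (b α β m : ℕ) (hb : 2 ≤ b) (hα : α < b) (hβ : β < b) (hm : 1 ≤ m) :
    (if occCount b α β m = 1 ∧ ¬(m % b = α) then 1 else 0)
      + (if α = β then (if occCount b α β m = 0 ∧ m % b = α then 1 else 0) else 0)
    ≤ ∑ d ∈ Finset.range b,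
        (if occCount b α β (b * m + d) = 1 ∧ (b * m + d) % b = α then 1 else 0) := by
  refine le_trans ?_ (Finset.single_le_sum (f := fun d =>
    (if occCount b α β (b * m + d) = 1 ∧ (b * m + d) % b = α then 1 else 0))
    (fun i _ => Nat.zero_le _) (Finset.mem_range.mpr hα))
  rw [occ_step b α β m α hb hm hα]
  have hmod : (b * m + α) % b = α := by
    rw [Nat.mul_add_mod]; exact Nat.mod_eq_of_lt hα
  rw [hmod]
  by_cases hma : m % b = α <;> by_cases hab : α = β <;>
    simp [hma, hab] <;> split_ifs <;> omega

lemma inner_B_ge (b α β m : ℕ) (hb : 2 ≤ b) (hα : α < b) (hβ : β < b) (hm : 1 ≤ m) :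
    (if α = β then 0 else (if occCount b α β m = 0 ∧ m % b = α then 1 else 0))
    ≤ ∑ d ∈ Finset.range b,
        (if occCount b α β (b * m + d) = 1 ∧ ¬((b * m + d) % b = α) then 1 else 0) := by
  refine le_trans ?_ (Finset.single_le_sum (f := fun d =>
    (if occCount b α β (b * m + d) = 1 ∧ ¬((b * m + d) % b = α) then 1 else 0))
    (fun i _ => Nat.zero_le _) (Finset.mem_range.mpr hβ))
  rw [occ_step b α β m β hb hm hβ]
  have hmod : (b * m + β) % b = β := by
    rw [Nat.mul_add_mod]; exact Nat.mod_eq_of_lt hβ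
  rw [hmod]
  by_cases hab : α = β
  · simp [hab]
  · have hba : ¬(β = α) := fun h => hab h.symm
    by_cases hma : m % b = α <;> simp [hma, hab, hba] <;> split_ifs <;> omega

lemma inner_X_ge (b α β m : ℕ) (hb : 2 ≤ b) (hα : α < b) (hβ : β < b) (hm : 1 ≤ m) :
    (if occCount b α β m = 0 ∧ ¬(m % b = α) then 1 else 0)
    ≤ ∑ d ∈ Finset.range b,
        (if occCount b α β (b * m + d) = 0 ∧ (b * m + d) % b = α then 1 else 0) := by
  refine le_trans ?_ (Finset.single_le_sum (f := fun d =>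
    (if occCount b α β (b * m + d) = 0 ∧ (b * m + d) % b = α then 1 else 0))
    (fun i _ => Nat.zero_le _) (Finset.mem_range.mpr hα))
  rw [occ_step b α β m α hb hm hα]
  have hmod : (b * m + α) % b = α := by
    rw [Nat.mul_add_mod]; exact Nat.mod_eq_of_lt hα
  rw [hmod]
  by_cases hma : m % b = α <;> by_cases hab : α = β <;>
    simp [hma, hab] <;> split_ifs <;> omega

lemma A_ge (b α β : ℕ) (hb : 2 ≤ b) (hα : α < b) (hβ : β < b) (k : ℕ) :
    Bseq b α β k + (if α = β then Xseq b α β k else 0) ≤ Aseq b α β (k + 1) := by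
  rw [Aseq, sum_Isucc b hb, Bseq, Xseq]
  have : (if α = β then ∑ n ∈ Iset b k,
      (if occCount b α β n = 0 ∧ n % b = α then 1 else 0) else 0)
      = ∑ n ∈ Iset b k, (if α = β then
        (if occCount b α β n = 0 ∧ n % b = α then 1 else 0) else 0) := by
    split_ifs <;> simp
  rw [this, ← Finset.sum_add_distrib]
  exact Finset.sum_le_sum fun m hm => inner_A_ge b α β m hb hα hβ (mem_Iset_pos hb hm)

lemma B_ge (b α β : ℕ) (hb : 2 ≤ b) (hα : α < b) (hβ : β < b) (k : ℕ) :
    (if α = β then 0 else Xseq b α β k) ≤ Bseq b α β (k + 1) := by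
  rw [Bseq, sum_Isucc b hb, Xseq]
  have : (if α = β then 0 else ∑ n ∈ Iset b k,
      (if occCount b α β n = 0 ∧ n % b = α then 1 else 0))
      = ∑ n ∈ Iset b k, (if α = β then 0 else
        (if occCount b α β n = 0 ∧ n % b = α then 1 else 0)) := by
    split_ifs <;> simp
  rw [this]
  exact Finset.sum_le_sum fun m hm => inner_B_ge b α β m hb hα hβ (mem_Iset_pos hb hm)

lemma X_ge (b α β : ℕ) (hb : 2 ≤ b) (hα : α < b) (hβ : β < b) (k : ℕ) :
    Yseq b α β k ≤ Xseq b α β (k + 1) := by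
  rw [Xseq, sum_Isucc b hb, Yseq]
  exact Finset.sum_le_sum fun m hm => inner_X_ge b α β m hb hα hβ (mem_Iset_pos hb hm)

lemma M_split (b α β k : ℕ) :
    Mseq b α β k = Xseq b α β k + Yseq b α β k + Aseq b α β k + Bseq b α β k := by
  rw [Mseq, Xseq, Yseq, Aseq, Bseq, ← Finset.sum_add_distrib, ← Finset.sum_add_distrib,
    ← Finset.sum_add_distrib]
  exact Finset.sum_congr rfl fun n _ => by split_ifs <;> omega

lemma M_chain (b α β : ℕ) (hb : 2 ≤ b) (hα : α < b) (hβ : β < b) (k : ℕ) :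
    Mseq b α β k ≤ Aseq b α β k + Aseq b α β (k + 1) + Aseq b α β (k + 2)
      + Aseq b α β (k + 3) := by
  have hA1 := A_ge b α β hb hα hβ k
  have hA2 := A_ge b α β hb hα hβ (k + 1)
  have hA3 := A_ge b α β hb hα hβ (k + 2)
  have hB1 := B_ge b α β hb hα hβ k
  have hB2 := B_ge b α β hb hα hβ (k + 1)
  have hX1 := X_ge b α β hb hα hβ k
  have hX2 := X_ge b α β hb hα hβ (k + 1)
  have n2 : k + 1 + 1 = k + 2 := by omega
  have n3 : k + 2 + 1 = k + 3 := by omega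
  rw [n2] at hA2 hB2 hX2
  rw [n3] at hA3
  rw [M_split]
  by_cases hab : α = β <;> simp only [hab, if_true, if_false, ite_true, ite_false] at * <;>
    omega

lemma M_four (b α β : ℕ) (hb : 2 ≤ b) (hα : α < b) (hβ : β < b) (k : ℕ) :
    Mseq b α β (k + 4) + Mseq b α β k ≤ b ^ 4 * Mseq b α β k := by
  have h0 := M_rec b α β hb hα hβ k
  have h1 := M_rec b α β hb hα hβ (k + 1)
  have h2 := M_rec b α β hb hα hβ (k + 2)
  have h3 := M_rec b α β hb hα hβ (k + 3)
  have hc := M_chain b α β hb hα hβ k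
  have e4 : b ^ 4 * Mseq b α β k =
      Mseq b α β (k + 4) + Aseq b α β (k + 3) + b * Aseq b α β (k + 2)
        + b ^ 2 * Aseq b α β (k + 1) + b ^ 3 * Aseq b α β k := by
    have : b ^ 4 * Mseq b α β k = b ^ 3 * (b * Mseq b α β k) := by ring
    rw [this, ← h0]
    have : b ^ 3 * (Mseq b α β (k+1) + Aseq b α β k)
        = b ^ 2 * (b * Mseq b α β (k+1)) + b ^ 3 * Aseq b α β k := by ring
    rw [this, ← h1]
    have : b ^ 2 * (Mseq b α β (k+2) + Aseq b α β (k+1)) + b ^ 3 * Aseq b α β k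
        = b * (b * Mseq b α β (k+2)) + b ^ 2 * Aseq b α β (k+1) + b ^ 3 * Aseq b α β k := by
      ring
    rw [this, ← h2]
    have : b * (Mseq b α β (k+3) + Aseq b α β (k+2)) + b ^ 2 * Aseq b α β (k+1)
          + b ^ 3 * Aseq b α β k
        = (b * Mseq b α β (k+3)) + b * Aseq b α β (k+2) + b ^ 2 * Aseq b α β (k+1)
          + b ^ 3 * Aseq b α β k := by ring
    rw [this, ← h3]
  have hb1 : 1 ≤ b := by omega
  have c1 : Aseq b α β (k+2) ≤ b * Aseq b α β (k+2) := Nat.le_mul_of_pos_left _ (by omega)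
  have c2 : Aseq b α β (k+1) ≤ b ^ 2 * Aseq b α β (k+1) :=
    Nat.le_mul_of_pos_left _ (by positivity)
  have c3 : Aseq b α β k ≤ b ^ 3 * Aseq b α β k :=
    Nat.le_mul_of_pos_left _ (by positivity)
  omega

lemma M_decay (b α β : ℕ) (hb : 2 ≤ b) (hα : α < b) (hβ : β < b) (k : ℕ) :
    Mseq b α β k ≤ b ^ 4 * (b ^ 4 - 1) ^ (k / 4) := by
  induction k using Nat.strong_induction_on with
  | _ k ih =>
    rcases lt_or_ge k 4 with hk | hk
    · have hMle : Mseq b α β k ≤ b ^ (k + 1) := by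
        have : Mseq b α β k ≤ ∑ n ∈ Iset b k, 1 := by
          rw [Mseq]
          exact Finset.sum_le_sum fun n _ => by split_ifs <;> omega
        rw [Finset.sum_const, smul_eq_mul, mul_one] at this
        calc Mseq b α β k ≤ (Iset b k).card := this
          _ ≤ b ^ (k + 1) := by
            rw [Iset, Nat.card_Ico]; omega
      have hkd : k / 4 = 0 := by omega
      rw [hkd, pow_zero, mul_one]
      calc Mseq b α β k ≤ b ^ (k + 1) := hMle
        _ ≤ b ^ 4 := Nat.pow_le_pow_right (by omega) (by omega)
    · obtain ⟨j, rfl⟩ : ∃ j, k = j + 4 := ⟨k - 4, by omega⟩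
      have h4 := M_four b α β hb hα hβ j
      have hj := ih j (by omega)
      have hd : (j + 4) / 4 = j / 4 + 1 := by omega
      have hb4 : 0 < b ^ 4 := Nat.pow_pos (by omega)
      have hexp : (b ^ 4 - 1) * Mseq b α β j + Mseq b α β j = b ^ 4 * Mseq b α β j := by
        rw [Nat.sub_one_mul]
        exact Nat.sub_add_cancel (Nat.le_mul_of_pos_left _ hb4)
      calc Mseq b α β (j + 4) ≤ (b ^ 4 - 1) * Mseq b α β j := by omega
        _ ≤ (b ^ 4 - 1) * (b ^ 4 * (b ^ 4 - 1) ^ (j / 4)) :=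
            Nat.mul_le_mul_left _ hj
        _ = b ^ 4 * (b ^ 4 - 1) ^ (j / 4 + 1) := by ring
        _ = b ^ 4 * (b ^ 4 - 1) ^ ((j + 4) / 4) := by rw [hd]

lemma L_zero (b α β : ℕ) (hb : 2 ≤ b) : Lseq b α β 0 = (b - 1) * (b * b) := by
  have hI : Iset b 0 = Finset.Ico 1 b := by rw [Iset, pow_zero, pow_one]
  rw [Lseq, hI]
  have key : ∀ n ∈ Finset.Ico 1 b, gcoef b α β n = b * b := by
    intro n hn
    simp only [Finset.mem_Ico] at hn
    rw [gcoef, if_pos (occ_single b α β n hb hn.2)]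
  rw [Finset.sum_congr rfl key, Finset.sum_const, Nat.card_Ico, smul_eq_mul]

lemma L_le_M (b α β : ℕ) (hb : 2 ≤ b) (k : ℕ) :
    Lseq b α β k ≤ (b * b + b) * Mseq b α β k := by
  have hb2 : b ≤ b * b := Nat.le_mul_of_pos_left b (by omega)
  rw [Lseq, Mseq, Finset.mul_sum]
  refine Finset.sum_le_sum fun n _ => ?_
  rw [gcoef]
  split_ifs <;> omega

lemma T_le_M (b α β : ℕ) (k : ℕ) : Tseq b α β k ≤ Mseq b α β k := by
  rw [Tseq, Mseq]
  exact Finset.sum_le_sum fun n _ => by split_ifs <;> omega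

noncomputable def ell (b α β : ℕ) (k : ℕ) : ℝ := (Lseq b α β k : ℝ) / (b : ℝ) ^ k

lemma ell_nonneg (b α β k : ℕ) (hb : 2 ≤ b) : 0 ≤ ell b α β k := by
  apply div_nonneg (Nat.cast_nonneg _)
  positivity

lemma ell_rec (b α β : ℕ) (hb : 2 ≤ b) (hα : α < b) (hβ : β < b) (k : ℕ) :
    ell b α β k - ell b α β (k + 1) = (Tseq b α β k : ℝ) / (b : ℝ) ^ k := by
  have hbR : (0 : ℝ) < (b : ℝ) := by positivity
  have hpk : (0 : ℝ) < (b : ℝ) ^ k := by positivity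
  have hc : ((Lseq b α β (k + 1) : ℝ)) + (b : ℝ) * (Tseq b α β k : ℝ)
      = (b : ℝ) * (Lseq b α β k : ℝ) := by
    exact_mod_cast congrArg (Nat.cast : ℕ → ℝ) (L_rec b α β hb hα hβ k)
  have h2 : ((Lseq b α β (k + 1) : ℝ)) = (b : ℝ) * (Lseq b α β k : ℝ)
      - (b : ℝ) * (Tseq b α β k : ℝ) := by linarith
  rw [ell, ell, pow_succ, h2]
  field_simp
  ring

lemma ell_zero (b α β : ℕ) (hb : 2 ≤ b) :
    ell b α β 0 = (b : ℝ) * ((b : ℝ) * ((b : ℝ) - 1)) := by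
  rw [ell, pow_zero, div_one, L_zero b α β hb]
  have h1 : (1 : ℕ) ≤ b := by omega
  push_cast [Nat.cast_sub h1]
  ring

lemma sum_T_range (b α β : ℕ) (hb : 2 ≤ b) (hα : α < b) (hβ : β < b) (K : ℕ) :
    ∑ k ∈ Finset.range K, (Tseq b α β k : ℝ) / (b : ℝ) ^ k
      = ell b α β 0 - ell b α β K := by
  rw [← Finset.sum_range_sub' (ell b α β) K]
  exact Finset.sum_congr rfl fun k _ => (ell_rec b α β hb hα hβ k).symm

lemma ell_le (b α β : ℕ) (hb : 2 ≤ b) (hα : α < b) (hβ : β < b) (k : ℕ) :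
    ell b α β k ≤ ((b * b + b : ℕ) : ℝ) * (b ^ 4 : ℕ) *
      (((b ^ 4 - 1 : ℕ) : ℝ) / ((b ^ 4 : ℕ) : ℝ)) ^ (k / 4) := by
  have hbR : (0 : ℝ) < (b : ℝ) := by positivity
  have hpk : (0 : ℝ) < (b : ℝ) ^ k := by positivity
  have h4 : (0 : ℝ) < ((b ^ 4 : ℕ) : ℝ) := by positivity
  have hL : (Lseq b α β k : ℝ) ≤ ((b * b + b : ℕ) : ℝ) * ((b ^ 4 : ℕ) : ℝ)
      * ((b ^ 4 - 1 : ℕ) : ℝ) ^ (k / 4) := by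
    have h1 : Lseq b α β k ≤ (b * b + b) * (b ^ 4 * (b ^ 4 - 1) ^ (k / 4)) :=
      le_trans (L_le_M b α β hb k)
        (Nat.mul_le_mul_left _ (M_decay b α β hb hα hβ k))
    calc (Lseq b α β k : ℝ) ≤ (((b * b + b) * (b ^ 4 * (b ^ 4 - 1) ^ (k / 4)) : ℕ) : ℝ) := by
          exact_mod_cast h1
      _ = ((b * b + b : ℕ) : ℝ) * ((b ^ 4 : ℕ) : ℝ) * ((b ^ 4 - 1 : ℕ) : ℝ) ^ (k / 4) := by
          push_cast; ring
  have hpow : ((b ^ 4 : ℕ) : ℝ) ^ (k / 4) ≤ (b : ℝ) ^ k := by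
    have : ((b ^ 4 : ℕ) : ℝ) ^ (k / 4) = (b : ℝ) ^ (4 * (k / 4)) := by
      push_cast
      rw [← pow_mul]
    rw [this]
    exact pow_le_pow_right₀ (by exact_mod_cast (by omega : 1 ≤ b)) (by omega)
  rw [ell, div_le_iff₀ hpk]
  calc (Lseq b α β k : ℝ)
      ≤ ((b * b + b : ℕ) : ℝ) * ((b ^ 4 : ℕ) : ℝ) * ((b ^ 4 - 1 : ℕ) : ℝ) ^ (k / 4) := hL
    _ = ((b * b + b : ℕ) : ℝ) * ((b ^ 4 : ℕ) : ℝ)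
        * (((b ^ 4 - 1 : ℕ) : ℝ) / ((b ^ 4 : ℕ) : ℝ)) ^ (k / 4) * ((b ^ 4 : ℕ) : ℝ) ^ (k / 4) := by
        rw [div_pow]
        field_simp
    _ ≤ ((b * b + b : ℕ) : ℝ) * ((b ^ 4 : ℕ) : ℝ)
        * (((b ^ 4 - 1 : ℕ) : ℝ) / ((b ^ 4 : ℕ) : ℝ)) ^ (k / 4) * (b : ℝ) ^ k := by
        apply mul_le_mul_of_nonneg_left hpow
        positivity

lemma ell_tendsto_zero (b α β : ℕ) (hb : 2 ≤ b) (hα : α < b) (hβ : β < b) :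
    Filter.Tendsto (ell b α β) Filter.atTop (nhds 0) := by
  set r : ℝ := ((b ^ 4 - 1 : ℕ) : ℝ) / ((b ^ 4 : ℕ) : ℝ) with hr
  have h4 : (0 : ℝ) < ((b ^ 4 : ℕ) : ℝ) := by positivity
  have hr0 : 0 ≤ r := by positivity
  have hr1 : r < 1 := by
    rw [hr, div_lt_one h4]
    have : b ^ 4 - 1 < b ^ 4 := by
      have : 0 < b ^ 4 := Nat.pow_pos (by omega)
      omega
    exact_mod_cast this
  have hdiv : Filter.Tendsto (fun k : ℕ => k / 4) Filter.atTop Filter.atTop := by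
    apply Filter.tendsto_atTop_atTop.mpr
    intro j
    exact ⟨4 * j, fun a ha => (Nat.le_div_iff_mul_le (by norm_num)).mpr (by omega)⟩
  have hpow : Filter.Tendsto (fun k : ℕ => r ^ (k / 4)) Filter.atTop (nhds 0) :=
    (tendsto_pow_atTop_nhds_zero_of_lt_one hr0 hr1).comp hdiv
  have hbig : Filter.Tendsto
      (fun k : ℕ => ((b * b + b : ℕ) : ℝ) * ((b ^ 4 : ℕ) : ℝ) * r ^ (k / 4))
      Filter.atTop (nhds 0) := by
    have := hpow.const_mul (((b * b + b : ℕ) : ℝ) * ((b ^ 4 : ℕ) : ℝ))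
    simpa using this
  apply squeeze_zero (fun k => ell_nonneg b α β k hb) (fun k => ell_le b α β hb hα hβ k) hbig

lemma sum_f_le (b α β : ℕ) (hb : 2 ≤ b) (k : ℕ) :
    ∑ n ∈ Iset b k, (if 0 < n ∧ occCount b α β n = 1 then (1 : ℝ) / n else 0)
      ≤ (Tseq b α β k : ℝ) / (b : ℝ) ^ k := by
  rw [Tseq, Nat.cast_sum, Finset.sum_div]
  apply Finset.sum_le_sum
  intro n hn
  simp only [Iset, Finset.mem_Ico] at hn
  have hn1 : 1 ≤ n := le_trans (Nat.one_le_pow _ _ (by omega)) hn.1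
  have hbk : (0 : ℝ) < (b : ℝ) ^ k := by positivity
  by_cases ho : occCount b α β n = 1
  · rw [if_pos ⟨hn1, ho⟩, if_pos ho, Nat.cast_one]
    rw [div_le_div_iff₀ (by exact_mod_cast hn1) hbk, one_mul, one_mul]
    exact_mod_cast hn.1
  · rw [if_neg (fun h => ho h.2), if_neg ho, Nat.cast_zero, zero_div]

lemma sum_f_ge (b α β : ℕ) (hb : 2 ≤ b) (k : ℕ) :
    (Tseq b α β k : ℝ) / (b : ℝ) ^ (k + 1)
      ≤ ∑ n ∈ Iset b k, (if 0 < n ∧ occCount b α β n = 1 then (1 : ℝ) / n else 0) := by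
  rw [Tseq, Nat.cast_sum, Finset.sum_div]
  apply Finset.sum_le_sum
  intro n hn
  simp only [Iset, Finset.mem_Ico] at hn
  have hn1 : 1 ≤ n := le_trans (Nat.one_le_pow _ _ (by omega)) hn.1
  have hbk : (0 : ℝ) < (b : ℝ) ^ (k + 1) := by positivity
  by_cases ho : occCount b α β n = 1
  · rw [if_pos ho, if_pos (⟨hn1, ho⟩ : 0 < n ∧ occCount b α β n = 1), Nat.cast_one]
    rw [div_le_div_iff₀ hbk (by exact_mod_cast hn1), one_mul, one_mul]
    exact_mod_cast le_of_lt hn.2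
  · rw [if_neg ho, if_neg (fun h : 0 < n ∧ occCount b α β n = 1 => ho h.2),
      Nat.cast_zero, zero_div]

lemma sum_Ico_decomp (b α β : ℕ) (hb : 2 ≤ b) (K : ℕ) :
    ∑ n ∈ Finset.Ico 1 (b ^ K), (if 0 < n ∧ occCount b α β n = 1 then (1 : ℝ) / n else 0)
      = ∑ k ∈ Finset.range K, ∑ n ∈ Iset b k,
          (if 0 < n ∧ occCount b α β n = 1 then (1 : ℝ) / n else 0) := by
  induction K with
  | zero => simp
  | succ K ih =>
    rw [Finset.sum_range_succ, ← ih,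
      show Iset b K = Finset.Ico (b ^ K) (b ^ (K + 1)) from rfl]
    have h1 : (1 : ℕ) ≤ b ^ K := Nat.one_le_pow _ _ (by omega)
    have h2 : b ^ K ≤ b ^ (K + 1) := Nat.pow_le_pow_right (by omega) (by omega)
    rw [← Finset.sum_Ico_consecutive _ h1 h2]

theorem stmt_7 (b : ℕ) (hb : 2 ≤ b) (α β : ℕ) (hα : α < b) (hβ : β < b) :
    Summable (fun n : ℕ => if 0 < n ∧ occCount b α β n = 1 then (1 : ℝ) / n else 0) ∧
    (b : ℝ) * (b - 1) ≤
      ∑' n : ℕ, (if 0 < n ∧ occCount b α β n = 1 then (1 : ℝ) / n else 0) ∧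
    (∑' n : ℕ, (if 0 < n ∧ occCount b α β n = 1 then (1 : ℝ) / n else 0)) ≤
      b * ((b : ℝ) * (b - 1)) := by
  set f : ℕ → ℝ := fun n => if 0 < n ∧ occCount b α β n = 1 then (1 : ℝ) / n else 0 with hf
  have hf0 : ∀ n, 0 ≤ f n := by
    intro n
    rw [hf]
    dsimp only
    split_ifs with h
    · positivity
    · exact le_rfl
  have hell0 := ell_zero b α β hb
  have hIco_le : ∀ K, ∑ n ∈ Finset.Ico 1 (b ^ K), f n ≤ ell b α β 0 := by
    intro K
    rw [hf, sum_Ico_decomp b α β hb K]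
    calc ∑ k ∈ Finset.range K, ∑ n ∈ Iset b k,
          (if 0 < n ∧ occCount b α β n = 1 then (1 : ℝ) / n else 0)
        ≤ ∑ k ∈ Finset.range K, (Tseq b α β k : ℝ) / (b : ℝ) ^ k :=
          Finset.sum_le_sum fun k _ => sum_f_le b α β hb k
      _ = ell b α β 0 - ell b α β K := sum_T_range b α β hb hα hβ K
      _ ≤ ell b α β 0 := by linarith [ell_nonneg b α β K hb]
  have hrange : ∀ N, ∑ n ∈ Finset.range N, f n ≤ ell b α β 0 := by
    intro N
    have hNb : N < b ^ N := Nat.lt_pow_self (by omega : 1 < b)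
    have hpos : 0 < b ^ N := Nat.pow_pos (by omega)
    calc ∑ n ∈ Finset.range N, f n
        ≤ ∑ n ∈ Finset.range (b ^ N), f n :=
          Finset.sum_le_sum_of_subset_of_nonneg
            (Finset.range_subset_range.mpr (le_of_lt hNb)) (fun i _ _ => hf0 i)
      _ = ∑ n ∈ Finset.Ico 1 (b ^ N), f n := by
          rw [Finset.range_eq_Ico, Finset.sum_eq_sum_Ico_succ_bot hpos]
          have : f 0 = 0 := by rw [hf]; simp
          rw [this, zero_add]
      _ ≤ ell b α β 0 := hIco_le N
  have hsummable : Summable f := summable_of_sum_range_le hf0 hrange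
  have hupper : tsum f ≤ ell b α β 0 := Summable.tsum_le_of_sum_range_le hsummable hrange
  have hlower : ∀ K, (ell b α β 0 - ell b α β K) / (b : ℝ) ≤ tsum f := by
    intro K
    have hstep : ∀ k : ℕ, (Tseq b α β k : ℝ) / (b : ℝ) ^ (k + 1)
        = ((Tseq b α β k : ℝ) / (b : ℝ) ^ k) / (b : ℝ) := by
      intro k
      rw [pow_succ, ← div_div]
    calc (ell b α β 0 - ell b α β K) / (b : ℝ)
        = ∑ k ∈ Finset.range K, (Tseq b α β k : ℝ) / (b : ℝ) ^ (k + 1) := by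
          rw [Finset.sum_congr rfl fun k _ => hstep k, ← Finset.sum_div,
            sum_T_range b α β hb hα hβ K]
      _ ≤ ∑ k ∈ Finset.range K, ∑ n ∈ Iset b k,
            (if 0 < n ∧ occCount b α β n = 1 then (1 : ℝ) / n else 0) :=
          Finset.sum_le_sum fun k _ => sum_f_ge b α β hb k
      _ = ∑ n ∈ Finset.Ico 1 (b ^ K), f n := by
          rw [hf, sum_Ico_decomp b α β hb K]
      _ ≤ tsum f := Summable.sum_le_tsum _ (fun i _ => hf0 i) hsummable
  have htends : Filter.Tendsto (fun K => (ell b α β 0 - ell b α β K) / (b : ℝ))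
      Filter.atTop (nhds ((b : ℝ) * ((b : ℝ) - 1))) := by
    have h1 : Filter.Tendsto (fun K => ell b α β 0 - ell b α β K)
        Filter.atTop (nhds (ell b α β 0 - 0)) :=
      tendsto_const_nhds.sub (ell_tendsto_zero b α β hb hα hβ)
    have h2 := h1.div_const (b : ℝ)
    have h3 : (ell b α β 0 - 0) / (b : ℝ) = (b : ℝ) * ((b : ℝ) - 1) := by
      have hbne : (b : ℝ) ≠ 0 := by positivity
      rw [sub_zero, hell0, mul_div_cancel_left₀ _ hbne]
    rw [h3] at h2
    exact h2
  have hlow : (b : ℝ) * ((b : ℝ) - 1) ≤ tsum f :=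
    le_of_tendsto htends (Filter.Eventually.of_forall hlower)
  refine ⟨hsummable, hlow, ?_⟩
  rw [← hell0]
  exact hupper
end

section
/- Let b ≥ 2 and α ≠ β digits in base b. Let μ be the measure on [0,1) assigning weight b^{-l} to n(X)/b^l for each length-l string X avoiding αβ. Then for every bounded measurable function g on [0,1): ∫ g dμ = g(0) + (1/b)·Σ_{d=0}^{b-1} ∫ g((d+x)/b) dμ(x) − (1/b²)·∫ g((αb+β+x)/b²) dμ(x). -/
open MeasureTheory

/-- The integer whose base-`b` digit string (leading digit first, possibly with
leading zeros) is `s`. -/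
def strVal (b : ℕ) (s : List (Fin b)) : ℕ := s.foldl (fun a d => a * b + d.val) 0

/-- The measure on `[0,1) ⊆ ℝ` assigning weight `b^{-l}` to `n(X)/b^l` for each
string `X` of length `l` over `Fin b` avoiding the contiguous pattern `αβ`. -/
noncomputable def mu (b : ℕ) (α β : Fin b) : Measure ℝ :=
  Measure.sum (fun s : {s : List (Fin b) // ¬ [α, β] <:+: s} =>
    ((b : ENNReal) ^ s.1.length)⁻¹ •
      Measure.dirac ((strVal b s.1 : ℝ) / (b : ℝ) ^ s.1.length))

namespace Stmt9Aux

variable {b : ℕ} {α β : Fin b}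

lemma avoid_tail {d : Fin b} {s : List (Fin b)}
    (h : ¬ [α, β] <:+: (d :: s)) : ¬ [α, β] <:+: s :=
  fun hs => h (List.infix_cons_iff.2 (Or.inr hs))

lemma not_avoid_cons {d : Fin b} {s : List (Fin b)} (hs : ¬ [α, β] <:+: s)
    (h : [α, β] <:+: (d :: s)) : d = α ∧ ∃ t, s = β :: t := by
  rcases List.infix_cons_iff.1 h with h | h
  · rw [List.cons_prefix_cons] at h
    obtain ⟨h1, h2⟩ := h
    obtain ⟨u, hu⟩ := h2
    exact ⟨h1.symm, u, by simpa using hu.symm⟩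
  · exact absurd h hs

lemma avoid_beta_cons (hαβ : α ≠ β) {t : List (Fin b)}
    (ht : ¬ [α, β] <:+: t) : ¬ [α, β] <:+: (β :: t) := by
  intro h
  rcases List.infix_cons_iff.1 h with h | h
  · rw [List.cons_prefix_cons] at h
    exact hαβ h.1
  · exact ht h

lemma avoid_nil : ¬ [α, β] <:+: ([] : List (Fin b)) := by simp

abbrev Avoid (b : ℕ) (α β : Fin b) : Type := {s : List (Fin b) // ¬ [α, β] <:+: s}

def Qset (b : ℕ) (α β : Fin b) : Set (Fin b × Avoid b α β) :=
  {p | ¬ [α, β] <:+: (p.1 :: p.2.1)}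

def Eset (b : ℕ) (α β : Fin b) : Set (Avoid b α β) := {s | s.1 = []}

noncomputable def e1 : ↥(Qset b α β) ≃ ↥(Eset b α β)ᶜ :=
  Equiv.ofBijective
    (fun q => ⟨⟨q.1.1 :: q.1.2.1, q.2⟩, by simp [Eset]⟩)
    (by
      constructor
      · rintro ⟨⟨d, s, hs⟩, hq⟩ ⟨⟨d', s', hs'⟩, hq'⟩ h
        simp only [Subtype.mk.injEq, List.cons.injEq] at h
        obtain ⟨h1, h2⟩ := h
        simp_all
      · rintro ⟨⟨s, hs⟩, hne⟩
        match s, hs, hne with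
        | [], hs, hne => exact absurd rfl hne
        | d :: t, hs, hne =>
          exact ⟨⟨(d, ⟨t, avoid_tail hs⟩), hs⟩, rfl⟩)

noncomputable def e2 (hαβ : α ≠ β) : Avoid b α β ≃ ↥(Qset b α β)ᶜ :=
  Equiv.ofBijective
    (fun t => ⟨(α, ⟨β :: t.1, avoid_beta_cons hαβ t.2⟩), by
      simp only [Set.mem_compl_iff, Qset, Set.mem_setOf_eq, not_not]
      exact List.IsPrefix.isInfix ⟨t.1, rfl⟩⟩)
    (by
      constructor
      · rintro ⟨t, ht⟩ ⟨t', ht'⟩ h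
        simp only [Subtype.mk.injEq, Prod.mk.injEq, List.cons.injEq, true_and] at h
        simp_all
      · rintro ⟨⟨d, s, hs⟩, hq⟩
        simp only [Set.mem_compl_iff, Qset, Set.mem_setOf_eq, not_not] at hq
        obtain ⟨hd, t, ht⟩ := not_avoid_cons hs hq
        subst hd
        subst ht
        exact ⟨⟨t, avoid_tail hs⟩, rfl⟩)

set_option maxHeartbeats 1000000 in
lemma tsum_split {M : Type*} [AddCommMonoid M] [TopologicalSpace M] [T2Space M]
    [ContinuousAdd M] (hαβ : α ≠ β)
    (f : Avoid b α β → M) (H : Fin b × Avoid b α β → M)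
    (hfE : Summable (f ∘ (Subtype.val : ↥(Eset b α β) → _)))
    (hfEc : Summable (f ∘ (Subtype.val : ↥(Eset b α β)ᶜ → _)))
    (hHQ : Summable (H ∘ (Subtype.val : ↥(Qset b α β) → _)))
    (hHQc : Summable (H ∘ (Subtype.val : ↥(Qset b α β)ᶜ → _)))
    (hfH : ∀ p : Fin b × Avoid b α β, (h : ¬ [α, β] <:+: (p.1 :: p.2.1)) →
      H p = f ⟨p.1 :: p.2.1, h⟩) :
    ∑' s, f s + ∑' t : Avoid b α β, H (α, ⟨β :: t.1, avoid_beta_cons hαβ t.2⟩)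
      = f ⟨[], avoid_nil⟩ + ∑' p, H p := by
  have h1 : ∑' p : ↥(Qset b α β), H p + ∑' p : ↥(Qset b α β)ᶜ, H p = ∑' p, H p :=
    Summable.tsum_add_tsum_compl hHQ hHQc
  have key2 : ∀ t : Avoid b α β, ((e2 (b := b) hαβ) t : Fin b × Avoid b α β)
      = (α, ⟨β :: t.1, avoid_beta_cons hαβ t.2⟩) := fun t => rfl
  have h2 : ∑' t : Avoid b α β, H (α, ⟨β :: t.1, avoid_beta_cons hαβ t.2⟩)
      = ∑' p : ↥(Qset b α β)ᶜ, H p := by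
    rw [← (e2 (b := b) hαβ).tsum_eq (fun p : ↥(Qset b α β)ᶜ => (H p : M))]
    exact tsum_congr fun t => by rw [key2]
  have key1 : ∀ q : ↥(Qset b α β), ((e1 q : Avoid b α β) : List (Fin b))
      = q.1.1 :: q.1.2.1 := fun q => rfl
  have h3' : ∑' q : ↥(Qset b α β), H q = ∑' s : ↥(Eset b α β)ᶜ, f s := by
    rw [← e1.tsum_eq (fun s : ↥(Eset b α β)ᶜ => (f s : M))]
    refine tsum_congr fun q => ?_
    exact (hfH q.1 q.2).symm ▸ congrArg f (Subtype.ext (key1 q)).symm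
  have h4 : ∑' s : ↥(Eset b α β), f s + ∑' s : ↥(Eset b α β)ᶜ, f s = ∑' s, f s :=
    Summable.tsum_add_tsum_compl hfE hfEc
  have h5 : ∑' s : ↥(Eset b α β), f s = f ⟨[], avoid_nil⟩ := by
    refine tsum_eq_single (⟨⟨[], avoid_nil⟩, rfl⟩ : ↥(Eset b α β)) ?_
    rintro ⟨⟨s, hs⟩, he⟩ hne
    exact absurd (by apply Subtype.ext; apply Subtype.ext; exact he) hne
  rw [h2, ← h1, h3', ← h4, h5, add_assoc]


section Mass

variable (b) (α β)

noncomputable def wE (s : Avoid b α β) : ENNReal := ((b : ENNReal) ^ s.1.length)⁻¹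

noncomputable def Mm (n : ℕ) : ENNReal :=
  ∑' s : Avoid b α β, if s.1.length < n then wE b α β s else 0

variable {b α β}

lemma wE_ne_top (hb : 2 ≤ b) (s : Avoid b α β) : wE b α β s ≠ ⊤ :=
  ENNReal.inv_ne_top.2 (pow_ne_zero _ (Nat.cast_ne_zero.2 (by omega)))

lemma Mm_zero : Mm b α β 0 = 0 := by simp [Mm]

lemma Mm_one : Mm b α β 1 = 1 := by
  rw [Mm, tsum_eq_single (⟨[], avoid_nil⟩ : Avoid b α β)]
  · simp [wE]
  · rintro ⟨s, hs⟩ hne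
    rw [if_neg]
    intro hlen
    apply hne
    apply Subtype.ext
    exact List.length_eq_zero_iff.1 (Nat.lt_one_iff.1 hlen)

lemma Mm_mono (n : ℕ) : Mm b α β n ≤ Mm b α β (n + 1) := by
  apply ENNReal.tsum_le_tsum
  intro s
  by_cases h1 : s.1.length < n
  · rw [if_pos h1, if_pos (h1.trans (Nat.lt_succ_self n))]
  · rw [if_neg h1]
    exact zero_le

lemma Mm_key (hb : 2 ≤ b) (hαβ : α ≠ β) (n : ℕ) :
    Mm b α β (n + 2) + ((b : ENNReal) ^ 2)⁻¹ * Mm b α β n = 1 + Mm b α β (n + 1) := by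
  have hb0 : (b : ENNReal) ≠ 0 := by
    simpa using by omega
  have hbt : (b : ENNReal) ≠ ⊤ := ENNReal.natCast_ne_top b
  set f : Avoid b α β → ENNReal :=
    fun s => if s.1.length < n + 2 then wE b α β s else 0 with hf
  set H : Fin b × Avoid b α β → ENNReal :=
    fun p => if p.2.1.length < n + 1 then (b : ENNReal)⁻¹ * wE b α β p.2 else 0 with hH
  have hfH : ∀ p : Fin b × Avoid b α β, (h : ¬ [α, β] <:+: (p.1 :: p.2.1)) →
      H p = f ⟨p.1 :: p.2.1, h⟩ := by
    rintro ⟨d, s⟩ h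
    simp only [hf, hH, wE, List.length_cons]
    by_cases hc : s.1.length < n + 1
    · rw [if_pos hc, if_pos (by omega)]
      rw [pow_succ, ENNReal.mul_inv (Or.inl (pow_ne_zero _ hb0)) (Or.inl (ENNReal.pow_ne_top hbt))]
      ring
    · rw [if_neg hc, if_neg (by omega)]
  have split := tsum_split hαβ f H ENNReal.summable ENNReal.summable
    ENNReal.summable ENNReal.summable hfH
  have e_f : ∑' s, f s = Mm b α β (n + 2) := rfl
  have e_nil : f ⟨[], avoid_nil⟩ = 1 := by simp [hf, wE]
  have e_beta : ∑' t : Avoid b α β, H (α, ⟨β :: t.1, avoid_beta_cons hαβ t.2⟩)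
      = ((b : ENNReal) ^ 2)⁻¹ * Mm b α β n := by
    rw [Mm, ← ENNReal.tsum_mul_left]
    apply tsum_congr
    intro t
    simp only [hH, wE, List.length_cons, mul_ite, mul_zero]
    by_cases hc : t.1.length < n
    · rw [if_pos (by omega : t.1.length + 1 < n + 1), if_pos hc]
      rw [pow_succ, ENNReal.mul_inv (Or.inl (pow_ne_zero _ hb0)) (Or.inl (ENNReal.pow_ne_top hbt)),
        sq, ENNReal.mul_inv (Or.inl hb0) (Or.inl hbt)]
      ring
    · rw [if_neg (by omega : ¬ (t.1.length + 1 < n + 1)), if_neg hc]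
  have e_H : ∑' p, H p = Mm b α β (n + 1) := by
    rw [ENNReal.tsum_prod', tsum_fintype]
    have inner : ∀ d : Fin b, ∑' s : Avoid b α β, H (d, s)
        = (b : ENNReal)⁻¹ * Mm b α β (n + 1) := by
      intro d
      rw [Mm, ← ENNReal.tsum_mul_left]
      apply tsum_congr
      intro s
      simp [hH, mul_ite]
    rw [Finset.sum_congr rfl (fun d _ => inner d), Finset.sum_const, Finset.card_univ,
      Fintype.card_fin, nsmul_eq_mul, ← mul_assoc, ENNReal.mul_inv_cancel hb0 hbt, one_mul]
  rw [e_f, e_nil, e_beta, e_H] at split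
  exact split

lemma Mm_ne_top (hb : 2 ≤ b) (hαβ : α ≠ β) : ∀ n, Mm b α β n ≠ ⊤ := by
  have h2 : ∀ n, Mm b α β n ≠ ⊤ → Mm b α β (n + 1) ≠ ⊤ → Mm b α β (n + 2) ≠ ⊤ := by
    intro n h0 h1
    have hk := Mm_key hb hαβ n
    have : Mm b α β (n + 2) ≤ 1 + Mm b α β (n + 1) := by
      rw [← hk]; exact le_self_add
    exact ne_top_of_le_ne_top (by simp [h1]) this
  intro n
  induction n using Nat.twoStepInduction with
  | zero => simp [Mm_zero]
  | one => simp [Mm_one]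
  | more n ih1 ih2 => exact h2 n ih1 ih2

lemma Mm_le (hb : 2 ≤ b) (hαβ : α ≠ β) (n : ℕ) : Mm b α β n ≤ (b : ENNReal) ^ 2 := by
  have hk := Mm_key hb hαβ n
  have hmono := Mm_mono (b := b) (α := α) (β := β) (n + 1)
  have hle : ((b : ENNReal) ^ 2)⁻¹ * Mm b α β n + Mm b α β (n + 2)
      ≤ 1 + Mm b α β (n + 2) := by
    rw [add_comm, hk]
    exact add_le_add_right hmono 1
  have hcancel : ((b : ENNReal) ^ 2)⁻¹ * Mm b α β n ≤ 1 :=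
    (ENNReal.add_le_add_iff_right (Mm_ne_top hb hαβ (n + 2))).1 hle
  have hb0 : (b : ENNReal) ≠ 0 := by simpa using by omega
  have hbt : (b : ENNReal) ≠ ⊤ := ENNReal.natCast_ne_top b
  calc Mm b α β n = 1 * Mm b α β n := (one_mul _).symm
    _ = (b : ENNReal) ^ 2 * ((b : ENNReal) ^ 2)⁻¹ * Mm b α β n := by
        rw [ENNReal.mul_inv_cancel (pow_ne_zero _ hb0) (ENNReal.pow_ne_top hbt)]
    _ = (b : ENNReal) ^ 2 * (((b : ENNReal) ^ 2)⁻¹ * Mm b α β n) := by rw [mul_assoc]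
    _ ≤ (b : ENNReal) ^ 2 * 1 := mul_le_mul_right hcancel _
    _ = (b : ENNReal) ^ 2 := mul_one _

lemma mass_le (hb : 2 ≤ b) (hαβ : α ≠ β) :
    ∑' s : Avoid b α β, wE b α β s ≤ (b : ENNReal) ^ 2 := by
  rw [ENNReal.tsum_eq_iSup_sum]
  apply iSup_le
  intro F
  set n := (F.sup fun s => s.1.length) + 1 with hn
  calc ∑ s ∈ F, wE b α β s
      = ∑ s ∈ F, (if s.1.length < n then wE b α β s else 0) := by
        apply Finset.sum_congr rfl
        intro s hs
        rw [if_pos]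
        exact Nat.lt_succ_of_le (Finset.le_sup (f := fun s : Avoid b α β => s.1.length) hs)
    _ ≤ Mm b α β n := ENNReal.sum_le_tsum F
    _ ≤ (b : ENNReal) ^ 2 := Mm_le hb hαβ n

lemma mass_ne_top (hb : 2 ≤ b) (hαβ : α ≠ β) :
    ∑' s : Avoid b α β, wE b α β s ≠ ⊤ :=
  ne_top_of_le_ne_top (by simp [ENNReal.pow_ne_top, ENNReal.natCast_ne_top]) (mass_le hb hαβ)

end Mass


section Integral

variable {b : ℕ} {α β : Fin b}

lemma foldl_gen (s : List (Fin b)) : ∀ a : ℕ,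
    s.foldl (fun a d => a * b + d.val) a = a * b ^ s.length + strVal b s := by
  induction s with
  | nil => intro a; simp [strVal]
  | cons d t ih =>
    intro a
    simp only [List.foldl_cons, List.length_cons, strVal]
    rw [ih (a * b + d.val)]
    rw [show List.foldl (fun a d => a * b + d.val) (0 * b + d.val) t
      = (0 * b + d.val) * b ^ t.length + strVal b t from ih _]
    rw [pow_succ]
    ring

lemma strVal_cons (d : Fin b) (s : List (Fin b)) :
    strVal b (d :: s) = d.val * b ^ s.length + strVal b s := by
  show List.foldl _ (0 * b + d.val) s = _
  rw [foldl_gen]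
  simp

lemma val_cons (hb : 2 ≤ b) (d : Fin b) (s : List (Fin b)) :
    (strVal b (d :: s) : ℝ) / (b : ℝ) ^ (d :: s).length
      = ((d.val : ℝ) + (strVal b s : ℝ) / (b : ℝ) ^ s.length) / b := by
  have hb0 : (b : ℝ) ≠ 0 := by
    have : (0:ℕ) < b := by omega
    exact_mod_cast this.ne'
  have hbp : (0:ℝ) < b := by positivity
  have hpp : (0:ℝ) < (b : ℝ) ^ s.length := by positivity
  rw [strVal_cons]
  push_cast
  rw [List.length_cons, pow_succ, div_eq_div_iff (by positivity) hb0]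
  field_simp

lemma isFiniteMeasure (hb : 2 ≤ b) (hαβ : α ≠ β) : IsFiniteMeasure (mu b α β) := by
  constructor
  rw [mu, Measure.sum_apply _ MeasurableSet.univ]
  have : ∀ s : Avoid b α β,
      (((b : ENNReal) ^ s.1.length)⁻¹ •
        Measure.dirac ((strVal b s.1 : ℝ) / (b : ℝ) ^ s.1.length)) Set.univ
      = wE b α β s := by
    intro s
    rw [Measure.smul_apply, measure_univ, smul_eq_mul, mul_one]
    rfl
  rw [tsum_congr this]
  exact lt_top_iff_ne_top.2 (mass_ne_top hb hαβ)

lemma integrable_of_bdd (hb : 2 ≤ b) (hαβ : α ≠ β) (h : ℝ → ℝ) (hm : Measurable h)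
    (C : ℝ) (hC : ∀ x, |h x| ≤ C) : Integrable h (mu b α β) := by
  haveI := isFiniteMeasure hb hαβ
  exact (integrable_const C).mono' hm.aestronglyMeasurable
    (Filter.Eventually.of_forall fun x => by simpa [Real.norm_eq_abs] using hC x)

lemma integral_rep (hb : 2 ≤ b) (hαβ : α ≠ β) (h : ℝ → ℝ) (hm : Measurable h)
    (C : ℝ) (hC : ∀ x, |h x| ≤ C) :
    ∫ x, h x ∂(mu b α β) = ∑' s : Avoid b α β,
      ((b : ℝ) ^ s.1.length)⁻¹ * h ((strVal b s.1 : ℝ) / (b : ℝ) ^ s.1.length) := by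
  haveI := isFiniteMeasure hb hαβ
  rw [show mu b α β = Measure.sum (fun s : Avoid b α β =>
    ((b : ENNReal) ^ s.1.length)⁻¹ •
      Measure.dirac ((strVal b s.1 : ℝ) / (b : ℝ) ^ s.1.length)) from rfl,
    integral_sum_measure (by
      rw [show Measure.sum (fun s : Avoid b α β =>
        ((b : ENNReal) ^ s.1.length)⁻¹ •
          Measure.dirac ((strVal b s.1 : ℝ) / (b : ℝ) ^ s.1.length)) = mu b α β from rfl]
      exact integrable_of_bdd hb hαβ h hm C hC)]
  apply tsum_congr
  intro s
  rw [integral_smul_measure, integral_dirac, smul_eq_mul]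
  congr 1
  simp [ENNReal.toReal_inv]

lemma summable_wR (hb : 2 ≤ b) (hαβ : α ≠ β) :
    Summable (fun s : Avoid b α β => ((b : ℝ) ^ s.1.length)⁻¹) := by
  have := ENNReal.summable_toReal (mass_ne_top hb hαβ)
  convert this using 2 with s
  rw [wE, ENNReal.toReal_inv]
  simp

lemma summable_rep (hb : 2 ≤ b) (hαβ : α ≠ β) (h : Avoid b α β → ℝ)
    (C : ℝ) (hC : ∀ x, |h x| ≤ C) :
    Summable (fun s : Avoid b α β => ((b : ℝ) ^ s.1.length)⁻¹ * h s) := by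
  have hw := summable_wR hb hαβ
  apply Summable.of_abs
  apply Summable.of_nonneg_of_le (fun s => abs_nonneg _) ?_ (hw.mul_left C)
  intro s
  rw [abs_mul, abs_of_nonneg (by positivity : (0:ℝ) ≤ ((b : ℝ) ^ s.1.length)⁻¹)]
  calc ((b : ℝ) ^ s.1.length)⁻¹ * |h s| ≤ ((b : ℝ) ^ s.1.length)⁻¹ * C := by
        apply mul_le_mul_of_nonneg_left (hC s) (by positivity)
    _ = C * ((b : ℝ) ^ s.1.length)⁻¹ := mul_comm _ _

end Integral

end Stmt9Aux

open Stmt9Aux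

theorem stmt_9 (b : ℕ) (hb : 2 ≤ b) (α β : Fin b) (hαβ : α ≠ β) (g : ℝ → ℝ)
    (hmeas : Measurable g) (hbdd : ∃ C : ℝ, ∀ x : ℝ, |g x| ≤ C) :
    ∫ x, g x ∂(mu b α β) =
      g 0 + (1 / b) * ∑ d ∈ Finset.range b, ∫ x, g (((d : ℝ) + x) / b) ∂(mu b α β)
        - (1 / (b : ℝ) ^ 2) *
            ∫ x, g (((α.val : ℝ) * b + β.val + x) / (b : ℝ) ^ 2) ∂(mu b α β) := by
  obtain ⟨C, hC⟩ := hbdd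
  have hC0 : 0 ≤ C := le_trans (abs_nonneg _) (hC 0)
  have hbn : (0:ℕ) < b := by omega
  have hbp : (0:ℝ) < (b:ℝ) := by exact_mod_cast hbn
  have hb0 : (b : ℝ) ≠ 0 := hbp.ne'
  haveI := isFiniteMeasure hb hαβ
  set f : Avoid b α β → ℝ :=
    fun s => ((b : ℝ) ^ s.1.length)⁻¹ * g ((strVal b s.1 : ℝ) / (b : ℝ) ^ s.1.length) with hf
  set H : Fin b × Avoid b α β → ℝ :=
    fun p => ((b : ℝ) ^ (p.2.1.length + 1))⁻¹ *
      g (((p.1.val : ℝ) + (strVal b p.2.1 : ℝ) / (b : ℝ) ^ p.2.1.length) / b) with hH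
  have sf : Summable f := summable_rep hb hαβ _ C (fun s => hC _)
  have sH : Summable H := by
    apply Summable.of_abs
    apply Summable.of_nonneg_of_le (fun p => abs_nonneg _)
      (f := fun p : Fin b × Avoid b α β => C * ((b:ℝ) ^ p.2.1.length)⁻¹) ?_ ?_
    · intro p
      rw [hH]
      simp only
      rw [abs_mul, abs_of_nonneg (by positivity : (0:ℝ) ≤ ((b : ℝ) ^ (p.2.1.length + 1))⁻¹)]
      calc ((b : ℝ) ^ (p.2.1.length + 1))⁻¹ * |g _|
          ≤ ((b : ℝ) ^ p.2.1.length)⁻¹ * C := by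
            apply mul_le_mul ?_ (hC _) (abs_nonneg _) (by positivity)
            apply inv_anti₀ (by positivity)
            apply pow_le_pow_right₀ (by exact_mod_cast hbn) (Nat.le_succ _)
        _ = C * ((b : ℝ) ^ p.2.1.length)⁻¹ := mul_comm _ _
    · refine (summable_prod_of_nonneg (fun p => by positivity)).2
        ⟨fun d => (summable_wR hb hαβ).mul_left C, ?_⟩
      exact Summable.of_finite
  have hfH : ∀ p : Fin b × Avoid b α β, (h : ¬ [α, β] <:+: (p.1 :: p.2.1)) →
      H p = f ⟨p.1 :: p.2.1, h⟩ := by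
    rintro ⟨d, s⟩ hcons
    rw [hH, hf]
    simp only
    rw [val_cons hb d s.1, List.length_cons]
  have split := tsum_split hαβ f H (sf.subtype _) (sf.subtype _)
    (sH.subtype _) (sH.subtype _) hfH
  have E1 : ∑' s, f s = ∫ x, g x ∂(mu b α β) :=
    (integral_rep hb hαβ g hmeas C hC).symm
  have E2 : f ⟨[], avoid_nil⟩ = g 0 := by
    rw [hf]
    simp only
    norm_num [strVal]
  have E3 : ∑' p, H p
      = (1 / (b:ℝ)) * ∑ d ∈ Finset.range b, ∫ x, g (((d : ℝ) + x) / b) ∂(mu b α β) := by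
    rw [Summable.tsum_prod sH, tsum_fintype]
    have inner : ∀ d : Fin b, ∑' s : Avoid b α β, H (d, s)
        = (1/(b:ℝ)) * ∫ x, g (((d.val : ℝ) + x)/b) ∂(mu b α β) := by
      intro d
      rw [integral_rep hb hαβ (fun x => g (((d.val : ℝ) + x)/b))
        (hmeas.comp ((measurable_const.add measurable_id).div_const _)) C (fun x => hC _)]
      rw [← tsum_mul_left]
      apply tsum_congr
      intro s
      rw [hH]
      simp only
      rw [pow_succ, mul_inv]
      ring
    rw [Finset.sum_congr rfl (fun d _ => inner d), ← Finset.mul_sum]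
    congr 1
    exact Fin.sum_univ_eq_sum_range (fun k => ∫ x, g (((k:ℝ)+x)/b) ∂(mu b α β)) b
  have E4 : ∑' t : Avoid b α β, H (α, ⟨β :: t.1, avoid_beta_cons hαβ t.2⟩)
      = (1/(b:ℝ)^2) * ∫ x, g (((α.val:ℝ)*b + β.val + x)/(b:ℝ)^2) ∂(mu b α β) := by
    rw [integral_rep hb hαβ (fun x => g (((α.val:ℝ)*b + β.val + x)/(b:ℝ)^2))
      (hmeas.comp ((measurable_const.add measurable_id).div_const _)) C (fun x => hC _)]
    rw [← tsum_mul_left]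
    apply tsum_congr
    intro t
    rw [hH]
    simp only
    have harg : ((α.val:ℝ) + (strVal b (β :: t.1) : ℝ) / (b:ℝ) ^ (β :: t.1).length) / b
        = ((α.val:ℝ)*b + (β.val:ℝ) + (strVal b t.1:ℝ)/(b:ℝ)^t.1.length) / (b:ℝ)^2 := by
      rw [val_cons hb β t.1]
      field_simp
      ring
    rw [harg, List.length_cons]
    rw [pow_succ, pow_succ, mul_inv, mul_inv]
    ring
  rw [E1, E2, E3, E4] at split
  linarith [split]
end

section
/- Let b ≥ 2, α ≠ β digits, and let U(n) = Σ 1/m where the sum is over integers m whose leading l(n) digits form the integer n and whose remaining trailing digit string contains no occurrence of αβ (l(n) = number of base-b digits of n). Then for every positive integer n: U(n) = 1/n + Σ_{d=0}^{b-1} U(n·b + d) − U(n·b² + α·b + β). -/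
/-- `m` is a positive integer whose leading digits form `n` and whose trailing digit
string (the digits after those of `n`) contains no contiguous occurrence of `αβ`. -/
def KeptU (b α β n m : ℕ) : Prop :=
  ∃ t : List ℕ, digitsBE b m = digitsBE b n ++ t ∧ ¬ [α, β] <:+: t

/-- `U n`: the sum of `1/m` over integers `m` whose leading digits form `n` and whose
trailing digit string avoids `αβ`. -/
noncomputable def U (b α β n : ℕ) : ℝ :=
  ∑' m : {m : ℕ // KeptU b α β n m}, (1 : ℝ) / (m : ℕ)




lemma digitsBE_mul_add {b : ℕ} (hb : 2 ≤ b) {n : ℕ} (hn : 0 < n) {d : ℕ} (hd : d < b) :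
    digitsBE b (n * b + d) = digitsBE b n ++ [d] := by
  have hpos : 0 < n * b + d := by positivity
  have h1 : (n * b + d) % b = d := by
    rw [add_comm, Nat.add_mul_mod_self_right, Nat.mod_eq_of_lt hd]
  have h2 : (n * b + d) / b = n := by
    rw [add_comm, Nat.add_mul_div_right _ _ (by omega : 0 < b), Nat.div_eq_of_lt hd]; omega
  unfold digitsBE
  rw [Nat.digits_def' (by omega : 1 < b) hpos, h1, h2, List.reverse_cons]

lemma digitsBE_inj {b m n : ℕ} (h : digitsBE b m = digitsBE b n) : m = n := by
  have : Nat.digits b m = Nat.digits b n := by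
    simpa [digitsBE] using congrArg List.reverse h
  rw [← Nat.ofDigits_digits b m, this, Nat.ofDigits_digits]

lemma le_of_digitsBE_append {b : ℕ} (hb : 2 ≤ b) {m n : ℕ} {t : List ℕ}
    (h : digitsBE b m = digitsBE b n ++ t) : n * b ^ t.length ≤ m := by
  have h2 : Nat.digits b m = t.reverse ++ Nat.digits b n := by
    have := congrArg List.reverse h
    simpa [digitsBE] using this
  have hm : m = Nat.ofDigits b t.reverse + b ^ t.length * n := by
    conv_lhs => rw [← Nat.ofDigits_digits b m, h2, Nat.ofDigits_append]
    simp [Nat.ofDigits_digits]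
  rw [mul_comm]; omega

lemma mem_lt_of_digitsBE_append {b : ℕ} (hb : 2 ≤ b) {m n : ℕ} {t : List ℕ}
    (h : digitsBE b m = digitsBE b n ++ t) : ∀ d ∈ t, d < b := by
  intro d hd
  have : d ∈ digitsBE b m := by rw [h]; exact List.mem_append_right _ hd
  exact Nat.digits_lt_base (by omega) (List.mem_reverse.mp this)

lemma digitsBE_bad {b : ℕ} (hb : 2 ≤ b) {n : ℕ} (hn : 0 < n) {α β : ℕ} (hα : α < b)
    (hβ : β < b) : digitsBE b (n * b ^ 2 + α * b + β) = digitsBE b n ++ [α, β] := by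
  have : n * b ^ 2 + α * b + β = (n * b + α) * b + β := by ring
  rw [this, digitsBE_mul_add hb (by positivity) hβ, digitsBE_mul_add hb hn hα]
  simp

def blists (b : ℕ) : ℕ → Finset (List ℕ)
  | 0 => {[]}
  | k + 1 => ((Finset.range b) ×ˢ blists b k).image (fun p => p.1 :: p.2)

lemma mem_blists {b k : ℕ} {t : List ℕ} :
    t ∈ blists b k ↔ t.length = k ∧ ∀ d ∈ t, d < b := by
  induction k generalizing t with
  | zero =>
    simp only [blists, Finset.mem_singleton]
    constructor
    · rintro rfl; simp
    · rintro ⟨hl, _⟩; exact List.length_eq_zero_iff.mp hl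
  | succ k ih =>
    simp only [blists, Finset.mem_image, Finset.mem_product, Finset.mem_range]
    constructor
    · rintro ⟨⟨x, s⟩, ⟨hx, hs⟩, rfl⟩
      obtain ⟨hl, hall⟩ := ih.mp hs
      refine ⟨by simp [hl], ?_⟩
      intro d hd
      rcases List.mem_cons.mp hd with rfl | hd
      · exact hx
      · exact hall d hd
    · rintro ⟨hl, hall⟩
      cases t with
      | nil => simp at hl
      | cons x s =>
        refine ⟨(x, s), ⟨hall x (by simp), ih.mpr ⟨by simpa using hl, fun d hd => hall d (by simp [hd])⟩⟩, rfl⟩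

noncomputable def avoidF (b α β k : ℕ) : Finset (List ℕ) :=
  (blists b k).filter (fun t => ¬ [α, β] <:+: t)

lemma mem_avoidF {b α β k : ℕ} {t : List ℕ} :
    t ∈ avoidF b α β k ↔ (t.length = k ∧ ∀ d ∈ t, d < b) ∧ ¬ [α, β] <:+: t := by
  classical
  simp [avoidF, mem_blists]

lemma card_avoidF_step {b α β : ℕ} (hα : α < b) (hβ : β < b) (k : ℕ) :
    (avoidF b α β (k + 2)).card ≤ (b * b - 1) * (avoidF b α β k).card := by
  classical
  have hcard : (((Finset.range b ×ˢ Finset.range b).erase (α, β)) ×ˢ avoidF b α β k).card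
      = (b * b - 1) * (avoidF b α β k).card := by
    rw [Finset.card_product, Finset.card_erase_of_mem (by simp [hα, hβ]), Finset.card_product,
      Finset.card_range]
  rw [← hcard]
  apply Finset.card_le_card_of_injOn (fun t => ((t.headI, t.tail.headI), t.tail.tail))
  · intro t ht
    obtain ⟨⟨hl, hall⟩, hav⟩ := mem_avoidF.mp ht
    obtain ⟨x, y, s, rfl⟩ : ∃ x y s, t = x :: y :: s := by
      match t, hl with
      | x :: y :: s, _ => exact ⟨x, y, s, rfl⟩
    simp only [Finset.mem_coe, List.headI, List.tail_cons, List.tail, Finset.mem_product, Finset.mem_erase]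
    refine ⟨⟨?_, by simp [hall x (by simp), hall y (by simp)]⟩, ?_⟩
    · intro he
      have : (x, y) = (α, β) := he
      apply hav
      rw [Prod.mk.injEq] at this
      obtain ⟨rfl, rfl⟩ := this
      exact ⟨[], s, by simp⟩
    · refine mem_avoidF.mpr ⟨⟨by simpa using hl, fun d hd => hall d (by simp [hd])⟩, ?_⟩
      intro hin
      exact hav (hin.trans ((List.suffix_cons y s).trans (List.suffix_cons x (y::s))).isInfix)
  · intro t ht t' ht' he
    obtain ⟨⟨hl, _⟩, _⟩ := mem_avoidF.mp (by simpa using ht)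
    obtain ⟨⟨hl', _⟩, _⟩ := mem_avoidF.mp (by simpa using ht')
    obtain ⟨x, y, s, rfl⟩ : ∃ x y s, t = x :: y :: s := by
      match t, hl with
      | x :: y :: s, _ => exact ⟨x, y, s, rfl⟩
    obtain ⟨x', y', s', rfl⟩ : ∃ x y s, t' = x :: y :: s := by
      match t', hl' with
      | x :: y :: s, _ => exact ⟨x, y, s, rfl⟩
    simp only [List.headI, List.tail_cons, Prod.mk.injEq] at he
    simp [he.1.1, he.1.2, he.2]

lemma card_blists_le {b : ℕ} : ∀ k, (blists b k).card ≤ b ^ k := by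
  intro k
  induction k with
  | zero =>
    have : (blists b 0) ⊆ {[]} := fun t ht => by
      simp [List.length_eq_zero_iff.mp (mem_blists.mp ht).1]
    simpa using Finset.card_le_card this
  | succ k ih =>
    have : (blists b (k+1)) ⊆ ((Finset.range b) ×ˢ blists b k).image (fun p => p.1 :: p.2) := by
      intro t ht
      obtain ⟨hl, hall⟩ := mem_blists.mp ht
      cases t with
      | nil => simp at hl
      | cons x s =>
        refine Finset.mem_image.mpr ⟨(x, s), Finset.mem_product.mpr ⟨by simp [hall x (by simp)], mem_blists.mpr ⟨by simpa using hl, fun d hd => hall d (by simp [hd])⟩⟩, rfl⟩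
    calc (blists b (k+1)).card ≤ _ := Finset.card_le_card this
    _ ≤ ((Finset.range b) ×ˢ blists b k).card := Finset.card_image_le
    _ = b * (blists b k).card := by rw [Finset.card_product, Finset.card_range]
    _ ≤ b * b ^ k := Nat.mul_le_mul_left b ih
    _ = b ^ (k+1) := by ring

lemma card_avoidF_le {b α β : ℕ} (hb : 2 ≤ b) (hα : α < b) (hβ : β < b) :
    ∀ k, (avoidF b α β k).card ≤ b ^ 2 * (b * b - 1) ^ (k / 2) := by
  intro k
  induction k using Nat.strong_induction_on with
  | _ k ih =>
    match k with
    | 0 =>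
      have h1 : (avoidF b α β 0).card ≤ 1 := by
        calc (avoidF b α β 0).card ≤ (blists b 0).card := Finset.card_le_card (Finset.filter_subset _ _)
        _ ≤ b ^ 0 := card_blists_le 0
        _ = 1 := pow_zero b
      calc (avoidF b α β 0).card ≤ 1 := h1
      _ ≤ b ^ 2 * (b*b-1) ^ (0/2) := by simp; nlinarith
    | 1 =>
      calc (avoidF b α β 1).card ≤ (blists b 1).card := Finset.card_le_card (Finset.filter_subset _ _)
      _ ≤ b ^ 1 := card_blists_le 1
      _ ≤ b ^ 2 * (b*b-1) ^ (1/2) := by simp; nlinarith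
    | (k+2) =>
      calc (avoidF b α β (k+2)).card ≤ (b*b-1) * (avoidF b α β k).card := card_avoidF_step hα hβ k
      _ ≤ (b*b-1) * (b ^ 2 * (b*b-1) ^ (k/2)) := Nat.mul_le_mul_left _ (ih k (by omega))
      _ = b ^ 2 * (b*b-1) ^ (k/2 + 1) := by ring
      _ = b ^ 2 * (b*b-1) ^ ((k+2)/2) := by rw [Nat.add_div_right k (by norm_num)]


lemma kept_trailing {b α β n m : ℕ} (h : KeptU b α β n m) {t : List ℕ}
    (ht : digitsBE b m = digitsBE b n ++ t) : ¬ [α, β] <:+: t := by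
  obtain ⟨t₀, h₀, hav⟩ := h
  have : t₀ = t := List.append_cancel_left (h₀.symm.trans ht)
  exact this ▸ hav

lemma summable_kept {b α β : ℕ} (hb : 2 ≤ b) (hα : α < b) (hβ : β < b) {n : ℕ} (hn : 0 < n) :
    Summable (Set.indicator {m | KeptU b α β n m} (fun m => (1:ℝ)/m)) := by
  classical
  set B : ℝ := (b : ℝ) with hBdef
  have hB : (2:ℝ) ≤ B := by rw [hBdef]; exact_mod_cast hb
  have hN : (1:ℝ) ≤ (n:ℝ) := by exact_mod_cast hn
  set r : ℝ := (B*B - 1)/(B*B) with hrdef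
  have hBB : (0:ℝ) < B*B := by nlinarith
  have hr0 : 0 < r := by apply div_pos <;> nlinarith
  have hr1 : r < 1 := by rw [div_lt_one hBB]; nlinarith
  set s : ℝ := Real.sqrt r with hsdef
  have hs0 : 0 < s := Real.sqrt_pos.mpr hr0
  have hs2 : s ^ 2 = r := Real.sq_sqrt hr0.le
  have hs1 : s < 1 := by nlinarith
  set C : ℝ := B^2 / ((n:ℝ) * s) with hCdef
  have hmaj : Summable (fun k : ℕ => C * s ^ k) :=
    (summable_geometric_of_lt_one hs0.le hs1).mul_left C
  -- per-k bound
  have hk : ∀ k : ℕ, ((avoidF b α β k).card : ℝ) * (1/((n:ℝ) * B ^ k)) ≤ C * s ^ k := by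
    intro k
    have hcard : ((avoidF b α β k).card : ℝ) ≤ B^2 * (B*B-1)^(k/2) := by
      have h1 := card_avoidF_le hb hα hβ k
      have h2 : ((avoidF b α β k).card : ℝ) ≤ ((b^2 * (b*b-1)^(k/2) : ℕ) : ℝ) :=
        Nat.cast_le.mpr h1
      refine h2.trans (le_of_eq ?_)
      push_cast [Nat.cast_sub (by nlinarith : 1 ≤ b*b)]
      ring
    have hBk : (B*B)^(k/2) ≤ B^k := by
      have : (B*B)^(k/2) = B^(2*(k/2)) := by
        rw [pow_mul]; ring_nf
      rw [this]
      exact pow_le_pow_right₀ (by nlinarith) (by omega)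
    have hsk : (B*B-1)^(k/2) * s ≤ (B*B)^(k/2) * s^k := by
      have e1 : (B*B-1)^(k/2) = (B*B)^(k/2) * r^(k/2) := by
        rw [← mul_pow, hrdef, mul_div_cancel₀ _ (ne_of_gt hBB)]
      have e2 : r^(k/2) * s = s^(2*(k/2)+1) := by
        rw [← hs2, ← pow_mul, ← pow_succ]
      have e3 : s^(2*(k/2)+1) ≤ s^k := pow_le_pow_of_le_one hs0.le hs1.le (by omega)
      calc (B*B-1)^(k/2) * s = (B*B)^(k/2) * (r^(k/2) * s) := by rw [e1]; ring
      _ = (B*B)^(k/2) * s^(2*(k/2)+1) := by rw [e2]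
      _ ≤ (B*B)^(k/2) * s^k := by
          apply mul_le_mul_of_nonneg_left e3 (by positivity)
    rw [mul_one_div, hCdef, div_mul_eq_mul_div, div_le_div_iff₀ (by positivity) (by positivity)]
    have key : ((avoidF b α β k).card : ℝ) * s ≤ B^2 * s^k * B^k := by
      calc ((avoidF b α β k).card : ℝ) * s ≤ (B^2 * (B*B-1)^(k/2)) * s := by
            apply mul_le_mul_of_nonneg_right hcard hs0.le
      _ = B^2 * ((B*B-1)^(k/2) * s) := by ring
      _ ≤ B^2 * ((B*B)^(k/2) * s^k) := by
          apply mul_le_mul_of_nonneg_left hsk (by positivity)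
      _ ≤ B^2 * (B^k * s^k) := by
          apply mul_le_mul_of_nonneg_left (mul_le_mul_of_nonneg_right hBk (by positivity)) (by positivity)
      _ = B^2 * s^k * B^k := by ring
    calc ((avoidF b α β k).card : ℝ) * ((n:ℝ) * s) = (((avoidF b α β k).card : ℝ) * s) * n := by ring
    _ ≤ (B^2 * s^k * B^k) * n := by apply mul_le_mul_of_nonneg_right key (by positivity)
    _ = B^2 * s^k * ((n:ℝ) * B^k) := by ring
  -- partial sums bounded
  apply summable_of_sum_range_le (c := ∑' k : ℕ, C * s ^ k)
  · exact Set.indicator_nonneg (fun a _ => by positivity)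
  · intro N
    set S : Finset ℕ := (Finset.range N).filter (fun i => KeptU b α β n i) with hSdef
    have hsum_eq : ∑ i ∈ Finset.range N, Set.indicator {m | KeptU b α β n m} (fun m => (1:ℝ)/m) i
        = ∑ i ∈ S, (1:ℝ)/i := by
      rw [hSdef, Finset.sum_filter]
      apply Finset.sum_congr rfl
      intro i _
      by_cases h : KeptU b α β n i <;> simp [Set.indicator, h]
    rw [hsum_eq]
    set g : ℕ → ℕ := fun i => ((digitsBE b i).drop (digitsBE b n).length).length with hgdef
    -- facts about kept elements
    have hfacts : ∀ i ∈ S, digitsBE b i = digitsBE b n ++ (digitsBE b i).drop (digitsBE b n).length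
        ∧ n * b ^ (g i) ≤ i := by
      intro i hi
      obtain ⟨t, ht, hav⟩ := (Finset.mem_filter.mp hi).2
      have htl : (digitsBE b i).drop (digitsBE b n).length = t := by
        rw [ht]; exact List.drop_left
      constructor
      · rw [htl]; exact ht
      · have := le_of_digitsBE_append hb ht
        rw [hgdef]; simpa [htl] using this
    have hmaps : ∀ i ∈ S, g i ∈ Finset.range N := by
      intro i hi
      obtain ⟨-, hge⟩ := hfacts i hi
      have h1 : g i < b ^ (g i) := Nat.lt_pow_self (by omega)
      have h2 : b ^ (g i) ≤ n * b ^ (g i) := Nat.le_mul_of_pos_left _ hn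
      have h3 : i < N := Finset.mem_range.mp (Finset.mem_filter.mp hi).1
      exact Finset.mem_range.mpr (by omega)
    rw [← Finset.sum_fiberwise_of_maps_to hmaps]
    have hfiber : ∀ k ∈ Finset.range N, ∑ i ∈ S.filter (fun i => g i = k), (1:ℝ)/i ≤ C * s ^ k := by
      intro k _
      have hcardf : (S.filter (fun i => g i = k)).card ≤ (avoidF b α β k).card := by
        apply Finset.card_le_card_of_injOn (fun i => (digitsBE b i).drop (digitsBE b n).length)
        · intro i hi
          have hiS := Finset.mem_filter.mp hi
          have hgk : g i = k := hiS.2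
          obtain ⟨ht, -⟩ := hfacts i hiS.1
          refine mem_avoidF.mpr ⟨⟨hgk, mem_lt_of_digitsBE_append hb ht⟩, ?_⟩
          exact kept_trailing (Finset.mem_filter.mp hiS.1).2 ht
        · intro i hi j hj he
          simp only [Finset.coe_filter, Set.mem_setOf_eq] at hi hj
          have hi' := hfacts i hi.1
          have hj' := hfacts j hj.1
          have he' : List.drop (digitsBE b n).length (digitsBE b i)
              = List.drop (digitsBE b n).length (digitsBE b j) := he
          exact digitsBE_inj (by rw [hi'.1, hj'.1, he'])
      have hterm : ∀ i ∈ S.filter (fun i => g i = k), (1:ℝ)/i ≤ 1/((n:ℝ) * B^k) := by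
        intro i hi
        have hiS := Finset.mem_filter.mp hi
        have hgk : g i = k := hiS.2
        obtain ⟨-, hge⟩ := hfacts i hiS.1
        rw [hgk] at hge
        apply one_div_le_one_div_of_le (by positivity)
        calc (n:ℝ) * B^k = ((n * b^k : ℕ) : ℝ) := by push_cast; ring
        _ ≤ (i : ℝ) := Nat.cast_le.mpr hge
      calc ∑ i ∈ S.filter (fun i => g i = k), (1:ℝ)/i
          ≤ (S.filter (fun i => g i = k)).card • (1/((n:ℝ) * B^k)) :=
            Finset.sum_le_card_nsmul _ _ _ hterm
      _ = ((S.filter (fun i => g i = k)).card : ℝ) * (1/((n:ℝ) * B^k)) := by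
            rw [nsmul_eq_mul]
      _ ≤ ((avoidF b α β k).card : ℝ) * (1/((n:ℝ) * B^k)) := by
            apply mul_le_mul_of_nonneg_right (Nat.cast_le.mpr hcardf) (by positivity)
      _ ≤ C * s ^ k := hk k
    calc ∑ k ∈ Finset.range N, ∑ i ∈ S.filter (fun i => g i = k), (1:ℝ)/i
        ≤ ∑ k ∈ Finset.range N, C * s ^ k := Finset.sum_le_sum hfiber
    _ ≤ ∑' k : ℕ, C * s ^ k := Summable.sum_le_tsum _ (fun k _ => by positivity) hmaj


lemma pointwise {b α β : ℕ} (hb : 2 ≤ b) (hα : α < b) (hβ : β < b) (hαβ : α ≠ β)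
    {n : ℕ} (hn : 0 < n) (m : ℕ) :
    Set.indicator {m' | KeptU b α β n m'} (fun m' => (1:ℝ)/m') m
      + Set.indicator {m' | KeptU b α β (n*b^2+α*b+β) m'} (fun m' => (1:ℝ)/m') m
    = Set.indicator {n} (fun m' : ℕ => (1:ℝ)/m') m
      + ∑ d ∈ Finset.range b, Set.indicator {m' | KeptU b α β (n*b+d) m'} (fun m' => (1:ℝ)/m') m := by
  classical
  have hbadd : digitsBE b (n*b^2+α*b+β) = digitsBE b n ++ [α, β] := digitsBE_bad hb hn hα hβ
  by_cases hpre : digitsBE b n <+: digitsBE b m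
  · obtain ⟨t, ht⟩ := hpre
    replace ht : digitsBE b m = digitsBE b n ++ t := ht.symm
    cases t with
    | nil =>
      have hm : m = n := digitsBE_inj (by simpa using ht)
      subst hm
      have hKn : KeptU b α β m m := ⟨[], by simp, by simp⟩
      have hbadm : ¬ KeptU b α β (m*b^2+α*b+β) m := by
        rintro ⟨t₀, h₀, -⟩
        rw [hbadd] at h₀
        have := congrArg List.length h₀
        simp at this
      have hKd : ∀ d ∈ Finset.range b, ¬ KeptU b α β (m*b+d) m := by
        intro d hd
        rintro ⟨t₀, h₀, -⟩
        rw [digitsBE_mul_add hb hn (Finset.mem_range.mp hd)] at h₀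
        have := congrArg List.length h₀
        simp at this
      rw [Set.indicator_of_mem (show m ∈ {m' | KeptU b α β m m'} from hKn),
        Set.indicator_of_notMem (show m ∉ {m' | KeptU b α β (m*b^2+α*b+β) m'} from hbadm),
        Set.indicator_of_mem (show m ∈ ({m} : Set ℕ) from rfl),
        Finset.sum_eq_zero (fun d hd => Set.indicator_of_notMem
          (show m ∉ {m' | KeptU b α β (m*b+d) m'} from hKd d hd) _)]
    | cons d t' =>
      have hd : d < b := mem_lt_of_digitsBE_append hb ht d (by simp)
      have hmn : m ∉ ({n} : Set ℕ) := by
        intro he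
        rw [Set.mem_singleton_iff] at he
        rw [he] at ht
        have := congrArg List.length ht
        simp at this
      have hKn_iff : KeptU b α β n m ↔ ¬ [α, β] <:+: (d :: t') :=
        ⟨fun h => kept_trailing h ht, fun h => ⟨d :: t', ht, h⟩⟩
      have hKd_iff : ∀ d', d' < b → (KeptU b α β (n*b+d') m ↔ (d' = d ∧ ¬ [α, β] <:+: t')) := by
        intro d' hd'
        constructor
        · rintro ⟨t₀, h₀, hav⟩
          rw [digitsBE_mul_add hb hn hd', List.append_assoc] at h₀
          have := List.append_cancel_left (h₀.symm.trans ht)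
          simp only [List.cons_append, List.nil_append, List.cons.injEq] at this
          obtain ⟨h1, h2⟩ := this
          exact ⟨h1, h2 ▸ hav⟩
        · rintro ⟨rfl, hav⟩
          exact ⟨t', by rw [digitsBE_mul_add hb hn hd', List.append_assoc]; simpa using ht, hav⟩
      have hbad_iff : KeptU b α β (n*b^2+α*b+β) m ↔
          (d = α ∧ ∃ t'', t' = β :: t'' ∧ ¬ [α, β] <:+: t'') := by
        constructor
        · rintro ⟨t₀, h₀, hav⟩
          rw [hbadd, List.append_assoc] at h₀
          have := List.append_cancel_left (h₀.symm.trans ht)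
          simp only [List.cons_append, List.nil_append, List.cons.injEq] at this
          obtain ⟨h1, h2⟩ := this
          exact ⟨h1.symm, t₀, h2.symm, hav⟩
        · rintro ⟨rfl, t'', rfl, hav⟩
          exact ⟨t'', by rw [hbadd, List.append_assoc]; simpa using ht, hav⟩
      have hsum : ∑ d' ∈ Finset.range b,
          Set.indicator {m' | KeptU b α β (n*b+d') m'} (fun m' => (1:ℝ)/m') m
          = Set.indicator {m' | KeptU b α β (n*b+d) m'} (fun m' => (1:ℝ)/m') m := by
        apply Finset.sum_eq_single_of_mem d (Finset.mem_range.mpr hd)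
        intro d' hd' hne
        apply Set.indicator_of_notMem
        intro h
        exact hne ((hKd_iff d' (Finset.mem_range.mp hd')).mp h).1
      rw [hsum, Set.indicator_of_notMem hmn, zero_add]
      by_cases I2 : [α, β] <:+: t'
      · have h1 : ¬ KeptU b α β n m := by
          rw [hKn_iff]
          intro h
          exact h (List.infix_cons_iff.mpr (Or.inr I2))
        have h2 : ¬ KeptU b α β (n*b^2+α*b+β) m := by
          rw [hbad_iff]
          rintro ⟨rfl, t'', rfl, hav⟩
          rcases List.infix_cons_iff.mp I2 with hp | hi
          · have := (List.cons_prefix_cons.mp hp).1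
            omega
          · exact hav hi
        have h3 : ¬ KeptU b α β (n*b+d) m := by
          rw [hKd_iff d hd]
          rintro ⟨-, hav⟩
          exact hav I2
        rw [Set.indicator_of_notMem (show m ∉ {m' | KeptU b α β n m'} from h1),
          Set.indicator_of_notMem (show m ∉ {m' | KeptU b α β (n*b^2+α*b+β) m'} from h2),
          Set.indicator_of_notMem (show m ∉ {m' | KeptU b α β (n*b+d) m'} from h3)]
        ring
      · by_cases I1 : [α, β] <:+: (d :: t')
        · -- d = α, t' = β :: t''
          have hp : [α, β] <+: (d :: t') := by
            rcases List.infix_cons_iff.mp I1 with hp | hi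
            · exact hp
            · exact absurd hi I2
          obtain ⟨hda, hβp⟩ := List.cons_prefix_cons.mp hp
          obtain ⟨t'', rfl⟩ : ∃ t'', t' = β :: t'' := by
            cases t' with
            | nil => simp at hβp
            | cons e t'' =>
              obtain ⟨he, -⟩ := List.cons_prefix_cons.mp hβp
              exact ⟨t'', by rw [he]⟩
          have h1 : ¬ KeptU b α β n m := by rw [hKn_iff]; intro h; exact h I1
          have h2 : KeptU b α β (n*b^2+α*b+β) m := by
            rw [hbad_iff]
            refine ⟨hda.symm, t'', rfl, fun hi => I2 ?_⟩
            exact hi.trans (List.suffix_cons β t'').isInfix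
          have h3 : KeptU b α β (n*b+d) m := (hKd_iff d hd).mpr ⟨rfl, I2⟩
          rw [Set.indicator_of_notMem (show m ∉ {m' | KeptU b α β n m'} from h1),
            Set.indicator_of_mem (show m ∈ {m' | KeptU b α β (n*b^2+α*b+β) m'} from h2),
            Set.indicator_of_mem (show m ∈ {m' | KeptU b α β (n*b+d) m'} from h3)]
          ring
        · have h1 : KeptU b α β n m := hKn_iff.mpr I1
          have h2 : ¬ KeptU b α β (n*b^2+α*b+β) m := by
            rw [hbad_iff]
            rintro ⟨rfl, t'', rfl, -⟩
            exact I1 ⟨[], t'', by simp⟩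
          have h3 : KeptU b α β (n*b+d) m := (hKd_iff d hd).mpr ⟨rfl, I2⟩
          rw [Set.indicator_of_mem (show m ∈ {m' | KeptU b α β n m'} from h1),
            Set.indicator_of_notMem (show m ∉ {m' | KeptU b α β (n*b^2+α*b+β) m'} from h2),
            Set.indicator_of_mem (show m ∈ {m' | KeptU b α β (n*b+d) m'} from h3)]
          ring
  · have h1 : ¬ KeptU b α β n m := by
      rintro ⟨t, ht, -⟩
      exact hpre ⟨t, ht.symm⟩
    have h2 : ¬ KeptU b α β (n*b^2+α*b+β) m := by
      rintro ⟨t, ht, -⟩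
      rw [hbadd, List.append_assoc] at ht
      exact hpre ⟨[α, β] ++ t, ht.symm⟩
    have h3 : ∀ d ∈ Finset.range b, ¬ KeptU b α β (n*b+d) m := by
      rintro d hd ⟨t, ht, -⟩
      rw [digitsBE_mul_add hb hn (Finset.mem_range.mp hd), List.append_assoc] at ht
      exact hpre ⟨[d] ++ t, ht.symm⟩
    have h4 : m ∉ ({n} : Set ℕ) := by
      intro he
      rw [Set.mem_singleton_iff] at he
      exact hpre (he ▸ List.prefix_refl _)
    rw [Set.indicator_of_notMem (show m ∉ {m' | KeptU b α β n m'} from h1),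
      Set.indicator_of_notMem (show m ∉ {m' | KeptU b α β (n*b^2+α*b+β) m'} from h2),
      Set.indicator_of_notMem h4,
      Finset.sum_eq_zero (fun d hd => Set.indicator_of_notMem
        (show m ∉ {m' | KeptU b α β (n*b+d) m'} from h3 d hd) _)]


theorem stmt_10 (b : ℕ) (hb : 2 ≤ b) (α β : ℕ) (hα : α < b) (hβ : β < b) (hαβ : α ≠ β)
    (n : ℕ) (hn : 0 < n) :
    U b α β n = 1 / n + (∑ d ∈ Finset.range b, U b α β (n * b + d))
      - U b α β (n * b ^ 2 + α * b + β) := by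
  classical
  have hU : ∀ n' : ℕ, U b α β n'
      = ∑' m : ℕ, Set.indicator {m' | KeptU b α β n' m'} (fun m' => (1:ℝ)/m') m :=
    fun n' => tsum_subtype {m' | KeptU b α β n' m'} (fun m' => (1:ℝ)/m')
  have hbadpos : 0 < n * b ^ 2 + α * b + β := by positivity
  have hdpos : ∀ d : ℕ, 0 < n * b + d := fun d => by positivity
  have hs1 := summable_kept hb hα hβ hn
  have hs2 := summable_kept hb hα hβ hbadpos
  have hs3 : ∀ d ∈ Finset.range b, Summable
      (Set.indicator {m' | KeptU b α β (n*b+d) m'} (fun m' => (1:ℝ)/m')) :=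
    fun d _ => summable_kept hb hα hβ (hdpos d)
  have hssing : Summable (Set.indicator ({n} : Set ℕ) (fun m' : ℕ => (1:ℝ)/m')) := by
    apply summable_of_ne_finset_zero (s := {n})
    intro m hm
    exact Set.indicator_of_notMem (by simpa using hm) _
  have hssum : Summable (fun m : ℕ => ∑ d ∈ Finset.range b,
      Set.indicator {m' | KeptU b α β (n*b+d) m'} (fun m' => (1:ℝ)/m') m) :=
    summable_sum hs3
  have key : U b α β n + U b α β (n * b ^ 2 + α * b + β)
      = 1/n + ∑ d ∈ Finset.range b, U b α β (n * b + d) := by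
    rw [hU n, hU (n * b ^ 2 + α * b + β), ← Summable.tsum_add hs1 hs2,
      tsum_congr (pointwise hb hα hβ hαβ hn), Summable.tsum_add hssing hssum, Summable.tsum_finsetSum hs3]
    congr 1
    · rw [tsum_eq_single n (fun m hm => Set.indicator_of_notMem (by simpa using hm) _)]
      simp
    · exact Finset.sum_congr rfl (fun d _ => (hU (n*b+d)).symm)
  linarith
end

section
/- Let b ≥ 2 and α ≠ β digits. With U, V defined by U(n) = Σ_{ld_l(m)=n, trailing avoids αβ} 1/m and V(n) = Σ_{ld_l(m)=n, trailing has exactly one αβ} 1/m (l = number of digits of n), one has for every positive integer n: V(n) = Σ_{d=0}^{b-1} V(n·b + d) − V(n·b² + αb + β) + U(n·b² + αb + β). -/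
/-- `m`'s leading digits form `n` and the trailing digit string contains exactly one
contiguous occurrence of `αβ`. -/
def KeptV (b α β n m : ℕ) : Prop :=
  ∃ t : List ℕ, digitsBE b m = digitsBE b n ++ t ∧ (t.zip t.tail).count (α, β) = 1

noncomputable def V (b α β n : ℕ) : ℝ :=
  ∑' m : {m : ℕ // KeptV b α β n m}, (1 : ℝ) / (m : ℕ)

namespace Stmt11

def cnt (α β : ℕ) (t : List ℕ) : ℕ := (t.zip t.tail).count (α, β)

@[simp] lemma cnt_nil (α β : ℕ) : cnt α β [] = 0 := rfl
@[simp] lemma cnt_single (α β x : ℕ) : cnt α β [x] = 0 := rfl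

lemma cnt_cons_cons (α β x y : ℕ) (r : List ℕ) :
    cnt α β (x :: y :: r) = cnt α β (y :: r) + (if (x, y) = (α, β) then 1 else 0) := by
  simp [cnt, List.count_cons]

lemma mem_zip_iff_infix (α β : ℕ) (t : List ℕ) :
    [α, β] <:+: t ↔ (α, β) ∈ t.zip t.tail := by
  induction t with
  | nil => simp
  | cons x r ih =>
    rw [List.infix_cons_iff, ih]
    cases r with
    | nil => simp
    | cons y r' =>
      simp only [List.zip_cons_cons, List.tail_cons, List.mem_cons]
      constructor
      · rintro (h | h)
        · rw [List.cons_prefix_cons] at h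
          obtain ⟨h1, h⟩ := h
          rw [List.cons_prefix_cons] at h
          exact Or.inl (by simp [h1.symm, h.1.symm])
        · exact Or.inr h
      · rintro (h | h)
        · left
          rw [Prod.mk.injEq] at h
          rw [List.cons_prefix_cons, List.cons_prefix_cons]
          exact ⟨h.1, h.2, List.nil_prefix⟩
        · exact Or.inr h

lemma not_infix_iff_cnt (α β : ℕ) (t : List ℕ) :
    ¬ [α, β] <:+: t ↔ cnt α β t = 0 := by
  rw [mem_zip_iff_infix, cnt, List.count_eq_zero]

lemma digitsBE_mul_add {b : ℕ} (hb : 2 ≤ b) {n : ℕ} (hn : 0 < n) {d : ℕ} (hd : d < b) :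
    digitsBE b (n * b + d) = digitsBE b n ++ [d] := by
  unfold digitsBE
  rw [Nat.digits_def' (by omega : 1 < b) (by nlinarith : 0 < n * b + d)]
  have h1 : (n * b + d) % b = d := by
    rw [mul_comm, Nat.mul_add_mod, Nat.mod_eq_of_lt hd]
  have h2 : (n * b + d) / b = n := by
    rw [mul_comm, Nat.mul_add_div (by omega), Nat.div_eq_of_lt hd, add_zero]
  rw [h1, h2, List.reverse_cons]

lemma digitsBE_E {b : ℕ} (hb : 2 ≤ b) {n : ℕ} (hn : 0 < n) {α β : ℕ} (hα : α < b)
    (hβ : β < b) :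
    digitsBE b (n * b ^ 2 + α * b + β) = digitsBE b n ++ [α, β] := by
  have h : n * b ^ 2 + α * b + β = (n * b + α) * b + β := by ring
  rw [h, digitsBE_mul_add hb (by positivity) hβ, digitsBE_mul_add hb hn hα]
  simp

lemma eq_of_digitsBE_eq {b m m' : ℕ} (h : digitsBE b m = digitsBE b m') : m = m' := by
  have := congrArg List.reverse h
  simp only [digitsBE, List.reverse_reverse] at this
  rw [← Nat.ofDigits_digits b m, ← Nat.ofDigits_digits b m', this]

lemma trailing_unique {b n m : ℕ} {t t' : List ℕ}
    (h : digitsBE b m = digitsBE b n ++ t) (h' : digitsBE b m = digitsBE b n ++ t') :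
    t = t' := List.append_cancel_left (h.symm.trans h')

lemma keptV_iff {b α β n m : ℕ} {t : List ℕ} (hm : digitsBE b m = digitsBE b n ++ t) :
    KeptV b α β n m ↔ cnt α β t = 1 := by
  constructor
  · rintro ⟨t', ht', hc⟩
    rwa [trailing_unique hm ht']
  · intro hc
    exact ⟨t, hm, hc⟩

lemma keptU_iff {b α β n m : ℕ} {t : List ℕ} (hm : digitsBE b m = digitsBE b n ++ t) :
    KeptU b α β n m ↔ cnt α β t = 0 := by
  constructor
  · rintro ⟨t', ht', hc⟩
    rw [trailing_unique hm ht']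
    rwa [← not_infix_iff_cnt α β]
  · intro hc
    exact ⟨t, hm, (not_infix_iff_cnt α β t).2 hc⟩

lemma mem_trailing_lt {b n m : ℕ} {t : List ℕ} (hb : 2 ≤ b)
    (hm : digitsBE b m = digitsBE b n ++ t) {x : ℕ} (hx : x ∈ t) : x < b := by
  have : x ∈ digitsBE b m := by rw [hm]; exact List.mem_append_right _ hx
  exact Nat.digits_lt_base (by omega) (List.mem_reverse.1 this)

lemma cnt_beta_cons {α β : ℕ} (hαβ : α ≠ β) (t : List ℕ) :
    cnt α β (β :: t) = cnt α β t := by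
  cases t with
  | nil => simp
  | cons z r =>
    rw [cnt_cons_cons]
    have : (β, z) ≠ (α, β) := by
      intro h
      exact hαβ (congrArg Prod.fst h).symm
    simp [this]

lemma cnt_alpha_beta_cons {α β : ℕ} (t : List ℕ) :
    cnt α β (α :: β :: t) = cnt α β (β :: t) + 1 := by
  rw [cnt_cons_cons]; simp

/-- The function being summed. -/
noncomputable def f (m : ℕ) : ℝ := 1 / (m : ℕ)

noncomputable def indV (b α β n : ℕ) : ℕ → ℝ := Set.indicator {m | KeptV b α β n m} f

noncomputable def indU (b α β n : ℕ) : ℕ → ℝ := Set.indicator {m | KeptU b α β n m} f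

lemma indV_eq {b α β k m : ℕ} {P : Prop} [Decidable P] (h : KeptV b α β k m ↔ P) :
    indV b α β k m = if P then f m else 0 := by
  by_cases hP : P
  · rw [if_pos hP]
    exact Set.indicator_of_mem (s := {x | KeptV b α β k x}) (h.2 hP) f
  · rw [if_neg hP]
    exact Set.indicator_of_notMem (s := {x | KeptV b α β k x}) (fun hm' => hP (h.1 hm')) f

lemma indU_eq {b α β k m : ℕ} {P : Prop} [Decidable P] (h : KeptU b α β k m ↔ P) :
    indU b α β k m = if P then f m else 0 := by
  by_cases hP : P
  · rw [if_pos hP]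
    exact Set.indicator_of_mem (s := {x | KeptU b α β k x}) (h.2 hP) f
  · rw [if_neg hP]
    exact Set.indicator_of_notMem (s := {x | KeptU b α β k x}) (fun hm' => hP (h.1 hm')) f

lemma indV_eq_zero {b α β k m : ℕ} (h : ¬ KeptV b α β k m) : indV b α β k m = 0 :=
  Set.indicator_of_notMem (s := {x | KeptV b α β k x}) h f

lemma indU_eq_zero {b α β k m : ℕ} (h : ¬ KeptU b α β k m) : indU b α β k m = 0 :=
  Set.indicator_of_notMem (s := {x | KeptU b α β k x}) h f

lemma pointwise {b : ℕ} (hb : 2 ≤ b) {α β : ℕ} (hα : α < b) (hβ : β < b) (hαβ : α ≠ β)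
    {n : ℕ} (hn : 0 < n) (m : ℕ) :
    indV b α β n m + indV b α β (n * b ^ 2 + α * b + β) m
      = (∑ d ∈ Finset.range b, indV b α β (n * b + d) m)
        + indU b α β (n * b ^ 2 + α * b + β) m := by
  classical
  have hbE : digitsBE b (n * b ^ 2 + α * b + β) = digitsBE b n ++ [α, β] :=
    digitsBE_E hb hn hα hβ
  by_cases hext : ∃ t, digitsBE b m = digitsBE b n ++ t
  · obtain ⟨t, ht⟩ := hext
    cases t with
    | nil =>
      have hmnil : digitsBE b m = digitsBE b n ++ ([] : List ℕ) := ht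
      have h1 : ¬ KeptV b α β n m := by
        rw [keptV_iff hmnil]; simp
      have h2 : ¬ KeptV b α β (n * b ^ 2 + α * b + β) m := by
        rintro ⟨t₀, ht₀, -⟩
        rw [hbE, List.append_assoc] at ht₀
        have := trailing_unique hmnil ht₀
        simp at this
      have h3 : ¬ KeptU b α β (n * b ^ 2 + α * b + β) m := by
        rintro ⟨t₀, ht₀, -⟩
        rw [hbE, List.append_assoc] at ht₀
        have := trailing_unique hmnil ht₀
        simp at this
      have h4 : ∀ d ∈ Finset.range b, indV b α β (n * b + d) m = 0 := by
        intro d hd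
        apply indV_eq_zero
        rintro ⟨t₀, ht₀, -⟩
        rw [digitsBE_mul_add hb hn (Finset.mem_range.1 hd), List.append_assoc] at ht₀
        have := trailing_unique hmnil ht₀
        simp at this
      rw [indV_eq_zero h1, indV_eq_zero h2, indU_eq_zero h3, Finset.sum_eq_zero h4]
    | cons d0 t' =>
      have hd0 : d0 < b := mem_trailing_lt hb ht (List.mem_cons_self)
      have htc : digitsBE b m = digitsBE b (n * b + d0) ++ t' := by
        rw [digitsBE_mul_add hb hn hd0, List.append_assoc]
        simpa using ht
      have hsum : ∑ d ∈ Finset.range b, indV b α β (n * b + d) m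
          = indV b α β (n * b + d0) m := by
        apply Finset.sum_eq_single_of_mem d0 (Finset.mem_range.2 hd0)
        intro d hd hne
        apply indV_eq_zero
        rintro ⟨t₀, ht₀, -⟩
        rw [digitsBE_mul_add hb hn (Finset.mem_range.1 hd), List.append_assoc] at ht₀
        have := trailing_unique ht ht₀
        simp only [List.cons_append, List.nil_append, List.cons.injEq] at this
        exact hne this.1.symm
      rw [hsum]
      by_cases hEsh : d0 = α ∧ ∃ t'', t' = β :: t''
      · obtain ⟨hd0α, t'', rfl⟩ := hEsh
        subst hd0α
        have htE : digitsBE b m = digitsBE b (n * b ^ 2 + d0 * b + β) ++ t'' := by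
          rw [hbE, List.append_assoc]
          simpa using ht
        have e1 : indV b d0 β n m = if cnt d0 β t'' = 0 then f m else 0 := by
          rw [indV_eq (keptV_iff ht), cnt_alpha_beta_cons, cnt_beta_cons hαβ]
          congr 1
          simp only [eq_iff_iff]
          omega
        have e2 : indV b d0 β (n * b ^ 2 + d0 * b + β) m
            = if cnt d0 β t'' = 1 then f m else 0 := indV_eq (keptV_iff htE)
        have e3 : indV b d0 β (n * b + d0) m = if cnt d0 β t'' = 1 then f m else 0 := by
          rw [indV_eq (keptV_iff htc), cnt_beta_cons hαβ]
        have e4 : indU b d0 β (n * b ^ 2 + d0 * b + β) m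
            = if cnt d0 β t'' = 0 then f m else 0 := indU_eq (keptU_iff htE)
        rw [e1, e2, e3, e4]
        exact add_comm _ _
      · have hne2 : ∀ t₀, digitsBE b m ≠ digitsBE b (n * b ^ 2 + α * b + β) ++ t₀ := by
          intro t₀ h
          rw [hbE, List.append_assoc] at h
          have := trailing_unique ht h
          simp only [List.cons_append, List.nil_append, List.cons.injEq] at this
          exact hEsh ⟨this.1, t₀, this.2⟩
        have e2 : indV b α β (n * b ^ 2 + α * b + β) m = 0 := by
          apply indV_eq_zero
          rintro ⟨t₀, ht₀, -⟩
          exact hne2 t₀ ht₀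
        have e4 : indU b α β (n * b ^ 2 + α * b + β) m = 0 := by
          apply indU_eq_zero
          rintro ⟨t₀, ht₀, -⟩
          exact hne2 t₀ ht₀
        have hcc : cnt α β (d0 :: t') = cnt α β t' := by
          cases t' with
          | nil => simp
          | cons y r =>
            rw [cnt_cons_cons]
            have hny : (d0, y) ≠ (α, β) := by
              intro h
              rw [Prod.mk.injEq] at h
              exact hEsh ⟨h.1, r, by rw [h.2]⟩
            simp [hny]
        rw [e2, e4, indV_eq (keptV_iff ht), indV_eq (keptV_iff htc), hcc]
  · push_neg at hext
    have h1 : ¬ KeptV b α β n m := by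
      rintro ⟨t₀, ht₀, -⟩
      exact hext t₀ ht₀
    have h2 : ¬ KeptV b α β (n * b ^ 2 + α * b + β) m := by
      rintro ⟨t₀, ht₀, -⟩
      rw [hbE, List.append_assoc] at ht₀
      exact hext _ ht₀
    have h3 : ¬ KeptU b α β (n * b ^ 2 + α * b + β) m := by
      rintro ⟨t₀, ht₀, -⟩
      rw [hbE, List.append_assoc] at ht₀
      exact hext _ ht₀
    have h4 : ∀ d ∈ Finset.range b, indV b α β (n * b + d) m = 0 := by
      intro d hd
      apply indV_eq_zero
      rintro ⟨t₀, ht₀, -⟩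
      rw [digitsBE_mul_add hb hn (Finset.mem_range.1 hd), List.append_assoc] at ht₀
      exact hext _ ht₀
    rw [indV_eq_zero h1, indV_eq_zero h2, indU_eq_zero h3, Finset.sum_eq_zero h4]

/-- Master predicate: leading digits `n` and at most one occurrence of the pattern. -/
def PM (b α β n m : ℕ) : Prop :=
  ∃ t : List ℕ, digitsBE b m = digitsBE b n ++ t ∧ cnt α β t ≤ 1

def enc : List ℕ → List (ℕ × ℕ) × Option ℕ
  | [] => ([], none)
  | [x] => ([], some x)
  | x :: y :: r => ((x, y) :: (enc r).1, (enc r).2)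

def dec : List (ℕ × ℕ) → Option ℕ → List ℕ
  | [], none => []
  | [], some x => [x]
  | (x, y) :: z, o => x :: y :: dec z o

lemma dec_enc : ∀ t : List ℕ, dec (enc t).1 (enc t).2 = t
  | [] => rfl
  | [_] => rfl
  | x :: y :: r => by
    show dec ((x, y) :: (enc r).1) (enc r).2 = x :: y :: r
    rw [dec, dec_enc r]

lemma cnt_le_cons (α β x : ℕ) (r : List ℕ) : cnt α β r ≤ cnt α β (x :: r) := by
  cases r with
  | nil => simp
  | cons y r' => rw [cnt_cons_cons]; omega

lemma count_enc_le (α β : ℕ) : ∀ t : List ℕ, ((enc t).1).count (α, β) ≤ cnt α β t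
  | [] => le_refl _
  | [x] => by simp [enc]
  | x :: y :: r => by
    show ((x, y) :: (enc r).1).count (α, β) ≤ cnt α β (x :: y :: r)
    rw [List.count_cons, cnt_cons_cons]
    have h1 := count_enc_le α β r
    have h2 := cnt_le_cons α β y r
    by_cases h : (x, y) = (α, β) <;> simp [h] <;> omega

lemma mem_of_mem_enc : ∀ (t : List ℕ) (p : ℕ × ℕ), p ∈ (enc t).1 → p.1 ∈ t ∧ p.2 ∈ t
  | [], p => by simp [enc]
  | [x], p => by simp [enc]
  | x :: y :: r, p => by
    show p ∈ (x, y) :: (enc r).1 → _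
    intro hp
    rcases List.mem_cons.1 hp with h | h
    · subst h
      exact ⟨List.mem_cons_self, List.mem_cons_of_mem _ (List.mem_cons_self)⟩
    · have := mem_of_mem_enc r p h
      exact ⟨List.mem_cons_of_mem _ (List.mem_cons_of_mem _ this.1),
        List.mem_cons_of_mem _ (List.mem_cons_of_mem _ this.2)⟩

lemma mem_of_enc_some : ∀ (t : List ℕ) (x : ℕ), (enc t).2 = some x → x ∈ t
  | [], x => by simp [enc]
  | [y], x => by
    intro h
    have : some y = some x := h
    rw [Option.some.injEq] at this
    simp [this]
  | x' :: y :: r, x => by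
    intro h
    have : (enc r).2 = some x := h
    exact List.mem_cons_of_mem _ (List.mem_cons_of_mem _ (mem_of_enc_some r x this))

lemma two_mul_enc_len_le : ∀ t : List ℕ, 2 * (enc t).1.length ≤ t.length
  | [] => by simp [enc]
  | [x] => by simp [enc]
  | x :: y :: r => by
    show 2 * ((x, y) :: (enc r).1).length ≤ (x :: y :: r).length
    have := two_mul_enc_len_le r
    simp only [List.length_cons]
    omega

lemma split_count {γ : Type*} [BEq γ] [LawfulBEq γ] (a : γ) :
    ∀ z : List γ, z.count a ≤ 1 →
      a ∉ z ∨ ∃ z₁ z₂, z = z₁ ++ a :: z₂ ∧ a ∉ z₁ ∧ a ∉ z₂ := by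
  intro z
  induction z with
  | nil => intro _; left; simp
  | cons c z' ih =>
    intro h
    by_cases hc : c = a
    · subst hc
      right
      refine ⟨[], z', rfl, by simp, ?_⟩
      rw [List.count_cons_self] at h
      exact List.count_eq_zero.1 (by omega)
    · rw [List.count_cons_of_ne hc] at h
      rcases ih h with h' | ⟨z₁, z₂, rfl, h1, h2⟩
      · left
        simp only [List.mem_cons]
        rintro (rfl | hm)
        · exact hc rfl
        · exact h' hm
      · right
        refine ⟨c :: z₁, z₂, rfl, ?_, h2⟩
        simp only [List.mem_cons]
        rintro (rfl | hm)
        · exact hc rfl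
        · exact h1 hm

/-- Allowed blocks: pairs of digits distinct from `(α, β)`. -/
def Db (b α β : ℕ) : Type := {p : ℕ × ℕ // (p.1 < b ∧ p.2 < b) ∧ p ≠ (α, β)}

lemma Db_injective (b α β : ℕ) :
    Function.Injective (fun p : Db b α β => ((⟨p.1.1, p.2.1.1⟩, ⟨p.1.2, p.2.1.2⟩) : Fin b × Fin b)) := by
  rintro ⟨⟨p1, p2⟩, hp⟩ ⟨⟨q1, q2⟩, hq⟩ h
  simp only [Prod.mk.injEq, Fin.mk.injEq] at h
  simp [Prod.mk.injEq, h.1, h.2]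
  rfl

instance (b α β : ℕ) : Finite (Db b α β) :=
  Finite.of_injective _ (Db_injective b α β)

lemma card_Db_le {b α β : ℕ} (hα : α < b) (hβ : β < b) :
    Nat.card (Db b α β) ≤ b * b - 1 := by
  have h2 : Nat.card {q : Fin b × Fin b // q ≠ ((⟨α, hα⟩ : Fin b), (⟨β, hβ⟩ : Fin b))}
      = b * b - 1 := by
    rw [Nat.card_eq_fintype_card, Fintype.card_subtype_compl, Fintype.card_subtype_eq]
    simp [Fintype.card_prod]
  rw [← h2]
  apply Nat.card_le_card_of_injective
    (fun p : Db b α β => (⟨(⟨p.1.1, p.2.1.1⟩, ⟨p.1.2, p.2.1.2⟩), ?_⟩ :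
      {q : Fin b × Fin b // q ≠ (⟨α, hα⟩, ⟨β, hβ⟩)}))
  · intro p q h
    have := congrArg Subtype.val h
    exact Db_injective b α β this
  · intro h
    apply p.2.2
    rw [Prod.mk.injEq] at h
    have h1 := congrArg Fin.val h.1
    have h2 := congrArg Fin.val h.2
    simp at h1 h2
    rw [Prod.ext_iff]
    exact ⟨h1, h2⟩

lemma le_of_trailing {b n m : ℕ} (hb : 2 ≤ b) (hn : 0 < n) {t : List ℕ}
    (hm : digitsBE b m = digitsBE b n ++ t) : b ^ t.length * n ≤ m := by
  have : m = Nat.ofDigits b (t.reverse ++ Nat.digits b n) := by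
    conv_lhs => rw [← Nat.ofDigits_digits b m]
    congr 1
    have := congrArg List.reverse hm
    simpa [digitsBE] using this
  rw [this, Nat.ofDigits_append]
  have h1 : (Nat.ofDigits b t.reverse : ℕ) ≥ 0 := Nat.zero_le _
  simp only [List.length_reverse]
  rw [Nat.ofDigits_digits b n]
  exact Nat.le_add_left _ _

lemma ofDigits_digitsBE (b m : ℕ) : Nat.ofDigits b (digitsBE b m).reverse = m := by
  simp [digitsBE, Nat.ofDigits_digits]

/-- Reconstruction map from the encoding type back to numbers. -/
noncomputable def Rrec (b α β n : ℕ) :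
    (Σ k : ℕ, (Fin k → Db b α β) × Fin (k + 2) × Option (Fin b)) → ℕ := fun x =>
  let z' : List (ℕ × ℕ) := (List.ofFn x.2.1).map Subtype.val
  let z : List (ℕ × ℕ) :=
    if x.2.2.1.val = 0 then z'
    else z'.take (x.2.2.1.val - 1) ++ (α, β) :: z'.drop (x.2.2.1.val - 1)
  Nat.ofDigits b (digitsBE b n ++ dec z (x.2.2.2.map Fin.val)).reverse

lemma Rrec_mk (b α β n k : ℕ) (wg : Fin k → Db b α β) (pos : Fin (k + 2))
    (o : Option (Fin b)) :
    Rrec b α β n ⟨k, (wg, pos, o)⟩ =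
      Nat.ofDigits b (digitsBE b n ++ dec
        (if pos.val = 0 then (List.ofFn wg).map Subtype.val
         else ((List.ofFn wg).map Subtype.val).take (pos.val - 1) ++
           (α, β) :: ((List.ofFn wg).map Subtype.val).drop (pos.val - 1))
        (o.map Fin.val)).reverse := rfl

lemma exists_code {b α β n : ℕ} (hb : 2 ≤ b) (hn : 0 < n)
    (m : ℕ) (hm : PM b α β n m) :
    ∃ y : Σ k : ℕ, (Fin k → Db b α β) × Fin (k + 2) × Option (Fin b),
      Rrec b α β n y = m ∧ f m ≤ (((b : ℝ) ^ 2)⁻¹) ^ y.1 := by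
  classical
  obtain ⟨t, ht, hcnt⟩ := hm
  set z := (enc t).1 with hzdef
  have hcz : z.count (α, β) ≤ 1 := (count_enc_le α β t).trans hcnt
  have hdig : ∀ p ∈ z, p.1 < b ∧ p.2 < b := fun p hp =>
    ⟨mem_trailing_lt hb ht (mem_of_mem_enc t p hp).1,
     mem_trailing_lt hb ht (mem_of_mem_enc t p hp).2⟩
  have hob : ∀ a ∈ (enc t).2, a < b := fun a ha =>
    mem_trailing_lt hb ht (mem_of_enc_some t a ha)
  -- the trailing odd digit, as `Option (Fin b)`
  set omap : Option (Fin b) := (enc t).2.pmap (fun a ha => (⟨a, ha⟩ : Fin b)) hob with homap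
  have homapval : omap.map Fin.val = (enc t).2 := by
    rw [homap, Option.map_pmap]
    exact Option.pmap_eq_map _ _ _ _ |>.trans (Option.map_id ▸ rfl)
  -- the main bound, for any k with 2 * k ≤ t.length
  have hbound : ∀ k : ℕ, 2 * k ≤ t.length → f m ≤ (((b : ℝ) ^ 2)⁻¹) ^ k := by
    intro k hk
    have hmge : b ^ (2 * k) ≤ m := by
      calc b ^ (2 * k) ≤ b ^ t.length := Nat.pow_le_pow_right (by omega) hk
      _ ≤ b ^ t.length * n := Nat.le_mul_of_pos_right _ hn
      _ ≤ m := le_of_trailing hb hn ht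
    have hpos : (0 : ℝ) < (b : ℝ) ^ (2 * k) := by positivity
    have : f m ≤ 1 / (b : ℝ) ^ (2 * k) := by
      rw [f]
      apply one_div_le_one_div_of_le hpos
      exact_mod_cast le_trans (le_of_eq rfl) (Nat.cast_le.2 hmge)
    calc f m ≤ 1 / (b : ℝ) ^ (2 * k) := this
    _ = (((b : ℝ) ^ 2)⁻¹) ^ k := by
      rw [inv_pow, ← pow_mul, one_div]
  rcases split_count (α, β) z hcz with hnot | ⟨z₁, z₂, hz, h1, h2⟩
  · -- no occurrence among the blocks
    set w : List (Db b α β) := z.pmap (fun p hp => ⟨p, hp⟩)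
      (fun p hp => ⟨hdig p hp, fun hpe => hnot (hpe ▸ hp)⟩) with hwdef
    have hwlen : w.length = z.length := List.length_pmap
    refine ⟨⟨w.length, (w.get, ⟨0, by omega⟩, omap)⟩, ?_, ?_⟩
    · have hz' : (List.ofFn w.get).map Subtype.val = z := by
        rw [List.ofFn_get, hwdef]
        exact (List.map_pmap _).trans (List.pmap_eq_map _ |>.trans (List.map_id z))
      rw [Rrec_mk]
      have h0 : ((⟨0, by omega⟩ : Fin (w.length + 2)) : ℕ) = 0 := rfl
      rw [h0, if_pos rfl, hz', homapval, hzdef, dec_enc t, ← ht, ofDigits_digitsBE]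
    · exact hbound w.length (by rw [hwlen]; exact two_mul_enc_len_le t)
  · -- one occurrence among the blocks
    have hmemz : ∀ p ∈ z₁ ++ z₂, p ∈ z := by
      intro p hp
      rw [hz]
      rcases List.mem_append.1 hp with h | h
      · exact List.mem_append_left _ h
      · exact List.mem_append_right _ (List.mem_cons_of_mem _ h)
    set w : List (Db b α β) := (z₁ ++ z₂).pmap (fun p hp => ⟨p, hp⟩)
      (fun p hp => ⟨hdig p (hmemz p hp), fun hpe => by
        rcases List.mem_append.1 hp with h | h
        · exact h1 (hpe ▸ h)
        · exact h2 (hpe ▸ h)⟩) with hwdef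
    have hwlen : w.length = z₁.length + z₂.length := by
      rw [hwdef]
      exact List.length_pmap.trans List.length_append
    refine ⟨⟨w.length, (w.get, ⟨z₁.length + 1, by omega⟩, omap)⟩, ?_, ?_⟩
    · have hz' : (List.ofFn w.get).map Subtype.val = z₁ ++ z₂ := by
        rw [List.ofFn_get, hwdef]
        exact (List.map_pmap _).trans (List.pmap_eq_map _ |>.trans (List.map_id _))
      rw [Rrec_mk]
      have h0 : ((⟨z₁.length + 1, by omega⟩ : Fin (w.length + 2)) : ℕ) = z₁.length + 1 := rfl
      rw [h0, if_neg (by omega), hz', homapval]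
      have htake : (z₁ ++ z₂).take (z₁.length + 1 - 1) = z₁ := by
        simp [List.take_left]
      have hdrop : (z₁ ++ z₂).drop (z₁.length + 1 - 1) = z₂ := by
        simp [List.drop_left]
      rw [htake, hdrop, ← hz, hzdef, dec_enc t, ← ht, ofDigits_digitsBE]
    · refine hbound w.length ?_
      have hzen : z.length = z₁.length + z₂.length + 1 := by
        rw [hz]; simp; omega
      have := two_mul_enc_len_le t
      rw [← hzdef] at this
      omega

lemma f_nonneg (m : ℕ) : 0 ≤ f m := by
  rw [f]
  positivity

lemma summable_g {b : ℕ} (hb : 2 ≤ b) (α β : ℕ) (hα : α < b) (hβ : β < b) :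
    Summable (fun x : Σ k : ℕ, (Fin k → Db b α β) × Fin (k + 2) × Option (Fin b) =>
      (((b : ℝ) ^ 2)⁻¹) ^ x.1) := by
  have hb0 : (0 : ℝ) < b := by
    have : (2 : ℝ) ≤ b := by exact_mod_cast hb
    linarith
  set r : ℝ := ((b : ℝ) ^ 2)⁻¹ with hr
  have hr0 : 0 ≤ r := by positivity
  apply (summable_sigma_of_nonneg (fun x => pow_nonneg hr0 x.1)).2
  refine ⟨fun k => Summable.of_finite, ?_⟩
  have hfib : ∀ k : ℕ, (∑' _ : (Fin k → Db b α β) × Fin (k + 2) × Option (Fin b), r ^ k)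
      = (Nat.card ((Fin k → Db b α β) × Fin (k + 2) × Option (Fin b)) : ℝ) * r ^ k := by
    intro k
    rw [tsum_const, nsmul_eq_mul]
  set c : ℕ := b * b - 1 with hc
  set q : ℝ := (c : ℝ) * r with hq
  have hq0 : 0 ≤ q := by positivity
  have hq1 : q < 1 := by
    rw [hq, hr]
    rw [mul_inv_lt_iff₀ (by positivity), one_mul]
    have : (c : ℝ) < (b : ℝ) ^ 2 := by
      have hcb : c < b * b := by
        have : 2 * 2 ≤ b * b := Nat.mul_le_mul hb hb
        omega
      have := (Nat.cast_lt (α := ℝ)).2 hcb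
      push_cast at this
      nlinarith
    linarith
  have hmaj : Summable (fun k : ℕ => ((b : ℝ) + 1) * ((k + 2) * q ^ k)) := by
    apply Summable.mul_left
    have h1 : Summable (fun k : ℕ => (k : ℝ) ^ 1 * q ^ k) :=
      summable_pow_mul_geometric_of_norm_lt_one 1 (by rwa [Real.norm_eq_abs, abs_of_nonneg hq0])
    have h2 : Summable (fun k : ℕ => 2 * q ^ k) :=
      (summable_geometric_of_lt_one hq0 hq1).mul_left 2
    apply (h1.add h2).congr
    intro k
    ring
  apply Summable.of_nonneg_of_le ?_ ?_ hmaj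
  · intro k
    rw [hfib k]
    positivity
  · intro k
    rw [hfib k]
    have hcard : (Nat.card ((Fin k → Db b α β) × Fin (k + 2) × Option (Fin b)) : ℝ)
        ≤ (c : ℝ) ^ k * ((k + 2) * ((b : ℝ) + 1)) := by
      rw [Nat.card_prod, Nat.card_prod, Nat.card_fun]
      have e1 : Nat.card (Fin k) = k := by simp [Nat.card_eq_fintype_card]
      have e2 : Nat.card (Fin (k + 2)) = k + 2 := by simp [Nat.card_eq_fintype_card]
      have e3 : Nat.card (Option (Fin b)) = b + 1 := by simp [Nat.card_eq_fintype_card]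
      rw [e1, e2, e3]
      have hd : Nat.card (Db b α β) ≤ c := card_Db_le hα hβ
      push_cast
      have : ((Nat.card (Db b α β) : ℝ)) ^ k ≤ (c : ℝ) ^ k := by
        apply pow_le_pow_left₀ (by positivity)
        exact_mod_cast hd
      have hk2 : (0:ℝ) ≤ (k : ℝ) + 2 := by positivity
      have hb1 : (0:ℝ) ≤ (b : ℝ) + 1 := by positivity
      apply mul_le_mul_of_nonneg_right this
      positivity
    calc (Nat.card ((Fin k → Db b α β) × Fin (k + 2) × Option (Fin b)) : ℝ) * r ^ k
        ≤ ((c : ℝ) ^ k * ((k + 2) * ((b : ℝ) + 1))) * r ^ k := by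
          apply mul_le_mul_of_nonneg_right hcard (pow_nonneg hr0 k)
      _ = ((b : ℝ) + 1) * ((k + 2) * q ^ k) := by
          rw [hq, mul_pow]
          ring

lemma summable_master {b α β n : ℕ} (hb : 2 ≤ b) (hα : α < b) (hβ : β < b) (hn : 0 < n) :
    Summable (({m : ℕ | PM b α β n m}).indicator f) := by
  rw [← summable_subtype_iff_indicator]
  have hG := summable_g hb α β hα hβ
  have key := fun x : {m : ℕ // PM b α β n m} => exists_code hb hn x.1 x.2
  choose ι hι1 hι2 using key
  have hinj : Function.Injective ι := by
    intro x y hxy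
    apply Subtype.ext
    rw [← hι1 x, ← hι1 y, hxy]
  exact Summable.of_nonneg_of_le (fun x => f_nonneg _) hι2 (hG.comp_injective hinj)

lemma summable_indV {b α β k : ℕ} (hb : 2 ≤ b) (hα : α < b) (hβ : β < b) (hk : 0 < k) :
    Summable (indV b α β k) := by
  refine Summable.of_nonneg_of_le (fun m => Set.indicator_nonneg (fun a _ => f_nonneg a) m)
    (fun m => Set.indicator_le_indicator_of_subset ?_ f_nonneg m)
    (summable_master hb hα hβ hk)
  rintro m ⟨t, ht, hc⟩
  exact ⟨t, ht, le_of_eq hc⟩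

lemma summable_indU {b α β k : ℕ} (hb : 2 ≤ b) (hα : α < b) (hβ : β < b) (hk : 0 < k) :
    Summable (indU b α β k) := by
  refine Summable.of_nonneg_of_le (fun m => Set.indicator_nonneg (fun a _ => f_nonneg a) m)
    (fun m => Set.indicator_le_indicator_of_subset ?_ f_nonneg m)
    (summable_master hb hα hβ hk)
  rintro m ⟨t, ht, hc⟩
  have := (not_infix_iff_cnt α β t).1 hc
  exact ⟨t, ht, by omega⟩

end Stmt11

theorem stmt_11 (b : ℕ) (hb : 2 ≤ b) (α β : ℕ) (hα : α < b) (hβ : β < b) (hαβ : α ≠ β)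
    (n : ℕ) (hn : 0 < n) :
    V b α β n = (∑ d ∈ Finset.range b, V b α β (n * b + d))
      - V b α β (n * b ^ 2 + α * b + β) + U b α β (n * b ^ 2 + α * b + β) := by
  classical
  have hb0 : 0 < b := by omega
  have hEpos : 0 < n * b ^ 2 + α * b + β := by
    have := Nat.mul_pos hn (pow_pos hb0 2)
    omega
  have hVeq : ∀ k : ℕ, V b α β k = ∑' m : ℕ, Stmt11.indV b α β k m := by
    intro k
    have h0 : V b α β k = ∑' x : ↥{m : ℕ | KeptV b α β k m}, Stmt11.f ↑x := rfl
    rw [h0, tsum_subtype {m : ℕ | KeptV b α β k m} Stmt11.f]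
    rfl
  have hUeq : U b α β (n * b ^ 2 + α * b + β)
      = ∑' m : ℕ, Stmt11.indU b α β (n * b ^ 2 + α * b + β) m := by
    have h0 : U b α β (n * b ^ 2 + α * b + β)
        = ∑' x : ↥{m : ℕ | KeptU b α β (n * b ^ 2 + α * b + β) m}, Stmt11.f ↑x := rfl
    rw [h0, tsum_subtype {m : ℕ | KeptU b α β (n * b ^ 2 + α * b + β) m} Stmt11.f]
    rfl
  have S1 : Summable (Stmt11.indV b α β n) := Stmt11.summable_indV hb hα hβ hn
  have S2 : Summable (Stmt11.indV b α β (n * b ^ 2 + α * b + β)) :=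
    Stmt11.summable_indV hb hα hβ hEpos
  have S3 : ∀ d ∈ Finset.range b, Summable (Stmt11.indV b α β (n * b + d)) := by
    intro d _
    exact Stmt11.summable_indV hb hα hβ (by have := Nat.mul_pos hn hb0; omega)
  have S4 : Summable (Stmt11.indU b α β (n * b ^ 2 + α * b + β)) :=
    Stmt11.summable_indU hb hα hβ hEpos
  have key : (∑' m : ℕ, Stmt11.indV b α β n m)
        + (∑' m : ℕ, Stmt11.indV b α β (n * b ^ 2 + α * b + β) m)
      = (∑ d ∈ Finset.range b, ∑' m : ℕ, Stmt11.indV b α β (n * b + d) m)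
        + ∑' m : ℕ, Stmt11.indU b α β (n * b ^ 2 + α * b + β) m := by
    rw [← Summable.tsum_add S1 S2, ← Summable.tsum_finsetSum S3, ← Summable.tsum_add (summable_sum S3) S4]
    exact tsum_congr (Stmt11.pointwise hb hα hβ hαβ hn)
  rw [hVeq n, hVeq (n * b ^ 2 + α * b + β), hUeq,
    Finset.sum_congr rfl (fun d _ => hVeq (n * b + d))]
  linarith [key]
end
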